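/- arXiv:1509.01656 — 6 statements merged into one kernel-verified Lean document; each statement's English description precedes it below -/
import Mathlib

section
/- Let φ: ℝ → ℂ be smooth with compact support. The function G(λ) = −∫_0^∞ t^{λ+1} φ′(t) dt is holomorphic on the half-plane {λ ∈ ℂ : Re λ > −2}, it satisfies (λ+1) ∫_0^∞ t^λ φ(t) dt = G(λ) for all λ with Re λ > −1, and G(−1) = φ(0). Consequently λ ↦ ∫_0^∞ t^λ φ(t) dt extends meromorphically to {Re λ > −2} with at most a simple pole at λ = −1, whose residue is φ(0). -/
open MeasureTheory Set Filter Asymptotics Complex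

private lemma auxCPM_top {ψ : ℝ → ℂ} (hsupp : HasCompactSupport ψ) (a : ℝ) :
    ψ =O[atTop] fun x : ℝ => x ^ (-a) := by
  have hev : ∀ᶠ x in atTop, ψ x = 0 := by
    obtain ⟨R, hR⟩ := hsupp.isCompact.bddAbove
    filter_upwards [eventually_gt_atTop R] with x hx
    exact image_eq_zero_of_notMem_tsupport fun h => hx.not_ge (hR h)
  refine IsBigO.of_bound 0 ?_
  filter_upwards [hev] with x hx
  simp [hx]

private lemma auxCPM_bot {ψ : ℝ → ℂ} (hψ : Continuous ψ) :
    ψ =O[nhdsWithin 0 (Ioi 0)] fun x : ℝ => x ^ (-(0 : ℝ)) := by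
  have h : Tendsto ψ (nhdsWithin 0 (Ioi 0)) (nhds (ψ 0)) :=
    (hψ.tendsto 0).mono_left nhdsWithin_le_nhds
  simpa using h.isBigO_one ℝ

private lemma auxCPM_int {ψ : ℝ → ℂ} (hψ : Continuous ψ) (hsupp : HasCompactSupport ψ)
    {s : ℂ} (hs : -1 < s.re) :
    IntegrableOn (fun t : ℝ => (t : ℂ) ^ s * ψ t) (Ioi 0) := by
  have h := mellinConvergent_of_isBigO_rpow (a := s.re + 2) (b := 0) (s := s + 1)
    ((hψ.locallyIntegrable).locallyIntegrableOn _) (auxCPM_top hsupp _)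
    (by simp only [Complex.add_re, Complex.one_re]; linarith)
    (auxCPM_bot hψ)
    (by simp only [Complex.add_re, Complex.one_re]; linarith)
  simpa [MellinConvergent, smul_eq_mul, add_sub_cancel_right] using h

/-- For smooth compactly supported `φ : ℝ → ℂ`, the function
`G(s) = −∫_0^∞ t^{s+1} φ′(t) dt` is holomorphic on `{Re s > −2}`, satisfies
`(s+1) ∫_0^∞ t^s φ(t) dt = G(s)` for `Re s > −1`, and `G(−1) = φ(0)`.
Hence `s ↦ ∫_0^∞ t^s φ(t) dt` extends meromorphically to `{Re s > −2}` with at most a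
simple pole at `s = −1` of residue `φ(0)`. -/
theorem complex_power_meromorphic_continuation_one_var
    (φ : ℝ → ℂ) (hφ : ContDiff ℝ (⊤ : ℕ∞) φ) (hsupp : HasCompactSupport φ)
    (G : ℂ → ℂ)
    (hG : ∀ s : ℂ, G s = -∫ t in Set.Ioi (0 : ℝ), (t : ℂ) ^ (s + 1) * deriv φ t) :
    DifferentiableOn ℂ G {s : ℂ | -2 < s.re} ∧
    (∀ s : ℂ, -1 < s.re →
      (s + 1) * ∫ t in Set.Ioi (0 : ℝ), (t : ℂ) ^ s * φ t = G s) ∧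
    G (-1) = φ 0 := by
  have hder_cont : Continuous (deriv φ) := hφ.continuous_deriv (by simp)
  have hder_supp : HasCompactSupport (deriv φ) := hsupp.deriv
  refine ⟨?_, ?_, ?_⟩
  · -- holomorphy
    have hGeq : G = fun s => -(mellin (deriv φ) (s + 2)) := by
      funext s
      rw [hG s]
      congr 1
      simp only [mellin, smul_eq_mul]
      rw [show ∀ s : ℂ, s + 2 - 1 = s + 1 from fun s => by ring]
    rw [hGeq]
    intro s hs
    have hs' : -2 < s.re := hs
    have h1 : DifferentiableAt ℂ (mellin (deriv φ)) (s + 2) := by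
      refine mellin_differentiableAt_of_isBigO_rpow (a := s.re + 3) (b := 0)
        ((hder_cont.locallyIntegrable).locallyIntegrableOn _) (auxCPM_top hder_supp _)
        (by simp only [Complex.add_re, Complex.re_ofNat]; linarith)
        (auxCPM_bot hder_cont)
        (by simp only [Complex.add_re, Complex.re_ofNat]; linarith)
    exact ((h1.comp (g := mellin (deriv φ)) (f := fun s : ℂ => s + 2) s (by fun_prop)).neg).differentiableWithinAt
  · -- functional equation
    intro s hs
    have hs1 : 0 < (s + 1).re := by simp only [Complex.add_re, Complex.one_re]; linarith
    set f : ℝ → ℂ := fun t => (t : ℂ) ^ (s + 1) * φ t with hf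
    set f' : ℝ → ℂ := fun t => (s + 1) * ((t : ℂ) ^ s * φ t) + (t : ℂ) ^ (s + 1) * deriv φ t
      with hf'
    have hderiv : ∀ t ∈ Ioi (0 : ℝ), HasDerivAt f (f' t) t := by
      intro t ht
      have hne : s + 1 ≠ 0 := fun h => by
        rw [h] at hs1; simp at hs1
      have hsne : s ≠ -1 := fun h => by
        rw [h] at hs; norm_num at hs
      have h1 : HasDerivAt (fun u : ℝ => (u : ℂ) ^ (s + 1)) ((s + 1) * (t : ℂ) ^ s) t := by
        have h0 := (hasDerivAt_ofReal_cpow_const' (ne_of_gt ht.out) hsne).const_mul (s + 1)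
        rwa [show (fun y : ℝ => (s + 1) * ((y : ℂ) ^ (s + 1) / (s + 1))) =
            fun y : ℝ => (y : ℂ) ^ (s + 1) from funext fun y => by field_simp] at h0
      have h2 : HasDerivAt φ (deriv φ t) t := (hφ.differentiable (by simp) t).hasDerivAt
      have := h1.mul h2
      simpa [hf, hf', mul_assoc, Pi.mul_def] using this
    have int1 : IntegrableOn (fun t : ℝ => (t : ℂ) ^ s * φ t) (Ioi 0) :=
      auxCPM_int hφ.continuous hsupp hs
    have int2 : IntegrableOn (fun t : ℝ => (t : ℂ) ^ (s + 1) * deriv φ t) (Ioi 0) :=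
      auxCPM_int hder_cont hder_supp (by simp only [Complex.add_re, Complex.one_re]; linarith)
    have int0 : IntegrableOn f' (Ioi 0) := (int1.const_mul (s + 1)).add int2
    have htop : Tendsto f atTop (nhds 0) := by
      refine Tendsto.congr' ?_ tendsto_const_nhds
      obtain ⟨R, hR⟩ := hsupp.isCompact.bddAbove
      filter_upwards [eventually_gt_atTop R] with x hx
      have : φ x = 0 := image_eq_zero_of_notMem_tsupport fun h => hx.not_ge (hR h)
      simp [hf, this]
    have hc0 : ContinuousWithinAt f (Ici 0) 0 :=
      ((continuousAt_ofReal_cpow_const 0 (s + 1) (Or.inl hs1)).mul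
        hφ.continuous.continuousAt).continuousWithinAt
    have key := integral_Ioi_of_hasDerivAt_of_tendsto hc0 hderiv int0 htop
    have hf0 : f 0 = 0 := by
      have : (s + 1) ≠ 0 := fun h => by simp [h] at hs1
      simp [hf, Complex.zero_cpow this]
    rw [hf0, sub_zero, integral_add (int1.const_mul (s + 1)) int2] at key
    have hmul : ∫ t in Ioi (0 : ℝ), (s + 1) * ((t : ℂ) ^ s * φ t) =
        (s + 1) * ∫ t in Ioi (0 : ℝ), (t : ℂ) ^ s * φ t := integral_const_mul _ _
    rw [hmul] at key
    rw [hG s]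
    linear_combination key
  · -- value at -1
    rw [hG (-1)]
    have h0 : ∀ t : ℝ, (t : ℂ) ^ ((-1 : ℂ) + 1) = 1 := fun t => by norm_num
    simp only [h0, one_mul]
    rw [HasCompactSupport.integral_Ioi_deriv_eq (hφ.of_le (by simp)) hsupp 0]
    simp
end

section
/- For every smooth compactly supported function φ: ℝ → ℂ, the limit of (λ+1) ∫_0^∞ t^λ φ(t) dt as λ → −1 with Re λ > −1 exists and equals φ(0). (Equivalently, the residue of the distribution t_+^λ at λ = −1 is the Dirac delta δ(t).) -/
open MeasureTheory Set Filter Complex Topology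

/-- A continuous compactly supported function on `ℝ` is eventually zero at `atTop`. -/
lemma aux_eventually_zero {ψ : ℝ → ℂ} (h : HasCompactSupport ψ) :
    ∀ᶠ t : ℝ in atTop, ψ t = 0 := by
  obtain ⟨R, hR⟩ := h.isCompact.isBounded.subset_closedBall 0
  filter_upwards [eventually_gt_atTop R] with t ht
  apply image_eq_zero_of_notMem_tsupport
  intro hmem
  have := hR hmem
  simp only [Metric.mem_closedBall, Real.dist_eq, sub_zero] at this
  have := le_abs_self t
  linarith

lemma aux_bounded_support {ψ : ℝ → ℂ} (h : HasCompactSupport ψ) :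
    ∃ R : ℝ, 0 ≤ R ∧ ∀ t : ℝ, R < t → ψ t = 0 := by
  obtain ⟨R, hR⟩ := h.isCompact.isBounded.subset_closedBall 0
  refine ⟨max R 0, le_max_right _ _, fun t ht => ?_⟩
  apply image_eq_zero_of_notMem_tsupport
  intro hmem
  have := hR hmem
  simp only [Metric.mem_closedBall, Real.dist_eq, sub_zero] at this
  have h1 := le_abs_self t
  have h2 := le_max_left R (0:ℝ)
  linarith

lemma aux_integrable {c : ℂ} (hc : -1 < c.re) {ψ : ℝ → ℂ} (hψ : Continuous ψ)
    (h : HasCompactSupport ψ) :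
    IntegrableOn (fun t : ℝ => (t : ℂ) ^ c * ψ t) (Ioi 0) := by
  obtain ⟨R, hR0, hR⟩ := aux_bounded_support h
  rw [← Ioc_union_Ioi_eq_Ioi hR0]
  apply IntegrableOn.union
  · have h1 : IntegrableOn (fun x : ℝ => (x : ℂ) ^ c) (Ioc 0 R) := by
      have := intervalIntegral.intervalIntegrable_cpow' (a := 0) (b := R) hc
      rwa [intervalIntegrable_iff_integrableOn_Ioc_of_le hR0] at this
    have h2 := h1.bdd_mul hψ.aestronglyMeasurable
      (ae_of_all _ (hψ.bounded_above_of_compact_support h).choose_spec)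
    have hef : (fun t : ℝ => (t : ℂ) ^ c * ψ t) = fun t : ℝ => ψ t * (t : ℂ) ^ c := by
      funext t; ring
    rw [hef]
    exact h2
  · apply integrableOn_zero.congr_fun
      (fun t ht => by rw [hR t ht.out, mul_zero]) measurableSet_Ioi

lemma aux_parts (φ : ℝ → ℂ) (hφ : ContDiff ℝ (⊤ : ℕ∞) φ) (hsupp : HasCompactSupport φ)
    {s : ℂ} (hs : -1 < s.re) :
    (s + 1) * ∫ t in Ioi (0 : ℝ), (t : ℂ) ^ s * φ t
      = -∫ t in Ioi (0 : ℝ), (t : ℂ) ^ (s + 1) * deriv φ t := by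
  have hs1re : 0 < (s + 1).re := by simpa using by linarith
  have hs1 : s + 1 ≠ 0 := fun h => by simp [h] at hs1re
  have hsne : s ≠ -1 := fun h => by simp [h] at hs
  have hφc : Continuous φ := hφ.continuous
  have hφ'c : Continuous (deriv φ) := hφ.continuous_deriv (by simp)
  have hφ'supp : HasCompactSupport (deriv φ) := hsupp.deriv
  set F : ℝ → ℂ := fun t => (t : ℂ) ^ (s + 1) / (s + 1) * φ t with hF
  have hFderiv : ∀ x ∈ Ioi (0:ℝ), HasDerivAt F
      ((x:ℂ) ^ s * φ x + (x:ℂ) ^ (s+1) / (s+1) * deriv φ x) x := by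
    intro x hx
    exact (hasDerivAt_ofReal_cpow_const' (ne_of_gt hx.out) hsne).mul
      ((hφ.differentiable (by simp) x).hasDerivAt)
  have hFcont : ContinuousWithinAt F (Ici 0) 0 :=
    (((continuous_ofReal_cpow_const hs1re).div_const _).mul hφc).continuousWithinAt
  have hFtop : Tendsto F atTop (𝓝 0) := by
    apply tendsto_const_nhds.congr'
    filter_upwards [aux_eventually_zero hsupp] with t ht
    simp [hF, ht]
  have h1 : IntegrableOn (fun t : ℝ => (t : ℂ) ^ s * φ t) (Ioi 0) :=
    aux_integrable hs hφc hsupp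
  have h2 : IntegrableOn (fun t : ℝ => (t : ℂ) ^ (s+1) * deriv φ t) (Ioi 0) :=
    aux_integrable (by simpa using by linarith) hφ'c hφ'supp
  have h2' : IntegrableOn (fun t : ℝ => (t : ℂ) ^ (s+1) / (s+1) * deriv φ t) (Ioi 0) := by
    have := h2.const_mul ((s+1)⁻¹)
    exact IntegrableOn.congr_fun this (fun t _ => by ring) measurableSet_Ioi
  have hint : IntegrableOn
      (fun t : ℝ => (t:ℂ) ^ s * φ t + (t:ℂ) ^ (s+1) / (s+1) * deriv φ t) (Ioi 0) :=
    h1.add h2'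
  have key := integral_Ioi_of_hasDerivAt_of_tendsto hFcont hFderiv hint hFtop
  have hF0 : F 0 = 0 := by
    simp [hF, Complex.ofReal_zero, Complex.zero_cpow hs1]
  rw [hF0, sub_zero, integral_add h1 h2'] at key
  have heq : ∫ t in Ioi (0:ℝ), (t:ℂ) ^ (s+1) / (s+1) * deriv φ t
      = (s+1)⁻¹ * ∫ t in Ioi (0:ℝ), (t:ℂ) ^ (s+1) * deriv φ t := by
    rw [← integral_const_mul]
    apply setIntegral_congr_fun measurableSet_Ioi
    intro t _; ring
  rw [heq] at key
  have : ∫ t in Ioi (0:ℝ), (t:ℂ) ^ s * φ t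
      = -((s+1)⁻¹ * ∫ t in Ioi (0:ℝ), (t:ℂ) ^ (s+1) * deriv φ t) := by
    linear_combination key
  rw [this]
  field_simp

/-- For every smooth compactly supported `φ : ℝ → ℂ`, the limit of
`(s+1) ∫_0^∞ t^s φ(t) dt` as `s → −1` with `Re s > −1` exists and equals `φ(0)`.
(The residue of the distribution `t_+^s` at `s = −1` is the Dirac delta `δ(t)`.) -/
theorem residue_of_t_plus_lambda_is_delta
    (φ : ℝ → ℂ) (hφ : ContDiff ℝ (⊤ : ℕ∞) φ) (hsupp : HasCompactSupport φ) :
    Filter.Tendsto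
      (fun s : ℂ => (s + 1) * ∫ t in Set.Ioi (0 : ℝ), (t : ℂ) ^ s * φ t)
      (nhdsWithin (-1) {s : ℂ | -1 < s.re}) (nhds (φ 0)) := by
  have hφ'c : Continuous (deriv φ) := hφ.continuous_deriv (by simp)
  have hφ'supp : HasCompactSupport (deriv φ) := hsupp.deriv
  set l := nhdsWithin (-1 : ℂ) {s : ℂ | -1 < s.re} with hl
  -- the integral of the derivative over `Ioi 0` equals `-φ 0`
  have hderint : ∫ t in Ioi (0:ℝ), deriv φ t = -φ 0 := by
    have := integral_Ioi_of_hasDerivAt_of_tendsto (f := φ) (f' := deriv φ) (a := 0)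
      hφ.continuous.continuousWithinAt
      (fun x _ => (hφ.differentiable (by simp) x).hasDerivAt)
      (hφ'c.integrable_of_hasCompactSupport hφ'supp).integrableOn
      (tendsto_const_nhds.congr' (by filter_upwards [aux_eventually_zero hsupp] with t ht
        using ht.symm))
    rw [this, zero_sub]
  -- dominated convergence
  obtain ⟨R, hR0, hR⟩ := aux_bounded_support hφ'supp
  have hDCT : Tendsto (fun s : ℂ => ∫ t in Ioi (0:ℝ), (t:ℂ) ^ (s+1) * deriv φ t) l
      (𝓝 (∫ t in Ioi (0:ℝ), deriv φ t)) := by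
    apply tendsto_integral_filter_of_dominated_convergence
      (fun t => max 1 R * ‖deriv φ t‖)
    · filter_upwards [eventually_mem_nhdsWithin] with s hs
      have hs1re : 0 < (s + 1).re := by
        have : -1 < s.re := hs
        simpa using by linarith
      exact ((continuous_ofReal_cpow_const hs1re).mul hφ'c).aestronglyMeasurable.restrict
    · have hre : ∀ᶠ s in l, s.re < 0 := by
        apply eventually_nhdsWithin_of_eventually_nhds
        have : ContinuousAt Complex.re (-1) := Complex.continuous_re.continuousAt
        exact this.eventually_lt continuousAt_const (by norm_num)
      filter_upwards [eventually_mem_nhdsWithin, hre] with s hs hs0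
      have hp0 : 0 < s.re + 1 := by have : -1 < s.re := hs; linarith
      have hp1 : s.re + 1 ≤ 1 := by linarith
      rw [ae_restrict_iff' measurableSet_Ioi]
      apply Filter.Eventually.of_forall
      intro t ht
      have ht0 : (0:ℝ) < t := ht
      by_cases hzero : deriv φ t = 0
      · simp only [hzero, mul_zero, norm_zero]
        positivity
      · have htR : t ≤ R := by
          by_contra hc
          exact hzero (hR t (lt_of_not_ge hc))
        rw [norm_mul]
        have hnorm : ‖(t:ℂ) ^ (s+1)‖ = t ^ (s.re + 1) := by
          rw [Complex.norm_cpow_eq_rpow_re_of_pos ht0]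
          simp
        rw [hnorm]
        apply mul_le_mul_of_nonneg_right _ (norm_nonneg _)
        rcases le_total t 1 with h1 | h1
        · exact le_trans (Real.rpow_le_one ht0.le h1 hp0.le) (le_max_left _ _)
        · calc t ^ (s.re + 1) ≤ t ^ (1:ℝ) :=
                Real.rpow_le_rpow_of_exponent_le h1 hp1
            _ = t := Real.rpow_one t
            _ ≤ max 1 R := le_trans htR (le_max_right _ _)
    · exact ((hφ'c.integrable_of_hasCompactSupport hφ'supp).norm.const_mul _).restrict
    · rw [ae_restrict_iff' measurableSet_Ioi]
      apply Filter.Eventually.of_forall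
      intro t ht
      have ht0 : (t:ℂ) ≠ 0 := by
        simpa using ne_of_gt ht.out
      have hcont : ContinuousAt (fun s : ℂ => (t:ℂ) ^ (s+1)) (-1) :=
        (continuousAt_const_cpow ht0).comp (continuousAt_id.add continuousAt_const)
      have : Tendsto (fun s : ℂ => (t:ℂ) ^ (s+1) * deriv φ t) (𝓝 (-1))
          (𝓝 ((t:ℂ) ^ ((-1:ℂ)+1) * deriv φ t)) := hcont.tendsto.mul_const _
      simpa using this.mono_left nhdsWithin_le_nhds
  rw [hderint] at hDCT
  have : Tendsto (fun s : ℂ => -∫ t in Ioi (0:ℝ), (t:ℂ) ^ (s+1) * deriv φ t) l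
      (𝓝 (φ 0)) := by simpa using hDCT.neg
  apply this.congr'
  filter_upwards [eventually_mem_nhdsWithin] with s hs
  exact (aux_parts φ hφ hsupp hs).symm
end

section
/- Let φ: ℝ → ℂ be smooth with compact support. For every λ ∈ ℂ with Re λ > −1 and 0 < |λ+1| < 1, the series Σ_{j=1}^∞ ((λ+1)^{j−1}/j!) ∫_0^∞ (log t)^j φ′(t) dt converges absolutely, and ∫_0^∞ t^λ φ(t) dt = φ(0)·(λ+1)^{−1} − Σ_{j=1}^∞ ((λ+1)^{j−1}/j!) ∫_0^∞ (log t)^j φ′(t) dt. (This is the Laurent expansion of t_+^λ about λ = −1: t_+^λ = (λ+1)^{−1} δ(t) + Σ_{j≥1} (1/j!)(λ+1)^{j−1} ∂_t(log t_+)^j.) -/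
open MeasureTheory
open Set Filter


lemma contOn_log_pow_mul (k : ℕ) {g : ℝ → ℂ} (hg : Continuous g) :
    ContinuousOn (fun t : ℝ => ((Real.log t ^ k : ℝ) : ℂ) * g t) (Set.Ioi (0:ℝ)) := by
  apply ContinuousOn.mul _ hg.continuousOn
  apply Complex.continuous_ofReal.comp_continuousOn
  exact (Real.continuousOn_log.mono (fun x hx => ne_of_gt hx)).pow k

lemma integrableOn_rpow_Ioc {r : ℝ} (hr : -1 < r) {a : ℝ} (ha : 0 ≤ a) :
    IntegrableOn (fun t : ℝ => t ^ r) (Set.Ioc (0:ℝ) a) := by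
  have := intervalIntegral.intervalIntegrable_rpow' (a := 0) (b := a) hr
  rwa [intervalIntegrable_iff_integrableOn_Ioc_of_le ha] at this

lemma log_pow_le (c : ℝ) (hc : 1 ≤ c) (k : ℕ) {t : ℝ} (ht : t ∈ Set.Ioc (0:ℝ) 1) :
    |Real.log t| ^ k ≤ (Nat.factorial k : ℝ) * c ^ k * t ^ (-(1/c)) := by
  obtain ⟨ht0, ht1⟩ := ht
  have hlog : Real.log t ≤ 0 := Real.log_nonpos ht0.le ht1
  set x : ℝ := -Real.log t with hx
  have hx0 : 0 ≤ x := by simp [hx]; linarith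
  have hc0 : 0 < c := lt_of_lt_of_le one_pos hc
  have h1 : (x / c) ^ k / (Nat.factorial k : ℝ) ≤ Real.exp (x / c) :=
    Real.pow_div_factorial_le_exp _ (by positivity) k
  have h2 : Real.exp (x / c) = t ^ (-(1/c)) := by
    rw [Real.rpow_def_of_pos ht0]
    congr 1
    field_simp [hx]
    exact hx
  have hfac : (0:ℝ) < Nat.factorial k := by positivity
  have h3 : x ^ k ≤ (Nat.factorial k : ℝ) * c ^ k * Real.exp (x / c) := by
    have := (div_le_iff₀ hfac).mp h1
    calc x ^ k = (x / c) ^ k * c ^ k := by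
          rw [div_pow]; field_simp
      _ ≤ Real.exp (x / c) * (Nat.factorial k : ℝ) * c ^ k := by
          have hck : (0:ℝ) ≤ c ^ k := by positivity
          nlinarith [this]
      _ = (Nat.factorial k : ℝ) * c ^ k * Real.exp (x / c) := by ring
  rw [abs_of_nonpos hlog]
  rw [h2] at h3
  exact h3

lemma aux_log_bound {g : ℝ → ℂ} (hg : Continuous g) (hgs : HasCompactSupport g)
    (c : ℝ) (hc : 1 < c) :
    ∃ C : ℝ, 0 ≤ C ∧ ∃ L : ℝ, 0 ≤ L ∧ ∀ k : ℕ,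
      IntegrableOn (fun t => ((Real.log t ^ k : ℝ) : ℂ) * g t) (Set.Ioi (0:ℝ)) ∧
      ∫ t in Set.Ioi (0:ℝ), ‖((Real.log t ^ k : ℝ) : ℂ) * g t‖
        ≤ C * ((Nat.factorial k : ℝ) * c ^ k) + C * L ^ k := by
  obtain ⟨M, hM⟩ := hg.bounded_above_of_compact_support hgs
  have hM0 : 0 ≤ M := le_trans (norm_nonneg (g 0)) (hM 0)
  obtain ⟨r, hr⟩ := hgs.isBounded.subset_closedBall 0
  set R : ℝ := max r 1 with hRdef
  have hR1 : 1 ≤ R := le_max_right r 1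
  have hgR : ∀ t : ℝ, R < t → g t = 0 := by
    intro t ht
    apply image_eq_zero_of_notMem_tsupport
    intro hmem
    have := hr hmem
    simp only [Metric.mem_closedBall, Real.dist_eq, sub_zero] at this
    have : t ≤ r := le_trans (le_abs_self t) this
    have : t ≤ R := le_trans this (le_max_left r 1)
    linarith
  set L : ℝ := Real.log R with hLdef
  have hL0 : 0 ≤ L := Real.log_nonneg hR1
  have hrc : (-1 : ℝ) < -(1/c) := by
    have : 1/c < 1 := by
      rw [div_lt_one (by linarith)]; exact hc
    linarith
  have hIc1 : IntegrableOn (fun t : ℝ => t ^ (-(1/c))) (Set.Ioc (0:ℝ) 1) :=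
    integrableOn_rpow_Ioc hrc zero_le_one
  set C1 : ℝ := ∫ t in Set.Ioc (0:ℝ) 1, t ^ (-(1/c)) with hC1def
  have hC1 : 0 ≤ C1 := by
    apply setIntegral_nonneg measurableSet_Ioc
    intro t ht
    exact Real.rpow_nonneg ht.1.le _
  refine ⟨M * (C1 + R), by positivity, L, hL0, fun k => ?_⟩
  set D : ℝ → ℝ := fun t =>
    Set.indicator (Set.Ioc (0:ℝ) 1) (fun t => M * (Nat.factorial k : ℝ) * c ^ k * t ^ (-(1/c))) t +
    Set.indicator (Set.Ioc (1:ℝ) R) (fun _ => M * L ^ k) t with hDdef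
  have hD1int : Integrable
      (Set.indicator (Set.Ioc (0:ℝ) 1) (fun t => M * (Nat.factorial k : ℝ) * c ^ k * t ^ (-(1/c))))
      volume := by
    apply MeasureTheory.IntegrableOn.integrable_indicator _ measurableSet_Ioc
    exact hIc1.const_mul _
  have hD2int : Integrable
      (Set.indicator (Set.Ioc (1:ℝ) R) (fun _ : ℝ => M * L ^ k)) volume := by
    apply MeasureTheory.IntegrableOn.integrable_indicator _ measurableSet_Ioc
    exact integrableOn_const measure_Ioc_lt_top.ne
  have hDint : Integrable D volume := hD1int.add hD2int
  have hDnn : ∀ t, 0 ≤ D t := by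
    intro t
    apply add_nonneg
    · apply Set.indicator_nonneg; intro x hx
      exact mul_nonneg (by positivity) (Real.rpow_nonneg hx.1.le _)
    · apply Set.indicator_nonneg; intro x hx; positivity
  have hbound : ∀ᵐ t ∂(volume.restrict (Set.Ioi (0:ℝ))),
      ‖((Real.log t ^ k : ℝ) : ℂ) * g t‖ ≤ D t := by
    filter_upwards [ae_restrict_mem measurableSet_Ioi] with t ht
    have ht0 : (0:ℝ) < t := ht
    have hnorm : ‖((Real.log t ^ k : ℝ) : ℂ) * g t‖ = |Real.log t| ^ k * ‖g t‖ := by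
      rw [norm_mul, Complex.norm_real, Real.norm_eq_abs, abs_pow]
    by_cases h1 : t ≤ 1
    · have hmem : t ∈ Set.Ioc (0:ℝ) 1 := ⟨ht0, h1⟩
      have hnmem : t ∉ Set.Ioc (1:ℝ) R := fun h => absurd h.1 (not_lt.mpr h1)
      rw [hDdef]
      simp only [Set.indicator_of_mem hmem, Set.indicator_of_notMem hnmem, add_zero]
      rw [hnorm]
      calc |Real.log t| ^ k * ‖g t‖
          ≤ ((Nat.factorial k : ℝ) * c ^ k * t ^ (-(1/c))) * M := by
            apply mul_le_mul (log_pow_le c hc.le k hmem) (hM t) (norm_nonneg _) (by positivity)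
        _ = M * (Nat.factorial k : ℝ) * c ^ k * t ^ (-(1/c)) := by ring
    · push_neg at h1
      by_cases h2 : t ≤ R
      · have hmem : t ∈ Set.Ioc (1:ℝ) R := ⟨h1, h2⟩
        have hnmem : t ∉ Set.Ioc (0:ℝ) 1 := fun h => absurd h.2 (not_le.mpr h1)
        rw [hDdef]
        simp only [Set.indicator_of_mem hmem, Set.indicator_of_notMem hnmem, zero_add]
        rw [hnorm]
        have hlt : |Real.log t| ^ k ≤ L ^ k := by
          apply pow_le_pow_left₀ (abs_nonneg _)
          rw [abs_of_nonneg (Real.log_nonneg h1.le)]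
          exact Real.log_le_log (by linarith) h2
        calc |Real.log t| ^ k * ‖g t‖ ≤ L ^ k * M :=
              mul_le_mul hlt (hM t) (norm_nonneg _) (by positivity)
          _ = M * L ^ k := by ring
      · push_neg at h2
        rw [hnorm, hgR t h2]
        simp only [norm_zero, mul_zero]
        exact hDnn t
  have haesm : AEStronglyMeasurable (fun t : ℝ => ((Real.log t ^ k : ℝ) : ℂ) * g t)
      (volume.restrict (Set.Ioi (0:ℝ))) :=
    (contOn_log_pow_mul k hg).aestronglyMeasurable measurableSet_Ioi
  have hInt : IntegrableOn (fun t : ℝ => ((Real.log t ^ k : ℝ) : ℂ) * g t) (Set.Ioi (0:ℝ)) :=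
    (hDint.restrict).mono' haesm hbound
  refine ⟨hInt, ?_⟩
  have step1 : ∫ t in Set.Ioi (0:ℝ), ‖((Real.log t ^ k : ℝ) : ℂ) * g t‖
      ≤ ∫ t in Set.Ioi (0:ℝ), D t :=
    integral_mono_ae hInt.norm hDint.restrict hbound
  have step2 : ∫ t in Set.Ioi (0:ℝ), D t ≤ ∫ t, D t :=
    setIntegral_le_integral hDint (Filter.Eventually.of_forall hDnn)
  have step3 : ∫ t, D t = M * (Nat.factorial k : ℝ) * c ^ k * C1 + (R - 1) * (M * L ^ k) := by
    rw [hDdef]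
    rw [integral_add hD1int hD2int]
    rw [integral_indicator measurableSet_Ioc, integral_indicator measurableSet_Ioc]
    rw [setIntegral_const]
    congr 1
    · rw [hC1def, ← MeasureTheory.integral_const_mul]
    · rw [Real.volume_real_Ioc_of_le hR1, smul_eq_mul]
  have final : M * (Nat.factorial k : ℝ) * c ^ k * C1 + (R - 1) * (M * L ^ k)
      ≤ M * (C1 + R) * ((Nat.factorial k : ℝ) * c ^ k) + M * (C1 + R) * L ^ k := by
    have h1 : (0:ℝ) ≤ (Nat.factorial k : ℝ) * c ^ k := by positivity
    have h2 : (0:ℝ) ≤ L ^ k := by positivity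
    have h3 : M * (Nat.factorial k : ℝ) * c ^ k * C1 ≤ M * (C1 + R) * ((Nat.factorial k : ℝ) * c ^ k) := by
      nlinarith [mul_nonneg hM0 h1]
    have h4 : (R - 1) * (M * L ^ k) ≤ M * (C1 + R) * L ^ k := by
      nlinarith [mul_nonneg hM0 h2]
    linarith
  linarith [step1, step2, step3 ▸ step2]

lemma aux_integrableOn_cpow_mul (c : ℂ) (hc : -1 < c.re) {ψ : ℝ → ℂ}
    (hψ : Continuous ψ) (hψs : HasCompactSupport ψ) :
    IntegrableOn (fun t : ℝ => (t : ℂ) ^ c * ψ t) (Set.Ioi (0:ℝ)) := by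
  obtain ⟨M, hM⟩ := hψ.bounded_above_of_compact_support hψs
  have hM0 : 0 ≤ M := le_trans (norm_nonneg (ψ 0)) (hM 0)
  obtain ⟨r, hr⟩ := hψs.isBounded.subset_closedBall 0
  set R : ℝ := max r 1 with hRdef
  have hR1 : 1 ≤ R := le_max_right r 1
  have hψR : ∀ t : ℝ, R < t → ψ t = 0 := by
    intro t ht
    apply image_eq_zero_of_notMem_tsupport
    intro hmem
    have h := hr hmem
    simp only [Metric.mem_closedBall, Real.dist_eq, sub_zero] at h
    have : t ≤ R := le_trans (le_trans (le_abs_self t) h) (le_max_left r 1)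
    linarith
  set D : ℝ → ℝ := fun t =>
    Set.indicator (Set.Ioc (0:ℝ) R) (fun t => M * t ^ c.re) t with hDdef
  have hDint : Integrable D volume := by
    apply MeasureTheory.IntegrableOn.integrable_indicator _ measurableSet_Ioc
    exact (integrableOn_rpow_Ioc hc (by linarith)).const_mul M
  have haesm : AEStronglyMeasurable (fun t : ℝ => (t : ℂ) ^ c * ψ t)
      (volume.restrict (Set.Ioi (0:ℝ))) := by
    apply ContinuousOn.aestronglyMeasurable _ measurableSet_Ioi
    apply ContinuousOn.mul _ hψ.continuousOn
    intro x hx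
    exact (Complex.continuousAt_ofReal_cpow_const x c (Or.inr (ne_of_gt hx))).continuousWithinAt
  apply (hDint.restrict).mono' haesm
  filter_upwards [ae_restrict_mem measurableSet_Ioi] with t ht
  have ht0 : (0:ℝ) < t := ht
  have hnorm : ‖(t : ℂ) ^ c * ψ t‖ = t ^ c.re * ‖ψ t‖ := by
    rw [norm_mul, Complex.norm_cpow_eq_rpow_re_of_pos ht0]
  by_cases h2 : t ≤ R
  · rw [hDdef]
    simp only [Set.indicator_of_mem (Set.mem_Ioc.mpr ⟨ht0, h2⟩)]
    rw [hnorm]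
    calc t ^ c.re * ‖ψ t‖ ≤ t ^ c.re * M :=
          mul_le_mul_of_nonneg_left (hM t) (Real.rpow_nonneg ht0.le _)
      _ = M * t ^ c.re := by ring
  · push_neg at h2
    rw [hnorm, hψR t h2]
    simp only [norm_zero, mul_zero]
    rw [hDdef]
    apply Set.indicator_nonneg
    intro x hx
    exact mul_nonneg hM0 (Real.rpow_nonneg hx.1.le _)

lemma aux_ibp (φ : ℝ → ℂ) (hφ : ContDiff ℝ (⊤ : ℕ∞) φ) (hsupp : HasCompactSupport φ)
    (s : ℂ) (hs : -1 < s.re) (hs1 : s + 1 ≠ 0) :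
    ∫ t in Set.Ioi (0:ℝ), (t : ℂ) ^ s * φ t
      = -((s+1)⁻¹ * ∫ t in Set.Ioi (0:ℝ), (t : ℂ) ^ (s+1) * deriv φ t) := by
  have hg : Continuous (deriv φ) := hφ.continuous_deriv (by simp)
  have hgs : HasCompactSupport (deriv φ) := hsupp.deriv
  have hre1 : (0:ℝ) < (s+1).re := by
    rw [Complex.add_re, Complex.one_re]; linarith
  have hsne : s ≠ -1 := by
    intro h; apply hs1; rw [h]; ring
  set f : ℝ → ℂ := fun t => (t : ℂ) ^ (s+1) / (s+1) * φ t with hfdef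
  have I1 : IntegrableOn (fun t : ℝ => (t : ℂ) ^ s * φ t) (Set.Ioi (0:ℝ)) :=
    aux_integrableOn_cpow_mul s hs hφ.continuous hsupp
  have I2' : IntegrableOn (fun t : ℝ => (t : ℂ) ^ (s+1) * deriv φ t) (Set.Ioi (0:ℝ)) :=
    aux_integrableOn_cpow_mul (s+1) (by linarith) hg hgs
  have I2 : IntegrableOn (fun t : ℝ => (t : ℂ) ^ (s+1) / (s+1) * deriv φ t) (Set.Ioi (0:ℝ)) := by
    have h := I2'.const_mul (s+1)⁻¹
    have : (fun t : ℝ => (t : ℂ) ^ (s+1) / (s+1) * deriv φ t)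
        = fun t : ℝ => (s+1)⁻¹ * ((t : ℂ) ^ (s+1) * deriv φ t) := by
      funext t; ring
    rwa [this]
  have f'int : IntegrableOn
      (fun t : ℝ => (t : ℂ) ^ s * φ t + (t : ℂ) ^ (s+1) / (s+1) * deriv φ t)
      (Set.Ioi (0:ℝ)) := I1.add I2
  have hderiv : ∀ x ∈ Set.Ioi (0:ℝ), HasDerivAt f
      ((x : ℂ) ^ s * φ x + (x : ℂ) ^ (s+1) / (s+1) * deriv φ x) x := by
    intro x hx
    have h1 : HasDerivAt (fun y : ℝ => (y : ℂ) ^ (s+1) / (s+1)) ((x : ℂ) ^ s) x :=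
      hasDerivAt_ofReal_cpow_const' (ne_of_gt hx) hsne
    have h2 : HasDerivAt φ (deriv φ x) x :=
      ((hφ.differentiable (by simp)) x).hasDerivAt
    exact h1.mul h2
  have hcont : ContinuousWithinAt f (Set.Ici (0:ℝ)) 0 := by
    apply ContinuousAt.continuousWithinAt
    exact ((Complex.continuousAt_ofReal_cpow_const 0 (s+1) (Or.inl hre1)).div_const
      (s+1)).mul hφ.continuous.continuousAt
  have htends : Tendsto f atTop (nhds 0) := by
    obtain ⟨r, hr⟩ := hsupp.isBounded.subset_closedBall 0
    apply Tendsto.congr' _ tendsto_const_nhds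
    filter_upwards [eventually_ge_atTop (r+1)] with t ht
    have : φ t = 0 := by
      apply image_eq_zero_of_notMem_tsupport
      intro hmem
      have h := hr hmem
      simp only [Metric.mem_closedBall, Real.dist_eq, sub_zero] at h
      have := le_trans (le_abs_self t) h
      linarith
    simp [hfdef, this]
  have key := integral_Ioi_of_hasDerivAt_of_tendsto hcont hderiv f'int htends
  have hf0 : f 0 = 0 := by
    simp only [hfdef, Complex.ofReal_zero]
    rw [Complex.zero_cpow hs1]
    simp
  rw [hf0, sub_zero] at key
  rw [integral_add I1 I2] at key
  have heq : ∫ t in Set.Ioi (0:ℝ), (t : ℂ) ^ (s+1) / (s+1) * deriv φ t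
      = (s+1)⁻¹ * ∫ t in Set.Ioi (0:ℝ), (t : ℂ) ^ (s+1) * deriv φ t := by
    rw [← MeasureTheory.integral_const_mul]
    congr 1; funext t; ring
  rw [heq] at key
  linear_combination key

set_option maxHeartbeats 1000000 in
/-- Laurent expansion of `t_+^s` about `s = −1`:
for smooth compactly supported `φ : ℝ → ℂ` and `s` with `Re s > −1`, `0 < |s+1| < 1`,
the series `Σ_{j≥1} ((s+1)^{j−1}/j!) ∫_0^∞ (log t)^j φ′(t) dt` (indexed below by
`j : ℕ` standing for `j+1 ≥ 1`) converges absolutely and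
`∫_0^∞ t^s φ(t) dt = φ(0)(s+1)^{−1} − Σ_{j≥1} ((s+1)^{j−1}/j!) ∫_0^∞ (log t)^j φ′(t) dt`. -/
theorem laurent_expansion_t_plus_lambda
    (φ : ℝ → ℂ) (hφ : ContDiff ℝ (⊤ : ℕ∞) φ) (hsupp : HasCompactSupport φ)
    (s : ℂ) (hs : -1 < s.re)
    (h0 : 0 < ‖s + 1‖) (h1 : ‖s + 1‖ < 1) :
    Summable (fun j : ℕ =>
      ‖(s + 1) ^ j / (Nat.factorial (j + 1) : ℂ) *
        ∫ t in Set.Ioi (0 : ℝ), ((Real.log t ^ (j + 1) : ℝ) : ℂ) * deriv φ t‖) ∧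
    ∫ t in Set.Ioi (0 : ℝ), (t : ℂ) ^ s * φ t
      = φ 0 * (s + 1)⁻¹ -
        ∑' j : ℕ, (s + 1) ^ j / (Nat.factorial (j + 1) : ℂ) *
          ∫ t in Set.Ioi (0 : ℝ), ((Real.log t ^ (j + 1) : ℝ) : ℂ) * deriv φ t := by
  have hg : Continuous (deriv φ) := hφ.continuous_deriv (by simp)
  have hgs : HasCompactSupport (deriv φ) := hsupp.deriv
  have hs1 : s + 1 ≠ 0 := by
    intro h; rw [h] at h0; simp at h0
  set q : ℝ := ‖s + 1‖ with hqdef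
  set c : ℝ := 2 / (1 + q) with hcdef
  have hq0 : 0 < q := h0
  have hc : 1 < c := by
    rw [hcdef, lt_div_iff₀ (by linarith)]; linarith
  have hqc : q * c < 1 := by
    rw [hcdef, mul_div_assoc', div_lt_one (by linarith)]; linarith
  obtain ⟨C, hC0, L, hL0, H⟩ := aux_log_bound hg hgs c hc
  -- abbreviation for the integrals
  set A : ℕ → ℂ := fun k => ∫ t in Set.Ioi (0:ℝ), ((Real.log t ^ k : ℝ) : ℂ) * deriv φ t
    with hAdef
  have hAnorm : ∀ k, ‖A k‖ ≤ C * ((Nat.factorial k : ℝ) * c ^ k) + C * L ^ k := fun k =>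
    le_trans (norm_integral_le_integral_norm _) (H k).2
  -- Part 1: summability
  have hfacpos : ∀ k : ℕ, (0:ℝ) < (Nat.factorial k : ℝ) := fun k => by positivity
  have part1 : Summable (fun j : ℕ =>
      ‖(s + 1) ^ j / (Nat.factorial (j + 1) : ℂ) * A (j + 1)‖) := by
    have hsummb : Summable (fun j : ℕ => C * c * (q*c)^j + C * L * ((q*L)^j / (Nat.factorial j : ℝ))) := by
      apply Summable.add
      · exact (summable_geometric_of_lt_one (by positivity) hqc).mul_left _
      · exact (Real.summable_pow_div_factorial (q*L)).mul_left _
    apply Summable.of_nonneg_of_le (fun j => norm_nonneg _) _ hsummb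
    intro j
    rw [norm_mul, norm_div, norm_pow]
    have h2 : ‖((Nat.factorial (j+1) : ℕ) : ℂ)‖ = (Nat.factorial (j+1) : ℝ) := by
      rw [Complex.norm_natCast]
    rw [h2]
    have h3 : ‖s + 1‖ = q := rfl
    rw [h3]
    calc q ^ j / (Nat.factorial (j+1) : ℝ) * ‖A (j+1)‖
        ≤ q ^ j / (Nat.factorial (j+1) : ℝ) *
          (C * ((Nat.factorial (j+1) : ℝ) * c ^ (j+1)) + C * L ^ (j+1)) := by
          apply mul_le_mul_of_nonneg_left (hAnorm (j+1)) (by positivity)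
      _ = C * c * (q*c)^j + q ^ j * (C * L ^ (j+1)) / (Nat.factorial (j+1) : ℝ) := by
          have := (hfacpos (j+1)).ne'
          field_simp
          ring
      _ ≤ C * c * (q*c)^j + C * L * ((q*L)^j / (Nat.factorial j : ℝ)) := by
          have hmono : q ^ j * (C * L ^ (j+1)) / (Nat.factorial (j+1) : ℝ)
              ≤ q ^ j * (C * L ^ (j+1)) / (Nat.factorial j : ℝ) := by
            apply div_le_div_of_nonneg_left (by positivity) (hfacpos j)
            exact_mod_cast Nat.cast_le.mpr (Nat.factorial_le (Nat.le_succ j))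
          have heq : q ^ j * (C * L ^ (j+1)) / (Nat.factorial j : ℝ)
              = C * L * ((q*L)^j / (Nat.factorial j : ℝ)) := by
            rw [mul_pow, pow_succ]
            ring
          linarith [heq ▸ hmono]
  constructor
  · exact part1
  -- Part 2: the identity
  set F : ℕ → ℝ → ℂ := fun j t =>
    (s + 1) ^ j / (Nat.factorial j : ℂ) * ((Real.log t ^ j : ℝ) : ℂ) * deriv φ t with hFdef
  have hFint : ∀ j, Integrable (F j) (volume.restrict (Set.Ioi (0:ℝ))) := by
    intro j
    have h := ((H j).1).const_mul ((s + 1) ^ j / (Nat.factorial j : ℂ))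
    have heq : F j = fun t =>
        (s + 1) ^ j / (Nat.factorial j : ℂ) * (((Real.log t ^ j : ℝ) : ℂ) * deriv φ t) := by
      funext t; rw [hFdef]; ring
    rw [heq]; exact h
  have hFnormint : ∀ j, ∫ t in Set.Ioi (0:ℝ), ‖F j t‖
      = q ^ j / (Nat.factorial j : ℝ) * ∫ t in Set.Ioi (0:ℝ), ‖((Real.log t ^ j : ℝ) : ℂ) * deriv φ t‖ := by
    intro j
    rw [← MeasureTheory.integral_const_mul]
    congr 1; funext t
    rw [hFdef]
    simp only [norm_mul, norm_div, norm_pow, Complex.norm_natCast]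
    rw [show ‖s + 1‖ = q from rfl]
    ring
  have hFsum : Summable fun j => ∫ t in Set.Ioi (0:ℝ), ‖F j t‖ := by
    have hsummb : Summable (fun j : ℕ => C * (q*c)^j + C * ((q*L)^j / (Nat.factorial j : ℝ))) := by
      apply Summable.add
      · exact (summable_geometric_of_lt_one (by positivity) hqc).mul_left _
      · exact (Real.summable_pow_div_factorial (q*L)).mul_left _
    apply Summable.of_nonneg_of_le
      (fun j => integral_nonneg (fun t => norm_nonneg _)) _ hsummb
    intro j
    rw [hFnormint j]
    calc q ^ j / (Nat.factorial j : ℝ) * ∫ t in Set.Ioi (0:ℝ), ‖((Real.log t ^ j : ℝ) : ℂ) * deriv φ t‖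
        ≤ q ^ j / (Nat.factorial j : ℝ) * (C * ((Nat.factorial j : ℝ) * c ^ j) + C * L ^ j) :=
          mul_le_mul_of_nonneg_left (H j).2 (by positivity)
      _ = C * (q*c)^j + C * ((q*L)^j / (Nat.factorial j : ℝ)) := by
          have := (hfacpos j).ne'
          field_simp
          ring
  have hsum2 : HasSum (fun j => ∫ t in Set.Ioi (0:ℝ), F j t)
      (∫ t in Set.Ioi (0:ℝ), (t : ℂ) ^ (s+1) * deriv φ t) := by
    have h := hasSum_integral_of_summable_integral_norm hFint hFsum
    have heq : ∫ t in Set.Ioi (0:ℝ), (∑' j, F j t)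
        = ∫ t in Set.Ioi (0:ℝ), (t : ℂ) ^ (s+1) * deriv φ t := by
      apply integral_congr_ae
      filter_upwards [ae_restrict_mem measurableSet_Ioi] with t ht
      have ht0 : (0:ℝ) < t := ht
      have hexp : HasSum (fun n : ℕ => ((s+1) * (Real.log t : ℂ)) ^ n / (Nat.factorial n : ℂ))
          (Complex.exp ((s+1) * (Real.log t : ℂ))) := by
        rw [Complex.exp_eq_exp_ℂ]
        exact NormedSpace.expSeries_div_hasSum_exp _
      have hmul := hexp.mul_right (deriv φ t)
      have hFeq : (fun n : ℕ => ((s+1) * (Real.log t : ℂ)) ^ n / (Nat.factorial n : ℂ) * deriv φ t)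
          = fun n => F n t := by
        funext n
        rw [hFdef]
        push_cast
        rw [mul_pow]
        ring
      rw [hFeq] at hmul
      have hcpow : (t : ℂ) ^ (s+1) = Complex.exp ((s+1) * (Real.log t : ℂ)) := by
        rw [Complex.cpow_def_of_ne_zero (Complex.ofReal_ne_zero.mpr (ne_of_gt ht0)),
          Complex.ofReal_log ht0.le, mul_comm]
      rw [hcpow]
      exact hmul.tsum_eq
    rwa [heq] at h
  have hF0 : ∫ t in Set.Ioi (0:ℝ), F 0 t = -φ 0 := by
    have h := HasCompactSupport.integral_Ioi_deriv_eq (hφ.of_le (by simp)) hsupp 0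
    rw [← h]
    apply integral_congr_ae
    apply Filter.Eventually.of_forall
    intro t
    rw [hFdef]
    simp
  have hFsucc : ∀ j : ℕ, ∫ t in Set.Ioi (0:ℝ), F (j+1) t
      = (s+1) * ((s + 1) ^ j / (Nat.factorial (j + 1) : ℂ) * A (j+1)) := by
    intro j
    have heq : F (j+1) = fun t =>
        ((s + 1) ^ (j+1) / (Nat.factorial (j+1) : ℂ)) * (((Real.log t ^ (j+1) : ℝ) : ℂ) * deriv φ t) := by
      funext t; rw [hFdef]; ring
    rw [heq, MeasureTheory.integral_const_mul, hAdef]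
    rw [pow_succ]
    ring
  have htsum0 : ∑' j, ∫ t in Set.Ioi (0:ℝ), F j t
      = (∫ t in Set.Ioi (0:ℝ), F 0 t) + ∑' j, ∫ t in Set.Ioi (0:ℝ), F (j+1) t :=
    Summable.tsum_eq_zero_add hsum2.summable
  have htsucc : ∑' j, ∫ t in Set.Ioi (0:ℝ), F (j+1) t
      = (s+1) * ∑' j, (s + 1) ^ j / (Nat.factorial (j + 1) : ℂ) * A (j+1) := by
    rw [← tsum_mul_left]
    exact tsum_congr hFsucc
  have hibp := aux_ibp φ hφ hsupp s hs hs1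
  rw [hibp, ← hsum2.tsum_eq, htsum0, hF0, htsucc]
  have hinv : (s+1)⁻¹ * (s+1) = 1 := inv_mul_cancel₀ hs1
  linear_combination (-(∑' j : ℕ, (s + 1) ^ j / (Nat.factorial (j + 1) : ℂ) * A (j+1))) * hinv
end

section
/- Let φ: ℝⁿ → ℂ be smooth with compact support. The function G(λ) = (−1)ⁿ ∫_{{x₁⋯xₙ > 0}} (x₁⋯xₙ)^{λ+1} (∂₁⋯∂ₙ φ)(x) dx is holomorphic on the half-plane {λ ∈ ℂ : Re λ > −2} and satisfies (λ+1)ⁿ Z_φ(λ) = G(λ) for all λ with Re λ > −1. Consequently, Z_φ extends to a meromorphic function on {Re λ > −2} whose only possible pole there is at λ = −1, of order at most n. -/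
open MeasureTheory

/-- The partial derivative `∂ᵢ f` of `f : ℝⁿ → ℂ`. -/
noncomputable def partialDeriv' {n : ℕ} (i : Fin n) (f : (Fin n → ℝ) → ℂ) :
    (Fin n → ℝ) → ℂ :=
  fun x => fderiv ℝ f x (Pi.single i 1)

/-- The mixed partial derivative `∂₁∂₂⋯∂ₙ f` of `f : ℝⁿ → ℂ`. -/
noncomputable def mixedDeriv {n : ℕ} (f : (Fin n → ℝ) → ℂ) : (Fin n → ℝ) → ℂ :=
  (List.finRange n).foldr partialDeriv' f

open Set

namespace LZeta


lemma measurable_log_ofReal : Measurable fun r : ℝ => Complex.log (r : ℂ) := by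
  have h : (fun r : ℝ => Complex.log (r:ℂ))
      = fun r : ℝ => (Real.log |r| : ℂ) + ((if r < 0 then (Real.pi:ℝ) else 0 : ℝ) : ℂ) * Complex.I := by
    funext r
    have h0 : Complex.log (r:ℂ)
        = (Real.log ‖(r:ℂ)‖ : ℂ) + (Complex.arg (r:ℂ)) * Complex.I := rfl
    rw [h0, Complex.norm_real, Real.norm_eq_abs]
    congr 2
    split_ifs with hr
    · exact_mod_cast Complex.arg_ofReal_of_neg hr
    · exact_mod_cast Complex.arg_ofReal_of_nonneg (not_lt.1 hr)
  rw [h]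
  refine Measurable.add ?_ (Measurable.mul ?_ measurable_const)
  · exact Complex.measurable_ofReal.comp (Real.measurable_log.comp measurable_abs)
  · refine Complex.measurable_ofReal.comp ?_
    exact Measurable.ite measurableSet_Iio measurable_const measurable_const

lemma measurable_ofRealCpow (y : ℂ) : Measurable fun r : ℝ => (r:ℂ) ^ y := by
  have h : (fun r : ℝ => (r:ℂ) ^ y)
      = fun r : ℝ => if r = 0 then (0:ℂ) ^ y else Complex.exp (Complex.log (r:ℂ) * y) := by
    funext r
    by_cases hr : r = 0
    · simp [hr]
    · rw [if_neg hr, Complex.cpow_def_of_ne_zero (by exact_mod_cast hr)]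
  rw [h]
  have hs : MeasurableSet {r : ℝ | r = 0} := by
    simpa using (measurableSet_singleton (0:ℝ))
  exact Measurable.ite hs measurable_const
    (Complex.measurable_exp.comp (measurable_log_ofReal.mul_const y))

lemma measurable_realSign : Measurable Real.sign := by
  have h : Real.sign = fun r : ℝ => if r < 0 then (-1:ℝ) else if 0 < r then 1 else 0 := by
    funext r
    rcases lt_trichotomy r 0 with h | h | h
    · simp [Real.sign_of_neg h, h]
    · simp [h, Real.sign_zero]
    · simp [Real.sign_of_pos h, h, not_lt.2 h.le]
  rw [h]
  exact Measurable.ite measurableSet_Iio measurable_const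
    (Measurable.ite measurableSet_Ioi measurable_const measurable_const)

lemma norm_ofReal_cpow_le {r : ℝ} (hr : 0 ≤ r) (y : ℂ) : ‖((r:ℝ):ℂ) ^ y‖ ≤ r ^ y.re := by
  rcases hr.eq_or_lt with h | h
  · subst h
    by_cases hy : y = 0
    · simp [hy]
    · rw [Complex.ofReal_zero, Complex.zero_cpow hy]
      simpa using Real.rpow_nonneg le_rfl y.re
  · rw [Complex.norm_cpow_eq_rpow_re_of_pos h]

lemma norm_abs_cpow_le (t : ℝ) (y : ℂ) : ‖((|t| : ℝ):ℂ) ^ y‖ ≤ |t| ^ y.re :=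
  norm_ofReal_cpow_le (abs_nonneg t) y

lemma integrableOn_abs_rpow {a : ℝ} (ha : -1 < a) (R : ℝ) :
    IntegrableOn (fun t : ℝ => |t| ^ a) (Icc (-R) R) := by
  rcases lt_or_ge R 0 with hR | hR
  · rw [Set.Icc_eq_empty (by linarith)]
    exact integrableOn_empty
  · have h1 : IntegrableOn (fun t : ℝ => |t| ^ a) (Ioc 0 R) := by
      refine ((intervalIntegral.intervalIntegrable_rpow' (a := 0) (b := R) ha).1).congr_fun
        ?_ measurableSet_Ioc
      intro t ht
      simp only [abs_of_pos ht.1]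
    have h1' : IntegrableOn (fun t : ℝ => |t| ^ a) (Ico 0 R) := by
      refine h1.congr_set_ae ?_
      exact (Ioo_ae_eq_Ioc (α := ℝ) (a := 0) (b := R)).symm.trans Ioo_ae_eq_Ico |>.symm
    have h2 : IntegrableOn (fun t : ℝ => |t| ^ a) (Ioc (-R) 0) := by
      have hg : Integrable ((Ico (0:ℝ) R).indicator (fun t : ℝ => |t| ^ a)) := by
        rwa [integrable_indicator_iff measurableSet_Ico] at *
      have := hg.comp_neg
      have heq : (fun t : ℝ => ((Ico (0:ℝ) R).indicator (fun t : ℝ => |t| ^ a)) (-t))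
          = (Ioc (-R) (0:ℝ)).indicator (fun t : ℝ => |t| ^ a) := by
        funext t
        by_cases ht : t ∈ Ioc (-R) (0:ℝ)
        · rw [Set.indicator_of_mem ht]
          have : -t ∈ Ico (0:ℝ) R := ⟨by linarith [ht.2], by linarith [ht.1]⟩
          rw [Set.indicator_of_mem this, abs_neg]
        · rw [Set.indicator_of_notMem ht]
          have : -t ∉ Ico (0:ℝ) R := by
            intro hc
            exact ht ⟨by linarith [hc.2], by linarith [hc.1]⟩
          rw [Set.indicator_of_notMem this]
      rw [heq] at this
      rwa [integrable_indicator_iff measurableSet_Ioc] at this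
    have : IntegrableOn (fun t : ℝ => |t| ^ a) (Ioc (-R) 0 ∪ Ioc 0 R) := h2.union h1
    refine this.congr_set_ae ?_
    rw [Set.Ioc_union_Ioc_eq_Ioc (by linarith) hR]
    exact (Ioc_ae_eq_Icc).symm


/-- The one-dimensional weight. -/
noncomputable def uw (s : ℂ) (b : Bool) (t : ℝ) : ℂ :=
  if b then (Real.sign t : ℂ) * ((|t| : ℝ) : ℂ) ^ (s + 1) else ((|t| : ℝ) : ℂ) ^ s

lemma measurable_uw (s : ℂ) (b : Bool) : Measurable (uw s b) := by
  cases b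
  · exact (measurable_ofRealCpow s).comp measurable_abs
  · exact ((Complex.measurable_ofReal.comp measurable_realSign).mul
      (((measurable_ofRealCpow (s+1))).comp measurable_abs))

lemma abs_realSign_le (t : ℝ) : |Real.sign t| ≤ 1 := by
  rcases lt_trichotomy t 0 with h | h | h
  · simp [Real.sign_of_neg h]
  · simp [h, Real.sign_zero]
  · simp [Real.sign_of_pos h]

lemma norm_uw_le (s : ℂ) (b : Bool) (t : ℝ) :
    ‖uw s b t‖ ≤ |t| ^ (if b then s.re + 1 else s.re) := by
  cases b
  · simpa [uw] using norm_ofReal_cpow_le (abs_nonneg t) s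
  · simp only [uw, if_true, Bool.cond_true]
    calc ‖(Real.sign t : ℂ) * ((|t| : ℝ) : ℂ) ^ (s + 1)‖
        = |Real.sign t| * ‖((|t| : ℝ) : ℂ) ^ (s + 1)‖ := by
          rw [norm_mul, Complex.norm_real, Real.norm_eq_abs]
      _ ≤ 1 * (|t| ^ (s + 1).re) := by
          refine mul_le_mul (abs_realSign_le t) (norm_ofReal_cpow_le (abs_nonneg t) _)
            (norm_nonneg _) zero_le_one
      _ = |t| ^ (s.re + 1) := by rw [one_mul, Complex.add_re, Complex.one_re]

lemma uw_exp_gt (s : ℂ) (hs : -1 < s.re) (b : Bool) :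
    -1 < (if b then s.re + 1 else s.re) := by
  cases b <;> simp <;> linarith

/-- Master integrability lemma. -/
lemma integrable_weight_mul {𝕜 : Type*} [RCLike 𝕜] {n : ℕ}
    (u : Fin n → ℝ → 𝕜) (a : Fin n → ℝ) (ha : ∀ i, -1 < a i)
    (hu : ∀ i, Measurable (u i)) (hub : ∀ i t, ‖u i t‖ ≤ |t| ^ a i)
    {g : (Fin n → ℝ) → 𝕜} (hg : Continuous g) (hgs : HasCompactSupport g) :
    Integrable (fun x : Fin n → ℝ => (∏ i, u i (x i)) * g x) := by
  obtain ⟨C, hC⟩ := hg.bounded_above_of_compact_support hgs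
  have hC0 : 0 ≤ C := le_trans (norm_nonneg _) (hC 0)
  obtain ⟨R, hR⟩ := (Metric.isBounded_iff_subset_closedBall 0).1 hgs.isBounded
  set v : Fin n → ℝ → ℝ := fun i => (Icc (-R) R).indicator (fun t => |t| ^ a i) with hv
  have hv0 : ∀ i t, 0 ≤ v i t := by
    intro i t
    exact Set.indicator_nonneg (fun t _ => Real.rpow_nonneg (abs_nonneg t) _) t
  have hvint : ∀ i, Integrable (v i) := fun i =>
    (integrable_indicator_iff measurableSet_Icc).2 (integrableOn_abs_rpow (ha i) R)
  have hdom : Integrable (fun x : Fin n → ℝ => C * ∏ i, v i (x i)) :=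
    (Integrable.fintype_prod (f := fun i => v i) hvint).const_mul C
  refine hdom.mono' ?_ ?_
  · refine (Measurable.mul ?_ hg.measurable).aestronglyMeasurable
    exact Finset.measurable_prod _ fun i _ => (hu i).comp (measurable_pi_apply i)
  · refine Filter.Eventually.of_forall fun x => ?_
    by_cases hgx : g x = 0
    · simp only [hgx, mul_zero, norm_zero]
      exact mul_nonneg hC0 (Finset.prod_nonneg fun i _ => hv0 i (x i))
    · have hx : x ∈ Metric.closedBall (0 : Fin n → ℝ) R :=
        hR (subset_tsupport g hgx)
      have hxi : ∀ i, x i ∈ Icc (-R) R := by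
        intro i
        have := (norm_le_pi_norm x i).trans (mem_closedBall_zero_iff.1 hx)
        rw [Real.norm_eq_abs] at this
        exact ⟨neg_le_of_abs_le this, le_of_abs_le this⟩
      have h1 : ‖∏ i, u i (x i)‖ ≤ ∏ i, v i (x i) := by
        rw [norm_prod]
        refine Finset.prod_le_prod (fun i _ => norm_nonneg _) fun i _ => ?_
        show ‖u i (x i)‖ ≤ (Icc (-R) R).indicator (fun t => |t| ^ a i) (x i)
        rw [Set.indicator_of_mem (hxi i)]
        exact hub i (x i)
      rw [norm_mul]
      rw [mul_comm C _]
      exact mul_le_mul h1 (hC x) (norm_nonneg _)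
        (Finset.prod_nonneg fun i _ => hv0 i (x i))


lemma integrableOn_cpow_mul_Ioi {w : ℂ} (hw : -1 < w.re) {h : ℝ → ℂ}
    (hh : Continuous h) (hhs : HasCompactSupport h) :
    IntegrableOn (fun t : ℝ => ((t:ℝ):ℂ) ^ w * h t) (Ioi 0) := by
  obtain ⟨C, hC⟩ := hh.bounded_above_of_compact_support hhs
  have hC0 : 0 ≤ C := le_trans (norm_nonneg _) (hC 0)
  obtain ⟨R, hR⟩ := (Metric.isBounded_iff_subset_closedBall 0).1 hhs.isBounded
  refine Integrable.mono'
      (g := fun t => C * ((Icc (-R) R).indicator (fun t => |t| ^ w.re) t)) ?_ ?_ ?_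
  · exact (((integrable_indicator_iff measurableSet_Icc).2
      (integrableOn_abs_rpow hw R)).const_mul C).integrableOn
  · exact ((measurable_ofRealCpow w).mul hh.measurable).aestronglyMeasurable.restrict
  · filter_upwards [ae_restrict_mem measurableSet_Ioi] with t ht
    by_cases hht : h t = 0
    · simp only [hht, mul_zero, norm_zero]
      exact mul_nonneg hC0 (Set.indicator_nonneg
        (fun r _ => Real.rpow_nonneg (abs_nonneg r) _) t)
    · have htR : t ∈ Icc (-R) R := by
        have := hR (subset_tsupport h hht)
        rw [Metric.mem_closedBall, Real.dist_eq, sub_zero] at this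
        exact ⟨neg_le_of_abs_le this, le_of_abs_le this⟩
      rw [Set.indicator_of_mem htR, norm_mul, mul_comm C _]
      refine mul_le_mul ?_ (hC t) (norm_nonneg _)
        (Real.rpow_nonneg (abs_nonneg t) _)
      have := norm_ofReal_cpow_le (le_of_lt ht) w
      rwa [abs_of_pos ht]

lemma ibp_Ioi {s : ℂ} (hs : -1 < s.re) {f : ℝ → ℂ} (hf : ContDiff ℝ 1 f)
    (hfs : HasCompactSupport f) :
    (s+1) * ∫ t in Ioi (0:ℝ), ((t:ℝ):ℂ) ^ s * f t
      = - ∫ t in Ioi (0:ℝ), ((t:ℝ):ℂ) ^ (s+1) * deriv f t := by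
  have hs1 : s + 1 ≠ 0 := by
    intro h
    have := congrArg Complex.re h
    simp only [Complex.add_re, Complex.one_re, Complex.zero_re] at this
    linarith
  set F : ℝ → ℂ := fun t => ((t:ℝ):ℂ) ^ (s+1) * f t with hF
  have hre : 0 < (s+1).re := by
    simp only [Complex.add_re, Complex.one_re]; linarith
  have hderiv : ∀ t ∈ Ioi (0:ℝ),
      HasDerivAt F ((s+1) * ((t:ℝ):ℂ)^s * f t + ((t:ℝ):ℂ)^(s+1) * deriv f t) t := by
    intro t ht
    have h1 : HasDerivAt (fun y : ℝ => ((y:ℝ):ℂ) ^ (s+1)) ((s+1) * ((t:ℝ):ℂ)^s) t := by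
      have h2 := (hasDerivAt_ofReal_cpow_const' (ne_of_gt (show (0:ℝ) < t from ht))
        (show s ≠ -1 by intro h; rw [h] at hs; simp at hs)).const_mul (s+1)
      have h3 : (fun y : ℝ => (s+1) * (((y:ℝ):ℂ) ^ (s+1) / (s+1))) = fun y : ℝ => ((y:ℝ):ℂ) ^ (s+1) := by
        funext y
        field_simp
      rw [h3] at h2
      simpa [mul_comm] using h2
    exact h1.mul ((hf.differentiable one_ne_zero t).hasDerivAt)
  have hcont : ContinuousWithinAt F (Ici 0) 0 := by
    exact ((Complex.continuousAt_ofReal_cpow_const 0 (s+1) (Or.inl hre)).mul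
      hf.continuous.continuousAt).continuousWithinAt
  have htend : Filter.Tendsto F Filter.atTop (nhds 0) := by
    obtain ⟨R, hR⟩ := (Metric.isBounded_iff_subset_closedBall 0).1 hfs.isBounded
    refine Filter.Tendsto.congr' ?_ tendsto_const_nhds
    filter_upwards [Filter.eventually_gt_atTop R] with t ht
    have hft : f t = 0 := by
      by_contra hft
      have := hR (subset_tsupport f hft)
      rw [Metric.mem_closedBall, Real.dist_eq, sub_zero] at this
      have : t ≤ R := le_of_abs_le this
      linarith
    simp [hF, hft]
  have hint1 : IntegrableOn (fun t : ℝ => ((t:ℝ):ℂ)^s * f t) (Ioi 0) :=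
    integrableOn_cpow_mul_Ioi hs hf.continuous hfs
  have hint2 : IntegrableOn (fun t : ℝ => ((t:ℝ):ℂ)^(s+1) * deriv f t) (Ioi 0) :=
    integrableOn_cpow_mul_Ioi (by simp only [Complex.add_re, Complex.one_re]; linarith) (hf.continuous_deriv le_rfl) hfs.deriv
  have hint0 : IntegrableOn (fun t : ℝ => (s+1) * (((t:ℝ):ℂ)^s * f t)) (Ioi 0) :=
    hint1.const_mul _
  have hintF : IntegrableOn
      (fun t : ℝ => (s+1) * (((t:ℝ):ℂ)^s * f t) + ((t:ℝ):ℂ)^(s+1) * deriv f t) (Ioi 0) :=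
    hint0.add hint2
  have key := integral_Ioi_of_hasDerivAt_of_tendsto hcont hderiv
    (by
      refine hintF.congr_fun (fun t ht => ?_) measurableSet_Ioi
      ring) htend
  have hF0 : F 0 = 0 := by
    simp only [hF, Complex.ofReal_zero, Complex.zero_cpow hs1, zero_mul]
  rw [hF0, sub_zero] at key
  have key2 : ∫ t in Ioi (0:ℝ),
      ((s+1) * (((t:ℝ):ℂ)^s * f t) + ((t:ℝ):ℂ)^(s+1) * deriv f t) = 0 := by
    rw [← key]
    refine setIntegral_congr_fun measurableSet_Ioi (fun t ht => ?_)
    ring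
  rw [integral_add hint0 hint2, integral_const_mul] at key2
  linear_combination key2

lemma ibp_halfline (s : ℂ) (hs : -1 < s.re) (f : ℝ → ℂ) (hf : ContDiff ℝ 1 f)
    (hfs : HasCompactSupport f) (c : ℝ) :
    (s+1) * ∫ t in {t : ℝ | 0 < c * t}, uw s false t * f t
      = - ∫ t in {t : ℝ | 0 < c * t}, uw s true t * deriv f t := by
  rcases lt_trichotomy c 0 with hc | hc | hc
  · have hset : {t : ℝ | 0 < c * t} = Iio 0 := by
      ext t
      simp only [mem_setOf_eq, mem_Iio, mul_pos_iff]
      constructor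
      · rintro (⟨h1, _⟩ | ⟨_, h2⟩)
        · linarith
        · exact h2
      · intro h
        exact Or.inr ⟨hc, h⟩
    rw [hset]
    set g : ℝ → ℂ := fun t => f (-t) with hg
    have hgc : ContDiff ℝ 1 g := hf.comp contDiff_neg
    have hgs : HasCompactSupport g := hfs.comp_homeomorph (Homeomorph.neg ℝ)
    have h1 : ∫ t in Iio (0:ℝ), uw s false t * f t
        = ∫ t in Ioi (0:ℝ), ((t:ℝ):ℂ)^s * g t := by
      rw [setIntegral_congr_set Iio_ae_eq_Iic,
          show (Iic (0:ℝ)) = Iic (-0) by rw [neg_zero], ← integral_comp_neg_Ioi]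
      refine setIntegral_congr_fun measurableSet_Ioi (fun t ht => ?_)
      simp only [uw, Bool.false_eq_true, if_false, abs_neg, abs_of_pos (show (0:ℝ) < t from ht), hg]
    have h2 : ∫ t in Iio (0:ℝ), uw s true t * deriv f t
        = ∫ t in Ioi (0:ℝ), ((t:ℝ):ℂ)^(s+1) * deriv g t := by
      rw [setIntegral_congr_set Iio_ae_eq_Iic,
          show (Iic (0:ℝ)) = Iic (-0) by rw [neg_zero], ← integral_comp_neg_Ioi]
      refine setIntegral_congr_fun measurableSet_Ioi (fun t ht => ?_)
      have hd : deriv g t = - deriv f (-t) := deriv_comp_neg f t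
      simp only [uw, if_true]
      rw [hd, Real.sign_of_neg (by simpa using ht : -t < 0), abs_neg,
        abs_of_pos (show (0:ℝ) < t from ht)]
      push_cast
      ring
    rw [h1, h2]
    exact ibp_Ioi hs hgc hgs
  · have hset : {t : ℝ | 0 < c * t} = ∅ := by
      ext t
      simp [hc]
    rw [hset]
    simp
  · have hset : {t : ℝ | 0 < c * t} = Ioi 0 := by
      ext t
      simp only [mem_setOf_eq, mem_Ioi, mul_pos_iff]
      constructor
      · rintro (⟨_, h2⟩ | ⟨h1, _⟩)
        · exact h2
        · linarith
      · intro h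
        exact Or.inl ⟨hc, h⟩
    rw [hset]
    have h1 : ∫ t in Ioi (0:ℝ), uw s false t * f t
        = ∫ t in Ioi (0:ℝ), ((t:ℝ):ℂ)^s * f t := by
      refine setIntegral_congr_fun measurableSet_Ioi (fun t ht => ?_)
      simp only [uw, Bool.false_eq_true, if_false, abs_of_pos (show (0:ℝ) < t from ht)]
    have h2 : ∫ t in Ioi (0:ℝ), uw s true t * deriv f t
        = ∫ t in Ioi (0:ℝ), ((t:ℝ):ℂ)^(s+1) * deriv f t := by
      refine setIntegral_congr_fun measurableSet_Ioi (fun t ht => ?_)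
      simp only [uw, if_true]
      rw [Real.sign_of_pos (show (0:ℝ) < t from ht), abs_of_pos (show (0:ℝ) < t from ht)]
      push_cast
      ring
    rw [h1, h2]
    exact ibp_Ioi hs hf hfs

lemma contDiff_partialDeriv {n : ℕ} (i : Fin n) {f : (Fin n → ℝ) → ℂ} (hf : ContDiff ℝ (⊤ : ℕ∞) f) :
    ContDiff ℝ (⊤ : ℕ∞) (partialDeriv' i f) :=
  (hf.fderiv_right (by simp)).clm_apply contDiff_const

lemma hcs_partialDeriv {n : ℕ} (i : Fin n) {f : (Fin n → ℝ) → ℂ} (hf : HasCompactSupport f) :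
    HasCompactSupport (partialDeriv' i f) :=
  hf.fderiv_apply ℝ (Pi.single i 1)

lemma foldr_smooth {n : ℕ} {f : (Fin n → ℝ) → ℂ} (hf : ContDiff ℝ (⊤ : ℕ∞) f)
    (hfs : HasCompactSupport f) (l : List (Fin n)) :
    ContDiff ℝ (⊤ : ℕ∞) (l.foldr partialDeriv' f) ∧ HasCompactSupport (l.foldr partialDeriv' f) := by
  induction l with
  | nil => exact ⟨hf, hfs⟩
  | cons a l ih => exact ⟨contDiff_partialDeriv a ih.1, hcs_partialDeriv a ih.2⟩

lemma hasDerivAt_insertNth {m : ℕ} (k : Fin (m+1)) (y : Fin m → ℝ) (t : ℝ)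
    {ψ : (Fin (m+1) → ℝ) → ℂ} (hψ : Differentiable ℝ ψ) :
    HasDerivAt (fun t : ℝ => ψ (k.insertNth t y)) (partialDeriv' k ψ (k.insertNth t y)) t := by
  have hline : HasDerivAt (fun t : ℝ => k.insertNth t y)
      (Pi.single k 1 : Fin (m+1) → ℝ) t := by
    rw [hasDerivAt_pi]
    intro i
    by_cases hi : i = k
    · subst hi
      simp only [Fin.insertNth_apply_same, Pi.single_eq_same]
      exact hasDerivAt_id t
    · obtain ⟨j, hj⟩ := Fin.exists_succAbove_eq hi
      subst hj
      simp only [Fin.insertNth_apply_succAbove, Pi.single_eq_of_ne (Fin.succAbove_ne k j)]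
      exact hasDerivAt_const t _
  exact (hψ (k.insertNth t y)).hasFDerivAt.comp_hasDerivAt t hline

lemma slice_contDiff {m : ℕ} (k : Fin (m+1)) (y : Fin m → ℝ) {ψ : (Fin (m+1) → ℝ) → ℂ}
    (hψ : ContDiff ℝ 1 ψ) : ContDiff ℝ 1 fun t : ℝ => ψ (k.insertNth t y) := by
  refine hψ.comp ?_
  rw [contDiff_pi]
  intro i
  by_cases hi : i = k
  · subst hi
    simp only [Fin.insertNth_apply_same]
    exact contDiff_id
  · obtain ⟨j, hj⟩ := Fin.exists_succAbove_eq hi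
    subst hj
    simp only [Fin.insertNth_apply_succAbove]
    exact contDiff_const

lemma slice_hcs {m : ℕ} (k : Fin (m+1)) (y : Fin m → ℝ) {ψ : (Fin (m+1) → ℝ) → ℂ}
    (hψs : HasCompactSupport ψ) : HasCompactSupport fun t : ℝ => ψ (k.insertNth t y) := by
  obtain ⟨R, hR⟩ := (Metric.isBounded_iff_subset_closedBall 0).1 hψs.isBounded
  refine HasCompactSupport.intro (isCompact_Icc (a := -R) (b := R)) (fun t ht => ?_)
  by_contra h
  have hmem := hR (subset_tsupport _ h)
  rw [mem_closedBall_zero_iff] at hmem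
  have h3 := norm_le_pi_norm (G := fun _ : Fin (m+1) => ℝ) (k.insertNth t y) k
  rw [Fin.insertNth_apply_same, Real.norm_eq_abs] at h3
  have h2 : |t| ≤ R := h3.trans hmem
  exact ht ⟨neg_le_of_abs_le h2, le_of_abs_le h2⟩

lemma measurableSet_posSet (n : ℕ) : MeasurableSet {x : Fin n → ℝ | 0 < ∏ i, x i} :=
  measurableSet_lt measurable_const (Finset.measurable_prod _ fun i _ => measurable_pi_apply i)

lemma measurableSet_halfline (c : ℝ) : MeasurableSet {t : ℝ | 0 < c * t} :=
  measurableSet_lt measurable_const (measurable_id.const_mul c)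

lemma slice_integral {m : ℕ} (k : Fin (m+1)) (F : (Fin (m+1) → ℝ) → ℂ)
    (hF : Integrable (Set.indicator {x : Fin (m+1) → ℝ | 0 < ∏ i, x i} F)) :
    ∫ x in {x : Fin (m+1) → ℝ | 0 < ∏ i, x i}, F x
      = ∫ y : Fin m → ℝ, ∫ t in {t : ℝ | 0 < (∏ j, y j) * t}, F (k.insertNth t y) := by
  set A := {x : Fin (m+1) → ℝ | 0 < ∏ i, x i} with hA
  have hAm := measurableSet_posSet (m+1)
  rw [← integral_indicator hAm]
  have hmp := (volume_preserving_piFinSuccAbove (fun _ : Fin (m+1) => ℝ) k).symm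
  rw [← hmp.integral_comp' (Set.indicator A F)]
  have hint : Integrable (fun z : ℝ × (Fin m → ℝ) =>
      Set.indicator A F ((MeasurableEquiv.piFinSuccAbove (fun _ : Fin (m+1) => ℝ) k).symm z)) :=
    (hmp.integrable_comp_emb (MeasurableEquiv.measurableEmbedding _)).2 hF
  rw [show (volume : Measure (ℝ × (Fin m → ℝ))) = (volume : Measure ℝ).prod volume from rfl]
  rw [integral_prod_symm _ (by exact hint)]
  congr 1
  funext y
  have hsymm : ∀ t : ℝ, (MeasurableEquiv.piFinSuccAbove (fun _ : Fin (m+1) => ℝ) k).symm (t, y)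
      = k.insertNth t y := by
    intro t
    rw [MeasurableEquiv.piFinSuccAbove_symm_apply]
    rfl
  have hindic : ∀ t : ℝ,
      Set.indicator A F ((MeasurableEquiv.piFinSuccAbove (fun _ : Fin (m+1) => ℝ) k).symm (t, y))
      = Set.indicator {t : ℝ | 0 < (∏ j, y j) * t} (fun t => F (k.insertNth t y)) t := by
    intro t
    rw [hsymm]
    have hmemiff : (k.insertNth t y ∈ A) ↔ (t ∈ {t : ℝ | 0 < (∏ j, y j) * t}) := by
      simp only [hA, mem_setOf_eq]
      rw [Fin.prod_univ_succAbove (fun i => k.insertNth t y i) k]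
      simp only [Fin.insertNth_apply_same, Fin.insertNth_apply_succAbove]
      rw [mul_comm]
    by_cases hmem : k.insertNth t y ∈ A
    · rw [Set.indicator_of_mem hmem, Set.indicator_of_mem (hmemiff.1 hmem)]
    · rw [Set.indicator_of_notMem hmem,
        Set.indicator_of_notMem (fun hc => hmem (hmemiff.2 hc))]
  simp_rw [hindic]
  rw [integral_indicator (measurableSet_halfline _)]

lemma step_ibp {m : ℕ} (k : Fin (m+1)) {ψ : (Fin (m+1) → ℝ) → ℂ}
    (hψ : ContDiff ℝ (⊤ : ℕ∞) ψ) (hψs : HasCompactSupport ψ)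
    (b : Fin (m+1) → Bool) (hbk : b k = false) {s : ℂ} (hs : -1 < s.re) :
    (s+1) * ∫ x in {x : Fin (m+1) → ℝ | 0 < ∏ i, x i}, (∏ i, uw s (b i) (x i)) * ψ x
      = - ∫ x in {x : Fin (m+1) → ℝ | 0 < ∏ i, x i},
          (∏ i, uw s (Function.update b k true i) (x i)) * partialDeriv' k ψ x := by
  set F1 : (Fin (m+1) → ℝ) → ℂ := fun x => (∏ i, uw s (b i) (x i)) * ψ x with hF1
  set F2 : (Fin (m+1) → ℝ) → ℂ :=
    fun x => (∏ i, uw s (Function.update b k true i) (x i)) * partialDeriv' k ψ x with hF2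
  have hAm := measurableSet_posSet (m+1)
  have hI1 : Integrable (Set.indicator {x : Fin (m+1) → ℝ | 0 < ∏ i, x i} F1) := by
    refine (integrable_weight_mul (fun i => uw s (b i))
      (fun i => if b i then s.re + 1 else s.re) (fun i => uw_exp_gt s hs (b i))
      (fun i => measurable_uw s (b i)) (fun i => norm_uw_le s (b i))
      hψ.continuous hψs).indicator hAm
  have hI2 : Integrable (Set.indicator {x : Fin (m+1) → ℝ | 0 < ∏ i, x i} F2) := by
    refine (integrable_weight_mul (fun i => uw s (Function.update b k true i))
      (fun i => if Function.update b k true i then s.re + 1 else s.re)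
      (fun i => uw_exp_gt s hs _) (fun i => measurable_uw s _) (fun i => norm_uw_le s _)
      (contDiff_partialDeriv k hψ).continuous (hcs_partialDeriv k hψs)).indicator hAm
  rw [slice_integral k F1 hI1, slice_integral k F2 hI2, ← integral_const_mul, ← integral_neg]
  congr 1
  funext y
  set c : ℝ := ∏ j, y j with hc
  set C : ℂ := ∏ j, uw s (b (k.succAbove j)) (y j) with hC
  set f : ℝ → ℂ := fun t => ψ (k.insertNth t y) with hf
  have hfc : ContDiff ℝ 1 f := slice_contDiff k y (hψ.of_le (by simp))
  have hfs : HasCompactSupport f := slice_hcs k y hψs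
  have hderiv_eq : deriv f = fun t => partialDeriv' k ψ (k.insertNth t y) :=
    funext fun t => (hasDerivAt_insertNth k y t (hψ.differentiable (by simp))).deriv
  have h1 : ∀ t : ℝ, F1 (k.insertNth t y) = C * (uw s false t * f t) := by
    intro t
    rw [hF1]
    simp only []
    rw [Fin.prod_univ_succAbove (fun i => uw s (b i) ((k.insertNth t y : Fin (m+1) → ℝ) i)) k]
    simp only [Fin.insertNth_apply_same, Fin.insertNth_apply_succAbove, hbk]
    rw [hC, hf]
    ring
  have h2 : ∀ t : ℝ, F2 (k.insertNth t y)
      = C * (uw s true t * partialDeriv' k ψ (k.insertNth t y)) := by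
    intro t
    rw [hF2]
    simp only []
    rw [Fin.prod_univ_succAbove (fun i => uw s (Function.update b k true i)
      ((k.insertNth t y : Fin (m+1) → ℝ) i)) k]
    simp only [Fin.insertNth_apply_same, Fin.insertNth_apply_succAbove,
      Function.update_self]
    have hupd : ∀ j : Fin m, Function.update b k true (k.succAbove j) = b (k.succAbove j) :=
      fun j => Function.update_of_ne (Fin.succAbove_ne k j) _ _
    simp_rw [hupd]
    rw [hC]
    ring
  have hibp := ibp_halfline s hs f hfc hfs c
  calc (s+1) * ∫ t in {t : ℝ | 0 < c * t}, F1 (k.insertNth t y)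
      = (s+1) * (C * ∫ t in {t : ℝ | 0 < c * t}, uw s false t * f t) := by
        simp_rw [h1]
        rw [integral_const_mul]
    _ = C * ((s+1) * ∫ t in {t : ℝ | 0 < c * t}, uw s false t * f t) := by ring
    _ = C * (- ∫ t in {t : ℝ | 0 < c * t}, uw s true t * deriv f t) := by rw [hibp]
    _ = - ∫ t in {t : ℝ | 0 < c * t}, F2 (k.insertNth t y) := by
        simp_rw [h2, hderiv_eq]
        rw [integral_const_mul]
        ring

lemma prod_ofReal_cpow {ι : Type*} (t : Finset ι) (g : ι → ℝ) (hg : ∀ i ∈ t, 0 ≤ g i) (w : ℂ) :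
    ((∏ i ∈ t, g i : ℝ) : ℂ) ^ w = ∏ i ∈ t, ((g i : ℝ) : ℂ) ^ w := by
  induction t using Finset.cons_induction with
  | empty => simp
  | cons a t ha ih =>
    rw [Finset.prod_cons, Finset.prod_cons, Complex.ofReal_mul,
      Complex.mul_cpow_ofReal_nonneg (hg a (Finset.mem_cons_self a t))
        (Finset.prod_nonneg fun i hi => hg i (Finset.mem_cons_of_mem hi)),
      ih fun i hi => hg i (Finset.mem_cons_of_mem hi)]

lemma prod_ne_zero_coord {n : ℕ} {x : Fin n → ℝ} (hx : 0 < ∏ i, x i) (i : Fin n) : x i ≠ 0 := by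
  intro hxi
  rw [Finset.prod_eq_zero (Finset.mem_univ i) hxi] at hx
  exact lt_irrefl 0 hx

lemma prod_sign_eq_one {n : ℕ} {x : Fin n → ℝ} (hx : 0 < ∏ i, x i) :
    (∏ i, ((Real.sign (x i) : ℝ) : ℂ)) = 1 := by
  have hsign : ∀ i, Real.sign (x i) = x i / |x i| := by
    intro i
    rcases (prod_ne_zero_coord hx i).lt_or_gt with h | h
    · rw [Real.sign_of_neg h, abs_of_neg h, div_neg, div_self (ne_of_lt h)]
    · rw [Real.sign_of_pos h, abs_of_pos h, div_self (ne_of_gt h)]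
  have hre : (∏ i, Real.sign (x i)) = 1 := by
    rw [Finset.prod_congr rfl (fun i _ => hsign i), Finset.prod_div_distrib,
      ← Finset.abs_prod, abs_of_pos hx, div_self (ne_of_gt hx)]
  calc (∏ i, ((Real.sign (x i) : ℝ) : ℂ)) = ((∏ i, Real.sign (x i) : ℝ) : ℂ) := by
        push_cast
        rfl
    _ = 1 := by rw [hre, Complex.ofReal_one]

lemma abs_prod_eq {n : ℕ} {x : Fin n → ℝ} (hx : 0 < ∏ i, x i) :
    (∏ i, |x i|) = ∏ i, x i := by
  rw [← Finset.abs_prod, abs_of_pos hx]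

lemma uw_false_prod_on_pos {n : ℕ} {x : Fin n → ℝ} (hx : 0 < ∏ i, x i) (s : ℂ) :
    (∏ i, uw s false (x i)) = ((∏ i, x i : ℝ) : ℂ) ^ s := by
  simp only [uw, Bool.false_eq_true, if_false]
  rw [← prod_ofReal_cpow Finset.univ _ (fun i _ => abs_nonneg (x i)), abs_prod_eq hx]

lemma uw_true_prod_on_pos {n : ℕ} {x : Fin n → ℝ} (hx : 0 < ∏ i, x i) (s : ℂ) :
    (∏ i, uw s true (x i)) = ((∏ i, x i : ℝ) : ℂ) ^ (s+1) := by
  simp only [uw, if_true]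
  rw [Finset.prod_mul_distrib, prod_sign_eq_one hx, one_mul,
    ← prod_ofReal_cpow Finset.univ _ (fun i _ => abs_nonneg (x i)), abs_prod_eq hx]

lemma main_induction {m : ℕ} {φ : (Fin (m+1) → ℝ) → ℂ} (hφ : ContDiff ℝ (⊤ : ℕ∞) φ)
    (hφs : HasCompactSupport φ) {s : ℂ} (hs : -1 < s.re) :
    ∀ j : ℕ, j ≤ m+1 →
    (s+1)^j * ∫ x in {x : Fin (m+1) → ℝ | 0 < ∏ i, x i}, (∏ i, uw s false (x i)) * φ x
      = (-1)^j * ∫ x in {x : Fin (m+1) → ℝ | 0 < ∏ i, x i},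
          (∏ i : Fin (m+1), uw s (decide (m+1-j ≤ (i:ℕ))) (x i))
            * (((List.finRange (m+1)).drop (m+1-j)).foldr partialDeriv' φ) x := by
  intro j
  induction j with
  | zero =>
    intro _
    have hb : ∀ i : Fin (m+1), decide (m+1-0 ≤ (i:ℕ)) = false :=
      fun i => decide_eq_false (by omega)
    have hdrop : (List.finRange (m+1)).drop (m+1-0) = [] :=
      List.drop_eq_nil_of_le (by rw [List.length_finRange]; omega)
    simp_rw [hb, hdrop]
    simp only [pow_zero, one_mul, List.foldr_nil]
  | succ j ih =>
    intro hj
    have hjm : j ≤ m := by omega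
    have hprev := ih (by omega)
    set k : Fin (m+1) := ⟨m - j, by omega⟩ with hk
    set ψ := ((List.finRange (m+1)).drop (m+1-j)).foldr partialDeriv' φ with hψdef
    have hψ : ContDiff ℝ (⊤ : ℕ∞) ψ := (foldr_smooth hφ hφs _).1
    have hψs : HasCompactSupport ψ := (foldr_smooth hφ hφs _).2
    set b : Fin (m+1) → Bool := fun i => decide (m+1-j ≤ (i:ℕ)) with hb
    have hkval : (k:ℕ) = m - j := rfl
    have hbk : b k = false := by
      show decide (m+1-j ≤ (k:ℕ)) = false
      rw [hkval]
      exact decide_eq_false (by omega)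
    have hstep := step_ibp k hψ hψs b hbk hs
    have hupd : Function.update b k true = fun i : Fin (m+1) => decide (m+1-(j+1) ≤ (i:ℕ)) := by
      funext i
      by_cases hi : i = k
      · subst hi
        rw [Function.update_self]
        symm
        rw [decide_eq_true_eq, hkval]
        omega
      · rw [Function.update_of_ne hi]
        have hvi : (i:ℕ) ≠ m - j := fun hc => hi (Fin.ext (by rw [hc, hkval]))
        show decide (m+1-j ≤ (i:ℕ)) = decide (m+1-(j+1) ≤ (i:ℕ))
        rw [decide_eq_decide]
        omega
    have hdrop : (List.finRange (m+1)).drop (m+1-(j+1))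
        = k :: (List.finRange (m+1)).drop (m+1-j) := by
      have hlen : m+1-(j+1) < (List.finRange (m+1)).length := by
        rw [List.length_finRange]
        omega
      rw [List.drop_eq_getElem_cons hlen, List.getElem_finRange]
      congr 1
      · refine Fin.ext ?_
        simp only [Fin.coe_cast, hkval]
        omega
      · congr 1
        omega
    have hfold : ((List.finRange (m+1)).drop (m+1-(j+1))).foldr partialDeriv' φ
        = partialDeriv' k ψ := by
      rw [hdrop, List.foldr_cons]
    calc (s+1)^(j+1) * ∫ x in {x : Fin (m+1) → ℝ | 0 < ∏ i, x i},
            (∏ i, uw s false (x i)) * φ x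
        = (s+1) * ((s+1)^j * ∫ x in {x : Fin (m+1) → ℝ | 0 < ∏ i, x i},
            (∏ i, uw s false (x i)) * φ x) := by ring
      _ = (s+1) * ((-1)^j * ∫ x in {x : Fin (m+1) → ℝ | 0 < ∏ i, x i},
            (∏ i, uw s (b i) (x i)) * ψ x) := by rw [hprev]
      _ = (-1)^j * ((s+1) * ∫ x in {x : Fin (m+1) → ℝ | 0 < ∏ i, x i},
            (∏ i, uw s (b i) (x i)) * ψ x) := by ring
      _ = (-1)^j * (- ∫ x in {x : Fin (m+1) → ℝ | 0 < ∏ i, x i},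
            (∏ i, uw s (Function.update b k true i) (x i)) * partialDeriv' k ψ x) := by
          rw [hstep]
      _ = (-1)^(j+1) * ∫ x in {x : Fin (m+1) → ℝ | 0 < ∏ i, x i},
            (∏ i : Fin (m+1), uw s (decide (m+1-(j+1) ≤ (i:ℕ))) (x i))
              * (((List.finRange (m+1)).drop (m+1-(j+1))).foldr partialDeriv' φ) x := by
          rw [hfold, hupd]
          ring

lemma final_identity {m : ℕ} {φ : (Fin (m+1) → ℝ) → ℂ} (hφ : ContDiff ℝ (⊤ : ℕ∞) φ)
    (hφs : HasCompactSupport φ) {s : ℂ} (hs : -1 < s.re) :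
    (s+1)^(m+1) * ∫ x in {x : Fin (m+1) → ℝ | 0 < ∏ i, x i}, ((∏ i, x i : ℝ) : ℂ)^s * φ x
      = (-1)^(m+1) * ∫ x in {x : Fin (m+1) → ℝ | 0 < ∏ i, x i},
          ((∏ i, x i : ℝ) : ℂ)^(s+1) * mixedDeriv φ x := by
  have h := main_induction hφ hφs hs (m+1) le_rfl
  have hb : ∀ i : Fin (m+1), decide (m+1-(m+1) ≤ (i:ℕ)) = true :=
    fun i => decide_eq_true (by omega)
  simp_rw [hb] at h
  have hdrop : (List.finRange (m+1)).drop (m+1-(m+1)) = List.finRange (m+1) := by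
    norm_num
  rw [hdrop] at h
  have hL : ∫ x in {x : Fin (m+1) → ℝ | 0 < ∏ i, x i}, (∏ i, uw s false (x i)) * φ x
      = ∫ x in {x : Fin (m+1) → ℝ | 0 < ∏ i, x i}, ((∏ i, x i : ℝ) : ℂ)^s * φ x := by
    refine setIntegral_congr_fun (measurableSet_posSet (m+1)) (fun x hx => ?_)
    rw [uw_false_prod_on_pos hx]
  have hR : ∫ x in {x : Fin (m+1) → ℝ | 0 < ∏ i, x i},
        (∏ i, uw s true (x i)) * (List.finRange (m+1)).foldr partialDeriv' φ x
      = ∫ x in {x : Fin (m+1) → ℝ | 0 < ∏ i, x i},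
        ((∏ i, x i : ℝ) : ℂ)^(s+1) * mixedDeriv φ x := by
    refine setIntegral_congr_fun (measurableSet_posSet (m+1)) (fun x hx => ?_)
    rw [uw_true_prod_on_pos hx]
    rfl
  rw [hL, hR] at h
  exact h

lemma measurable_abs_rpow (c : ℝ) : Measurable fun t : ℝ => |t| ^ c := by
  have h : (fun t : ℝ => |t| ^ c)
      = fun t => if t = 0 then (0:ℝ)^c else Real.exp (Real.log |t| * c) := by
    funext t
    by_cases ht : t = 0
    · simp [ht]
    · rw [if_neg ht, Real.rpow_def_of_pos (abs_pos.2 ht)]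
  rw [h]
  exact Measurable.ite (by simpa using measurableSet_singleton (0:ℝ)) measurable_const
    (Real.measurable_exp.comp ((Real.measurable_log.comp measurable_abs).mul_const c))

lemma log_rpow_bound {p : ℝ} (hp : 0 < p) {δ : ℝ} (hδ : 0 < δ) {u σ : ℝ} (hu : |u - σ| ≤ δ) :
    |Real.log p| * p ^ u ≤ (1/δ) * (p ^ (σ - 2*δ) + p ^ (σ + 2*δ)) := by
  have hu1 := abs_le.1 hu
  have h1δ : (0:ℝ) ≤ 1/δ := by positivity
  rcases le_or_gt 1 p with h | h
  · have h1 : |Real.log p| = Real.log p := abs_of_nonneg (Real.log_nonneg h)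
    have h2 : Real.log p ≤ p ^ δ / δ := Real.log_le_rpow_div (by linarith) hδ
    have h3 : p ^ u ≤ p ^ (σ + δ) := Real.rpow_le_rpow_of_exponent_le h (by linarith)
    calc |Real.log p| * p ^ u ≤ (p ^ δ / δ) * p ^ (σ + δ) := by
          rw [h1]
          exact mul_le_mul h2 h3 (Real.rpow_nonneg hp.le u) (by positivity)
      _ = (1/δ) * p ^ (σ + 2*δ) := by
          rw [div_mul_eq_mul_div, ← Real.rpow_add hp,
            show δ + (σ + δ) = σ + 2*δ by ring, one_div, inv_mul_eq_div]
      _ ≤ (1/δ) * (p ^ (σ - 2*δ) + p ^ (σ + 2*δ)) := by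
          have h4 := Real.rpow_nonneg hp.le (σ - 2*δ)
          nlinarith [Real.rpow_nonneg hp.le (σ + 2*δ)]
  · have hplog : Real.log p ≤ 0 := Real.log_nonpos hp.le h.le
    have h1 : |Real.log p| = - Real.log p := abs_of_nonpos hplog
    have h2 : - Real.log p ≤ p ^ (-δ) / δ := by
      have h5 := Real.log_le_rpow_div (inv_nonneg.2 hp.le) hδ
      rw [Real.log_inv, Real.inv_rpow hp.le, ← Real.rpow_neg hp.le] at h5
      exact h5
    have h3 : p ^ u ≤ p ^ (σ - δ) := Real.rpow_le_rpow_of_exponent_ge hp h.le (by linarith)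
    calc |Real.log p| * p ^ u ≤ (p ^ (-δ) / δ) * p ^ (σ - δ) := by
          rw [h1]
          exact mul_le_mul h2 h3 (Real.rpow_nonneg hp.le u) (by positivity)
      _ = (1/δ) * p ^ (σ - 2*δ) := by
          rw [div_mul_eq_mul_div, ← Real.rpow_add hp,
            show -δ + (σ - δ) = σ - 2*δ by ring, one_div, inv_mul_eq_div]
      _ ≤ (1/δ) * (p ^ (σ - 2*δ) + p ^ (σ + 2*δ)) := by
          have h4 := Real.rpow_nonneg hp.le (σ + 2*δ)
          nlinarith [Real.rpow_nonneg hp.le (σ - 2*δ)]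

lemma G_holo {n : ℕ} (ψ : (Fin n → ℝ) → ℂ) (hψc : Continuous ψ)
    (hψs : HasCompactSupport ψ) :
    DifferentiableOn ℂ
      (fun w => ∫ x in {x : Fin n → ℝ | 0 < ∏ i, x i}, ((∏ i, x i : ℝ) : ℂ)^(w+1) * ψ x)
      {s : ℂ | -2 < s.re} := by
  have hAm := measurableSet_posSet n
  set A := {x : Fin n → ℝ | 0 < ∏ i, x i} with hAdef
  set P : (Fin n → ℝ) → ℝ := fun x => ∏ i, |x i| with hP
  have hPmeas : Measurable P := Finset.measurable_prod _ fun i _ => (measurable_pi_apply i).abs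
  have hPpos : ∀ x ∈ A, 0 < P x := by
    intro x hx
    rw [hP]
    simp only []
    rw [abs_prod_eq hx]
    exact hx
  set F : ℂ → (Fin n → ℝ) → ℂ := fun w x => ((P x : ℝ) : ℂ)^(w+1) * ψ x with hF
  set F' : ℂ → (Fin n → ℝ) → ℂ :=
    fun w x => ((P x : ℝ) : ℂ)^(w+1) * Complex.log ((P x : ℝ) : ℂ) * ψ x with hF'
  have hFprodform : ∀ w : ℂ, F w = fun x => (∏ i, uw (w+1) false (x i)) * ψ x := by
    intro w
    funext x
    rw [hF]
    simp only [uw, Bool.false_eq_true, if_false]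
    rw [hP]
    simp only []
    rw [prod_ofReal_cpow Finset.univ (fun i => |x i|) (fun i _ => abs_nonneg _) (w+1)]
  have hcong : ∀ w : ℂ, ∫ x in A, ((∏ i, x i : ℝ) : ℂ)^(w+1) * ψ x = ∫ x in A, F w x := by
    intro w
    refine setIntegral_congr_fun hAm (fun x hx => ?_)
    rw [hF]
    simp only []
    rw [hP]
    simp only []
    rw [abs_prod_eq hx]
  have hFmeas : ∀ w : ℂ, AEStronglyMeasurable (F w) (volume.restrict A) := by
    intro w
    rw [hFprodform w]
    exact ((Finset.measurable_prod Finset.univ fun i _ =>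
      (measurable_uw (w+1) false).comp (measurable_pi_apply i)).mul
      hψc.measurable).aestronglyMeasurable.restrict
  have hFint : ∀ w : ℂ, -2 < w.re → Integrable (F w) (volume.restrict A) := by
    intro w hw
    rw [hFprodform w]
    refine (integrable_weight_mul (fun _ => uw (w+1) false) (fun _ => (w+1).re)
      (fun i => ?_) (fun i => measurable_uw _ _)
      (fun i t => by simpa using norm_uw_le (w+1) false t) hψc hψs).restrict
    simp only [Complex.add_re, Complex.one_re]
    linarith
  intro s₀ hs₀
  have hs₀' : -2 < s₀.re := hs₀
  set δ : ℝ := (s₀.re + 2)/4 with hδdef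
  have hδ : 0 < δ := by rw [hδdef]; linarith
  have ha : -1 < s₀.re + 1 - 2*δ := by rw [hδdef]; linarith
  have hb' : -1 < s₀.re + 1 + 2*δ := by linarith
  set bound : (Fin n → ℝ) → ℝ :=
    fun x => (1/δ) * ((P x ^ (s₀.re + 1 - 2*δ) + P x ^ (s₀.re + 1 + 2*δ)) * ‖ψ x‖) with hbd
  have hprodrw : ∀ (c : ℝ) (x : Fin n → ℝ), (∏ i, |x i| ^ c) = P x ^ c :=
    fun c x => Real.finset_prod_rpow Finset.univ _ (fun i _ => abs_nonneg _) c
  have hbound_int : Integrable bound (volume.restrict A) := by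
    have hmk : ∀ c : ℝ, -1 < c → Integrable (fun x : Fin n → ℝ =>
        (∏ i, |x i| ^ c) * ‖ψ x‖) := by
      intro c hc
      refine integrable_weight_mul (𝕜 := ℝ) (fun _ => fun t => |t| ^ c) (fun _ => c)
        (fun _ => hc) (fun _ => measurable_abs_rpow c) (fun _ t => ?_)
        hψc.norm hψs.norm
      rw [Real.norm_eq_abs, abs_of_nonneg (Real.rpow_nonneg (abs_nonneg t) c)]
    have h1 := hmk _ ha
    have h2 := hmk _ hb'
    have : bound = fun x => (1/δ) * ((∏ i, |x i| ^ (s₀.re + 1 - 2*δ)) * ‖ψ x‖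
        + (∏ i, |x i| ^ (s₀.re + 1 + 2*δ)) * ‖ψ x‖) := by
      funext x
      rw [hbd]
      simp only []
      rw [hprodrw, hprodrw]
      ring
    rw [this]
    exact ((h1.add h2).const_mul _).restrict
  have hbound_ae : ∀ᵐ x ∂(volume.restrict A), ∀ w ∈ Metric.ball s₀ δ,
      ‖F' w x‖ ≤ bound x := by
    filter_upwards [ae_restrict_mem hAm] with x hx
    intro w hw
    have hPx : 0 < P x := hPpos x hx
    have hlogeq : Complex.log ((P x : ℝ) : ℂ) = ((Real.log (P x) : ℝ) : ℂ) :=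
      (Complex.ofReal_log hPx.le).symm
    have hnorm : ‖F' w x‖ = P x ^ (w.re + 1) * |Real.log (P x)| * ‖ψ x‖ := by
      rw [hF']
      simp only []
      rw [norm_mul, norm_mul, hlogeq, Complex.norm_real, Real.norm_eq_abs,
        Complex.norm_cpow_eq_rpow_re_of_pos hPx]
      simp only [Complex.add_re, Complex.one_re]
    have hu : |(w.re + 1) - (s₀.re + 1)| ≤ δ := by
      have h5 : |(w - s₀).re| ≤ ‖w - s₀‖ := Complex.abs_re_le_norm _
      rw [Complex.sub_re] at h5
      have h6 : ‖w - s₀‖ < δ := by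
        rw [← Complex.dist_eq]
        exact Metric.mem_ball.1 hw
      have : |(w.re + 1) - (s₀.re + 1)| = |w.re - s₀.re| := by ring_nf
      rw [this]
      linarith [h5.trans_lt h6]
    have hkey := log_rpow_bound hPx hδ hu
    rw [hnorm, hbd]
    calc P x ^ (w.re + 1) * |Real.log (P x)| * ‖ψ x‖
        = (|Real.log (P x)| * P x ^ (w.re + 1)) * ‖ψ x‖ := by ring
      _ ≤ ((1/δ) * (P x ^ ((s₀.re + 1) - 2*δ) + P x ^ ((s₀.re + 1) + 2*δ))) * ‖ψ x‖ :=
          mul_le_mul_of_nonneg_right hkey (norm_nonneg _)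
      _ = (1/δ) * ((P x ^ (s₀.re + 1 - 2*δ) + P x ^ (s₀.re + 1 + 2*δ)) * ‖ψ x‖) := by
          ring_nf
  have hF'meas : AEStronglyMeasurable (F' s₀) (volume.restrict A) := by
    refine Measurable.aestronglyMeasurable ?_ |>.restrict
    exact (((measurable_ofRealCpow (s₀+1)).comp hPmeas).mul
      (measurable_log_ofReal.comp hPmeas)).mul hψc.measurable
  have h_diff : ∀ᵐ x ∂(volume.restrict A), ∀ w ∈ Metric.ball s₀ δ,
      HasDerivAt (fun w => F w x) (F' w x) w := by
    filter_upwards [ae_restrict_mem hAm] with x hx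
    intro w _
    have hPx : 0 < P x := hPpos x hx
    have hC : ((P x : ℝ) : ℂ) ≠ 0 := by
      exact_mod_cast ne_of_gt hPx
    have h0 := (Complex.hasStrictDerivAt_const_cpow
      (x := ((P x : ℝ) : ℂ)) (y := w + 1) (Or.inl hC)).hasDerivAt
    have h2 : HasDerivAt (fun w : ℂ => w + 1) 1 w := (hasDerivAt_id w).add_const 1
    have h1 : HasDerivAt (fun w : ℂ => ((P x : ℝ) : ℂ) ^ (w+1))
        (((P x : ℝ) : ℂ)^(w+1) * Complex.log ((P x : ℝ) : ℂ)) w := by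
      simpa [Function.comp_def] using h0.comp w h2
    exact h1.mul_const (ψ x)
  have key := hasDerivAt_integral_of_dominated_loc_of_deriv_le (Metric.ball_mem_nhds s₀ hδ)
    (Filter.Eventually.of_forall hFmeas) (hFint s₀ hs₀') hF'meas hbound_ae
    hbound_int h_diff
  have hfun : (fun w => ∫ x in A, ((∏ i, x i : ℝ) : ℂ)^(w+1) * ψ x)
      = fun w => ∫ x in A, F w x := funext hcong
  rw [hfun]
  exact key.2.differentiableAt.differentiableWithinAt

end LZeta

/-- For smooth compactly supported `φ : ℝⁿ → ℂ`, the function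
`G(s) = (−1)ⁿ ∫_{x₁⋯xₙ>0} (x₁⋯xₙ)^{s+1} (∂₁⋯∂ₙφ)(x) dx` is holomorphic on
`{Re s > −2}` and satisfies `(s+1)ⁿ Z_φ(s) = G(s)` for `Re s > −1`; thus `Z_φ`
extends meromorphically to `{Re s > −2}` with only possible pole at `s = −1`, of
order at most `n`. -/
theorem local_zeta_meromorphic_continuation
    (n : ℕ) (hn : 1 ≤ n) (φ : (Fin n → ℝ) → ℂ)
    (hφ : ContDiff ℝ (⊤ : ℕ∞) φ) (hsupp : HasCompactSupport φ)
    (G : ℂ → ℂ)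
    (hG : ∀ s : ℂ, G s = (-1) ^ n *
      ∫ x in {x : Fin n → ℝ | 0 < ∏ i, x i},
        ((∏ i, x i : ℝ) : ℂ) ^ (s + 1) * mixedDeriv φ x) :
    DifferentiableOn ℂ G {s : ℂ | -2 < s.re} ∧
    ∀ s : ℂ, -1 < s.re →
      (s + 1) ^ n *
        (∫ x in {x : Fin n → ℝ | 0 < ∏ i, x i}, ((∏ i, x i : ℝ) : ℂ) ^ s * φ x)
        = G s := by
  have hψc : Continuous (mixedDeriv φ) :=
    (LZeta.foldr_smooth hφ hsupp (List.finRange n)).1.continuous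
  have hψs : HasCompactSupport (mixedDeriv φ) :=
    (LZeta.foldr_smooth hφ hsupp (List.finRange n)).2
  constructor
  · have hGeq : G = fun s => (-1:ℂ)^n *
        ∫ x in {x : Fin n → ℝ | 0 < ∏ i, x i},
          ((∏ i, x i : ℝ) : ℂ)^(s+1) * mixedDeriv φ x :=
      funext hG
    rw [hGeq]
    exact (LZeta.G_holo (mixedDeriv φ) hψc hψs).const_mul ((-1:ℂ)^n)
  · intro s hs
    obtain ⟨m, rfl⟩ : ∃ m, n = m + 1 := ⟨n - 1, by omega⟩
    rw [hG s]
    exact LZeta.final_identity hφ hsupp hs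
end

section
/- For every smooth compactly supported function φ: ℝⁿ → ℂ, the limit of (λ+1)ⁿ · Z_φ(λ) as λ → −1 with Re λ > −1 exists and equals 2^{n−1} φ(0). In particular, if φ(0) ≠ 0 then the meromorphic continuation of Z_φ has a pole of order exactly n at λ = −1; that is, the distribution (x₁⋯xₙ)_+^λ has a pole of order n at λ = −1, with leading Laurent coefficient u_{−n} = 2^{n−1} δ(x₁)⋯δ(xₙ). -/
set_option maxHeartbeats 1000000

open MeasureTheory Filter Set

namespace LaurentDelta

noncomputable section


def O (n : ℕ) : Set (Fin n → ℝ) := Set.univ.pi fun _ => Set.Ioi (0:ℝ)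

lemma mem_O {n : ℕ} {x : Fin n → ℝ} : x ∈ O n ↔ ∀ i, 0 < x i := by simp [O]

lemma measurableSet_O (n : ℕ) : MeasurableSet (O n) :=
  MeasurableSet.univ_pi fun _ => measurableSet_Ioi

def pd {n : ℕ} (i : Fin n) (f : (Fin n → ℝ) → ℂ) : (Fin n → ℝ) → ℂ :=
  fun x => -(fderiv ℝ f x (Pi.single i 1))

lemma pd_contDiff {n : ℕ} (i : Fin n) {f : (Fin n → ℝ) → ℂ} (hf : ContDiff ℝ (⊤ : ℕ∞) f) :
    ContDiff ℝ (⊤ : ℕ∞) (pd i f) :=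
  ((hf.fderiv_right (by simp)).clm_apply contDiff_const).neg

lemma pd_supp {n : ℕ} (i : Fin n) {f : (Fin n → ℝ) → ℂ} (hf : HasCompactSupport f) :
    HasCompactSupport (pd i f) :=
  (hf.fderiv ℝ).comp_left (g := fun L : (Fin n → ℝ) →L[ℝ] ℂ => -(L (Pi.single i 1))) (by simp)

def Dl {n : ℕ} (l : List (Fin n)) (f : (Fin n → ℝ) → ℂ) : (Fin n → ℝ) → ℂ :=
  l.foldl (fun g i => pd i g) f

@[simp] lemma Dl_nil {n : ℕ} (f : (Fin n → ℝ) → ℂ) : Dl [] f = f := rfl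
@[simp] lemma Dl_cons {n : ℕ} (i : Fin n) (l : List (Fin n)) (f : (Fin n → ℝ) → ℂ) :
    Dl (i :: l) f = Dl l (pd i f) := rfl

lemma Dl_append {n : ℕ} (l₁ l₂ : List (Fin n)) (f : (Fin n → ℝ) → ℂ) :
    Dl (l₁ ++ l₂) f = Dl l₂ (Dl l₁ f) := by
  simp [Dl, List.foldl_append]

lemma Dl_contDiff {n : ℕ} (l : List (Fin n)) {f : (Fin n → ℝ) → ℂ} (hf : ContDiff ℝ (⊤ : ℕ∞) f) :
    ContDiff ℝ (⊤ : ℕ∞) (Dl l f) := by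
  induction l generalizing f with
  | nil => exact hf
  | cons i l ih => exact ih (pd_contDiff i hf)

lemma Dl_supp {n : ℕ} (l : List (Fin n)) {f : (Fin n → ℝ) → ℂ} (hf : HasCompactSupport f) :
    HasCompactSupport (Dl l f) := by
  induction l generalizing f with
  | nil => exact hf
  | cons i l ih => exact ih (pd_supp i hf)


lemma norm_bound' {α : Type*} [TopologicalSpace α] {E : Type*} [NormedAddCommGroup E]
    {f : α → E} (hf : Continuous f) (hc : HasCompactSupport f) :
    ∃ C : ℝ, 0 ≤ C ∧ ∀ x, ‖f x‖ ≤ C := by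
  obtain ⟨C, hC⟩ := (hc.isCompact.image hf.norm).bddAbove
  refine ⟨max C 0, le_max_right _ _, fun x => ?_⟩
  by_cases hx : x ∈ tsupport f
  · exact le_trans (hC ⟨x, hx, rfl⟩) (le_max_left _ _)
  · simp [image_eq_zero_of_notMem_tsupport hx]

lemma eventually_zero_atTop {E : Type*} [NormedAddCommGroup E] {g : ℝ → E}
    (hgc : HasCompactSupport g) : ∀ᶠ t in atTop, g t = 0 := by
  obtain ⟨R, hR⟩ := hgc.isCompact.isBounded.subset_closedBall 0
  filter_upwards [eventually_ge_atTop (R + 1)] with t ht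
  by_contra h
  have h1 : t ∈ tsupport g := subset_tsupport g h
  have h2 := hR h1
  rw [Metric.mem_closedBall, dist_zero_right, Real.norm_eq_abs] at h2
  have := le_abs_self t
  linarith

lemma radius_bound {n : ℕ} {f : (Fin n → ℝ) → ℂ} (hc : HasCompactSupport f) :
    ∃ R : ℝ, 1 ≤ R ∧ ∀ x, f x ≠ 0 → ∀ i, x i ≤ R := by
  obtain ⟨R, hR⟩ := hc.isCompact.isBounded.subset_closedBall 0
  refine ⟨max R 1, le_max_right _ _, fun x hx i => ?_⟩
  have hxs : x ∈ tsupport f := subset_tsupport f hx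
  have := hR hxs
  rw [Metric.mem_closedBall, dist_zero_right] at this
  calc x i ≤ |x i| := le_abs_self _
    _ ≤ ‖x‖ := by simpa using norm_le_pi_norm x i
    _ ≤ max R 1 := le_trans this (le_max_left _ _)

lemma contOn_prod_cpow {n : ℕ} (w : Fin n → ℂ) :
    ContinuousOn (fun x : Fin n → ℝ => ∏ i, ((x i : ℂ) ^ w i)) (O n) := by
  intro x hx
  refine ContinuousAt.continuousWithinAt ?_
  refine tendsto_finset_prod _ fun i _ => ?_
  refine ContinuousAt.cpow ?_ continuousAt_const ?_
  · exact Complex.continuous_ofReal.continuousAt.comp (continuous_apply i).continuousAt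
  · left
    simpa using (mem_O.1 hx i)

lemma aesm_orthant {n : ℕ} (w : Fin n → ℂ) {f : (Fin n → ℝ) → ℂ} (hf : Continuous f) :
    AEStronglyMeasurable (fun x => (∏ i, ((x i : ℂ) ^ w i)) * f x)
      (volume.restrict (O n)) :=
  (((contOn_prod_cpow w).mul hf.continuousOn).aestronglyMeasurable (measurableSet_O n))

lemma integrableOn_orthant {n : ℕ} (w : Fin n → ℂ) (hw : ∀ j, -1 < (w j).re)
    {f : (Fin n → ℝ) → ℂ} (hf : Continuous f) (hc : HasCompactSupport f) :
    IntegrableOn (fun x => (∏ i, ((x i : ℂ) ^ w i)) * f x) (O n) := by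
  obtain ⟨C, hC0, hC⟩ := norm_bound' hf hc
  obtain ⟨R, hR1, hR⟩ := radius_bound hc
  set g : Fin n → ℝ → ℝ := fun i => (Set.Ioc (0:ℝ) R).indicator (fun t => t ^ (w i).re) with hg
  have hgint : ∀ i, Integrable (g i) := by
    intro i
    refine (IntegrableOn.integrable_indicator ?_ measurableSet_Ioc)
    have := intervalIntegral.intervalIntegrable_rpow' (a := 0) (b := R) (hw i)
    rw [intervalIntegrable_iff, uIoc_of_le (by linarith)] at this
    exact this
  have hgnn : ∀ i (t : ℝ), 0 ≤ g i t := by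
    intro i t
    refine Set.indicator_apply_nonneg fun ht => ?_
    exact Real.rpow_nonneg (le_of_lt ht.1) _
  have hGint : Integrable (fun x : Fin n → ℝ => C * ∏ i, g i (x i)) :=
    (Integrable.fintype_prod (f := g) hgint).const_mul C
  refine Integrable.mono hGint.integrableOn (aesm_orthant w hf) ?_
  refine (ae_restrict_iff' (measurableSet_O n)).2 (Filter.Eventually.of_forall fun x hx => ?_)
  have hOx := mem_O.1 hx
  have normG : ‖C * ∏ i, g i (x i)‖ = C * ∏ i, g i (x i) := by
    rw [Real.norm_eq_abs, abs_of_nonneg (mul_nonneg hC0 (Finset.prod_nonneg fun i _ => hgnn i _))]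
  rw [normG, norm_mul, norm_prod]
  by_cases hfx : f x = 0
  · simp only [hfx, norm_zero, mul_zero]
    exact mul_nonneg hC0 (Finset.prod_nonneg fun i _ => hgnn i _)
  · have hmem : ∀ i, x i ∈ Set.Ioc (0:ℝ) R := fun i => ⟨hOx i, hR x hfx i⟩
    have heq : ∀ i, ‖(x i : ℂ) ^ w i‖ = g i (x i) := by
      intro i
      rw [hg]
      simp only [Set.indicator_of_mem (hmem i)]
      rw [Complex.norm_cpow_eq_rpow_re_of_pos (hOx i)]
    rw [Finset.prod_congr rfl fun i _ => heq i]
    calc (∏ i, g i (x i)) * ‖f x‖ ≤ (∏ i, g i (x i)) * C := by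
          exact mul_le_mul_of_nonneg_left (hC x) (Finset.prod_nonneg fun i _ => hgnn i _)
      _ = C * ∏ i, g i (x i) := mul_comm _ _

def ins {n : ℕ} (i : Fin (n+1)) (t : ℝ) (y : Fin n → ℝ) : Fin (n+1) → ℝ :=
  Fin.insertNth i t y

@[simp] lemma ins_same {n : ℕ} (i : Fin (n+1)) (t : ℝ) (y : Fin n → ℝ) :
    ins i t y i = t := by simp [ins]

@[simp] lemma ins_succAbove {n : ℕ} (i : Fin (n+1)) (t : ℝ) (y : Fin n → ℝ) (k : Fin n) :
    ins i t y (i.succAbove k) = y k := by simp [ins]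

lemma continuous_ins {n : ℕ} (i : Fin (n+1)) (y : Fin n → ℝ) :
    Continuous (fun t : ℝ => ins i t y) := by
  refine continuous_pi fun j => ?_
  refine Fin.succAboveCases i ?_ ?_ j
  · simpa using continuous_id'
  · intro k
    simpa using continuous_const (y := y k)

lemma slice_supp {n : ℕ} (i : Fin (n+1)) {f : (Fin (n+1) → ℝ) → ℂ}
    (hc : HasCompactSupport f) (y : Fin n → ℝ) :
    HasCompactSupport (fun t : ℝ => f (ins i t y)) := by
  obtain ⟨R, hR⟩ := hc.isCompact.isBounded.subset_closedBall 0
  refine HasCompactSupport.intro (isCompact_Icc (a := -R) (b := R)) ?_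
  intro t ht
  by_contra h
  have hx : ins i t y ∈ tsupport f := subset_tsupport f h
  have h2 := hR hx
  rw [Metric.mem_closedBall, dist_zero_right] at h2
  have h3 : |t| ≤ ‖ins i t y‖ := by
    have := norm_le_pi_norm (ins i t y) i
    simpa using this
  have h4 : |t| ≤ R := le_trans h3 h2
  exact ht (Set.mem_Icc.2 (abs_le.1 h4))

lemma ins_eq_add_smul {n : ℕ} (i : Fin (n+1)) (y : Fin n → ℝ) (t : ℝ) :
    ins i t y = ins i 0 y + t • (Pi.single i 1 : Fin (n+1) → ℝ) := by
  funext j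
  refine Fin.succAboveCases i ?_ ?_ j
  · simp
  · intro k
    simp [Pi.single_eq_of_ne (Fin.succAbove_ne i k)]

lemma hasDerivAt_ins {n : ℕ} (i : Fin (n+1)) (y : Fin n → ℝ) (t : ℝ) :
    HasDerivAt (fun t : ℝ => ins i t y) (Pi.single i 1) t := by
  have h : HasDerivAt (fun t : ℝ => ins i 0 y + t • (Pi.single i 1 : Fin (n+1) → ℝ))
      ((1:ℝ) • (Pi.single i 1 : Fin (n+1) → ℝ)) t := ((hasDerivAt_id t).smul_const _).const_add _
  rw [one_smul] at h
  refine h.congr_of_eventuallyEq (Filter.Eventually.of_forall fun u => ?_)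
  exact ins_eq_add_smul i y u

lemma hasDerivAt_slice {n : ℕ} (i : Fin (n+1)) {f : (Fin (n+1) → ℝ) → ℂ}
    (hf : Differentiable ℝ f) (y : Fin n → ℝ) (t : ℝ) :
    HasDerivAt (fun t : ℝ => f (ins i t y))
      (fderiv ℝ f (ins i t y) (Pi.single i 1)) t :=
  ((hf (ins i t y)).hasFDerivAt).comp_hasDerivAt t (hasDerivAt_ins i y t)


lemma fubini_orthant {n : ℕ} (i : Fin (n+1)) {H : (Fin (n+1) → ℝ) → ℂ}
    (hH : IntegrableOn H (O (n+1))) :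
    ∫ x in O (n+1), H x = ∫ y in O n, ∫ t in Set.Ioi (0:ℝ), H (ins i t y) := by
  set e := MeasurableEquiv.piFinSuccAbove (fun _ : Fin (n+1) => ℝ) i with he
  have mp : MeasurePreserving e volume
      ((volume : Measure ℝ).prod (volume : Measure (Fin n → ℝ))) := by
    have := measurePreserving_piFinSuccAbove (fun _ : Fin (n+1) => (volume : Measure ℝ)) i
    simpa [← volume_pi, he] using this
  have hpre : e ⁻¹' (Set.Ioi (0:ℝ) ×ˢ O n) = O (n+1) := by
    ext x
    simp only [Set.mem_preimage, Set.mem_prod, mem_O, Set.mem_Ioi]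
    rw [MeasurableEquiv.piFinSuccAbove_apply]
    rw [Fin.forall_iff_succAbove i]
    simp [Fin.insertNthEquiv, Fin.removeNth]
  have hsymm : ∀ (t : ℝ) (y : Fin n → ℝ), e.symm (t, y) = ins i t y := by
    intro t y
    simp [he, ins, MeasurableEquiv.piFinSuccAbove_symm_apply, Fin.insertNthEquiv]
  have hcomp : ∀ x, (H ∘ e.symm) (e x) = H x := by
    intro x; simp
  have hint : Integrable (H ∘ e.symm)
      (((volume : Measure ℝ).restrict (Set.Ioi 0)).prod
        ((volume : Measure (Fin n → ℝ)).restrict (O n))) := by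
    rw [Measure.prod_restrict]
    have mp2 := mp.restrict_preimage (s := Set.Ioi (0:ℝ) ×ˢ O n)
      (measurableSet_Ioi.prod (measurableSet_O n))
    refine (mp2.integrable_comp_emb e.measurableEmbedding).1 ?_
    rw [hpre]
    refine hH.congr_fun ?_ (measurableSet_O (n+1))
    intro x _; exact (hcomp x).symm
  calc ∫ x in O (n+1), H x
      = ∫ x in e ⁻¹' (Set.Ioi (0:ℝ) ×ˢ O n), (H ∘ e.symm) (e x) := by
        rw [hpre]
        exact (setIntegral_congr_fun (measurableSet_O (n+1)) fun x _ => (hcomp x).symm)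
    _ = ∫ z in Set.Ioi (0:ℝ) ×ˢ O n, (H ∘ e.symm) z
          ∂((volume : Measure ℝ).prod (volume : Measure (Fin n → ℝ))) :=
        mp.setIntegral_preimage_emb e.measurableEmbedding _ _
    _ = ∫ z, (H ∘ e.symm) z
          ∂(((volume : Measure ℝ).restrict (Set.Ioi 0)).prod
            ((volume : Measure (Fin n → ℝ)).restrict (O n))) := by
        rw [Measure.prod_restrict]
    _ = ∫ y in O n, ∫ t in Set.Ioi (0:ℝ), (H ∘ e.symm) (t, y) := integral_prod_symm _ hint
    _ = ∫ y in O n, ∫ t in Set.Ioi (0:ℝ), H (ins i t y) := by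
        simp_rw [Function.comp_apply, hsymm]

lemma integrableOn_Ioi_cpow_mul {s : ℂ} (hs : -1 < s.re) {g : ℝ → ℂ}
    (hgcont : Continuous g) (hgc : HasCompactSupport g) :
    IntegrableOn (fun t : ℝ => (t:ℂ) ^ s * g t) (Set.Ioi (0:ℝ)) := by
  obtain ⟨C, hC0, hC⟩ := norm_bound' hgcont hgc
  obtain ⟨R, hR⟩ := hgc.isCompact.isBounded.subset_closedBall 0
  have hR0 : 0 ≤ max R 0 := le_max_right _ _
  set b : ℝ → ℝ := (Set.Ioc (0:ℝ) (max R 0)).indicator (fun t => C * t ^ s.re) with hb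
  have hbint : Integrable b := by
    refine IntegrableOn.integrable_indicator ?_ measurableSet_Ioc
    refine Integrable.const_mul ?_ C
    have := intervalIntegral.intervalIntegrable_rpow' (a := 0) (b := max R 0) hs
    rw [intervalIntegrable_iff, uIoc_of_le hR0] at this
    exact this
  have hbnn : ∀ t, 0 ≤ b t := by
    intro t
    refine Set.indicator_apply_nonneg fun ht => ?_
    exact mul_nonneg hC0 (Real.rpow_nonneg ht.1.le _)
  refine Integrable.mono hbint.integrableOn ?_ ?_
  · refine ContinuousOn.aestronglyMeasurable ?_ measurableSet_Ioi
    refine ContinuousOn.mul ?_ hgcont.continuousOn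
    intro t ht
    refine ContinuousAt.continuousWithinAt ?_
    refine ContinuousAt.cpow ?_ continuousAt_const ?_
    · exact Complex.continuous_ofReal.continuousAt
    · left; simpa using (ht : (0:ℝ) < t)
  · refine (ae_restrict_iff' measurableSet_Ioi).2 (Filter.Eventually.of_forall fun t ht => ?_)
    have ht0 : (0:ℝ) < t := ht
    rw [Real.norm_eq_abs, abs_of_nonneg (hbnn t), norm_mul]
    by_cases hgt : g t = 0
    · simp [hgt, hbnn t]
    · have htR : t ∈ Set.Ioc (0:ℝ) (max R 0) := by
        have h1 : t ∈ tsupport g := subset_tsupport g hgt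
        have h2 := hR h1
        rw [Metric.mem_closedBall, dist_zero_right, Real.norm_eq_abs] at h2
        exact ⟨ht0, le_trans (le_abs_self t) (le_trans h2 (le_max_left _ _))⟩
      rw [hb]
      simp only [Set.indicator_of_mem htR]
      rw [Complex.norm_cpow_eq_rpow_re_of_pos ht0]
      rw [mul_comm C _]
      exact mul_le_mul_of_nonneg_left (hC t) (Real.rpow_nonneg ht0.le _)

lemma one_dim_ibp {s : ℂ} (hs : -1 < s.re) {g g' : ℝ → ℂ}
    (hderiv : ∀ t, HasDerivAt g (g' t) t)
    (hgcont : Continuous g) (hg'cont : Continuous g')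
    (hgc : HasCompactSupport g) (hg'c : HasCompactSupport g') :
    (s + 1) * ∫ t in Set.Ioi (0:ℝ), (t:ℂ) ^ s * g t
      = -∫ t in Set.Ioi (0:ℝ), (t:ℂ) ^ (s+1) * g' t := by
  have hs1re : 0 < (s + 1).re := by
    rw [Complex.add_re, Complex.one_re]; linarith
  have hs1 : s + 1 ≠ 0 := by
    intro h; rw [h] at hs1re; simp at hs1re
  have hsne : s ≠ -1 := by
    intro h; rw [h] at hs; simp at hs
  obtain ⟨C, hC0, hC⟩ := norm_bound' hgcont hgc
  set F : ℝ → ℂ := fun t : ℝ => (t:ℂ) ^ (s+1) * g t with hFdef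
  set F' : ℝ → ℂ := fun t : ℝ => (s+1) * ((t:ℂ) ^ s * g t) + (t:ℂ) ^ (s+1) * g' t with hF'def
  have hF0 : F 0 = 0 := by
    rw [hFdef]
    simp only [Complex.ofReal_zero]
    rw [Complex.zero_cpow hs1, zero_mul]
  have hDF : ∀ t ∈ Set.Ioi (0:ℝ), HasDerivAt F (F' t) t := by
    intro t ht
    have ht0 : (0:ℝ) < t := ht
    have h1 : HasDerivAt (fun y : ℝ => ((y:ℂ) ^ (s+1) / (s+1))) ((t:ℂ) ^ s) t :=
      hasDerivAt_ofReal_cpow_const' (ne_of_gt ht0) hsne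
    have h2 : HasDerivAt (fun y : ℝ => (y:ℂ) ^ (s+1)) ((s+1) * (t:ℂ) ^ s) t := by
      have h3 := h1.const_mul (s+1)
      have heq : (fun y : ℝ => (s+1) * ((y:ℂ) ^ (s+1) / (s+1))) = fun y : ℝ => (y:ℂ) ^ (s+1) :=
        funext fun y => mul_div_cancel₀ _ hs1
      rwa [heq] at h3
    have h4 := h2.mul (hderiv t)
    have h5 : F' t = (s + 1) * (t:ℂ) ^ s * g t + (t:ℂ) ^ (s + 1) * g' t := by
      rw [hF'def]; ring
    rw [h5]; exact h4
  have hbnd : ∀ t ∈ Set.Ici (0:ℝ), ‖F t‖ ≤ C * t ^ (s+1).re := by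
    intro t ht
    rcases eq_or_lt_of_le (Set.mem_Ici.1 ht) with h | h
    · rw [← h, hF0, norm_zero, Real.zero_rpow (ne_of_gt hs1re), mul_zero]
    · rw [hFdef]
      simp only [norm_mul, Complex.norm_cpow_eq_rpow_re_of_pos h]
      rw [mul_comm C _]
      exact mul_le_mul_of_nonneg_left (hC t) (Real.rpow_nonneg h.le _)
  have hcont : ContinuousWithinAt F (Set.Ici (0:ℝ)) 0 := by
    have hlim : Tendsto (fun t : ℝ => C * t ^ (s+1).re) (nhds 0) (nhds 0) := by
      have h5 : Tendsto (fun t : ℝ => t ^ (s+1).re) (nhds 0) (nhds ((0:ℝ) ^ (s+1).re)) :=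
        Real.continuousAt_rpow_const 0 ((s+1).re) (Or.inr hs1re.le)
      have h6 := h5.const_mul C
      rw [Real.zero_rpow (ne_of_gt hs1re), mul_zero] at h6
      exact h6
    have h6 : Tendsto F (nhdsWithin 0 (Set.Ici (0:ℝ))) (nhds 0) :=
      squeeze_zero_norm' (eventually_nhdsWithin_of_forall hbnd) (hlim.mono_left nhdsWithin_le_nhds)
    show Tendsto F (nhdsWithin 0 (Set.Ici (0:ℝ))) (nhds (F 0))
    rw [hF0]
    exact h6
  have htop : Tendsto F atTop (nhds 0) := by
    refine Tendsto.congr' ?_ tendsto_const_nhds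
    filter_upwards [eventually_zero_atTop hgc] with t ht
    rw [hFdef]
    simp [ht]
  have hint1 : IntegrableOn (fun t : ℝ => (t:ℂ) ^ s * g t) (Set.Ioi (0:ℝ)) :=
    integrableOn_Ioi_cpow_mul hs hgcont hgc
  have hint2 : IntegrableOn (fun t : ℝ => (t:ℂ) ^ (s+1) * g' t) (Set.Ioi (0:ℝ)) :=
    integrableOn_Ioi_cpow_mul (by linarith) hg'cont hg'c
  have hintF' : IntegrableOn F' (Set.Ioi (0:ℝ)) := (hint1.const_mul (s+1)).add hint2
  have key := integral_Ioi_of_hasDerivAt_of_tendsto hcont hDF hintF' htop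
  rw [hF0, zero_sub, neg_zero] at key
  rw [hF'def] at key
  rw [integral_add (hint1.const_mul (s+1)) hint2] at key
  rw [integral_const_mul] at key
  have := eq_neg_of_add_eq_zero_left key
  exact this

lemma coord_ibp {n : ℕ} (i : Fin (n+1)) (w : Fin (n+1) → ℂ) (hw : ∀ j, -1 < (w j).re)
    {f : (Fin (n+1) → ℝ) → ℂ} (hf : ContDiff ℝ (⊤ : ℕ∞) f) (hc : HasCompactSupport f) :
    (w i + 1) * ∫ x in O (n+1), (∏ j, ((x j : ℂ) ^ w j)) * f x
      = ∫ x in O (n+1), (∏ j, ((x j : ℂ) ^ (w j + (Pi.single i 1 : Fin (n+1) → ℂ) j))) * pd i f x := by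
  have hfc := hf.continuous
  have hdiff : Differentiable ℝ f := hf.differentiable (by simp)
  have hpdcont : Continuous (pd i f) := (pd_contDiff i hf).continuous
  have hpdsupp := pd_supp i hc
  have hw' : ∀ j, -1 < (w j + (Pi.single i 1 : Fin (n+1) → ℂ) j).re := by
    intro j
    rcases eq_or_ne j i with rfl | hj
    · rw [Pi.single_eq_same, Complex.add_re, Complex.one_re]
      have := hw j; linarith
    · rw [Pi.single_eq_of_ne hj, add_zero]; exact hw j
  have hint1 := integrableOn_orthant w hw hfc hc
  have hint2 := integrableOn_orthant (fun j => w j + (Pi.single i 1 : Fin (n+1) → ℂ) j) hw' hpdcont hpdsupp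
  rw [fubini_orthant i hint1, fubini_orthant i hint2, ← integral_const_mul]
  refine integral_congr_ae (Filter.Eventually.of_forall fun y => ?_)
  set P : ℂ := ∏ k : Fin n, ((y k : ℂ) ^ (w (i.succAbove k))) with hP
  have hprod : ∀ t : ℝ, (∏ j, ((ins i t y j : ℂ) ^ w j)) = (t:ℂ) ^ (w i) * P := by
    intro t
    rw [Fin.prod_univ_succAbove (fun j => ((ins i t y j : ℂ) ^ w j)) i]
    simp only [ins_same, ins_succAbove, hP]
  have hprod' : ∀ t : ℝ,
      (∏ j, ((ins i t y j : ℂ) ^ (w j + (Pi.single i 1 : Fin (n+1) → ℂ) j))) = (t:ℂ) ^ (w i + 1) * P := by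
    intro t
    rw [Fin.prod_univ_succAbove (fun j => ((ins i t y j : ℂ) ^ (w j + (Pi.single i 1 : Fin (n+1) → ℂ) j))) i]
    simp only [ins_same, ins_succAbove, Pi.single_eq_same]
    congr 1
    refine Finset.prod_congr rfl fun k _ => ?_
    rw [Pi.single_eq_of_ne (Fin.succAbove_ne i k), add_zero]
  have hgderiv : ∀ t : ℝ, HasDerivAt (fun t : ℝ => f (ins i t y))
      (-(pd i f (ins i t y))) t := by
    intro t
    have h := hasDerivAt_slice i hdiff y t
    simpa only [pd, neg_neg] using h
  have ibp := one_dim_ibp (hw i) hgderiv (hfc.comp (continuous_ins i y))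
    ((hpdcont.comp (continuous_ins i y)).neg) (slice_supp i hc y)
    ((slice_supp i hpdsupp y).comp_left (g := Neg.neg) neg_zero)
  have hflip : -∫ t in Set.Ioi (0:ℝ), (t:ℂ) ^ (w i + 1) * -(pd i f (ins i t y))
      = ∫ t in Set.Ioi (0:ℝ), (t:ℂ) ^ (w i + 1) * pd i f (ins i t y) := by
    simp_rw [mul_neg]
    rw [integral_neg, neg_neg]
  simp_rw [hprod, hprod']
  have e1 : ∀ t : ℝ, ((t:ℂ) ^ (w i) * P) * f (ins i t y)
      = P * ((t:ℂ) ^ (w i) * f (ins i t y)) := fun t => by ring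
  have e2 : ∀ t : ℝ, ((t:ℂ) ^ (w i + 1) * P) * pd i f (ins i t y)
      = P * ((t:ℂ) ^ (w i + 1) * pd i f (ins i t y)) := fun t => by ring
  simp_rw [e1, e2]
  rw [integral_const_mul, integral_const_mul, mul_left_comm, ibp, hflip]

def consL (n : ℕ) : (Fin n → ℝ) →L[ℝ] (Fin (n+1) → ℝ) :=
  ContinuousLinearMap.pi (fun j => Fin.cases 0 (fun k => ContinuousLinearMap.proj k) j)

@[simp] lemma consL_apply {n : ℕ} (y : Fin n → ℝ) : consL n y = ins 0 0 y := by
  funext j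
  refine Fin.cases ?_ ?_ j
  · simp [consL, ins, Fin.insertNth_zero']
  · intro k
    simp [consL, ins, Fin.insertNth_zero']

lemma ins0_decomp {n : ℕ} (c : ℝ) :
    (fun y : Fin n → ℝ => ins 0 c y) = fun y => ins 0 c 0 + consL n y := by
  funext y
  funext j
  refine Fin.cases ?_ ?_ j <;>
    simp [ins, Fin.insertNth_zero', Pi.single_eq_of_ne, Fin.succ_ne_zero]

lemma hasFDerivAt_ins0 {n : ℕ} (c : ℝ) (y : Fin n → ℝ) :
    HasFDerivAt (fun y : Fin n → ℝ => ins 0 c y) (consL n) y := by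
  rw [ins0_decomp]
  exact ((consL n).hasFDerivAt).const_add _

lemma contDiff_ins0 {n : ℕ} (c : ℝ) : ContDiff ℝ (⊤ : ℕ∞) (fun y : Fin n → ℝ => ins 0 c y) := by
  rw [ins0_decomp]
  exact contDiff_const.add (consL n).contDiff

lemma consL_single {n : ℕ} (i : Fin n) :
    consL n (Pi.single i 1) = (Pi.single i.succ 1 : Fin (n+1) → ℝ) := by
  rw [consL_apply]
  funext j
  refine Fin.cases ?_ ?_ j
  · rw [Pi.single_eq_of_ne (Fin.succ_ne_zero i).symm]
    simp [ins, Fin.insertNth_zero']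
  · intro k
    simp only [ins, Fin.insertNth_zero', Fin.cons_succ]
    rcases eq_or_ne k i with rfl | hk
    · rw [Pi.single_eq_same, Pi.single_eq_same]
    · rw [Pi.single_eq_of_ne hk, Pi.single_eq_of_ne ((Fin.succ_injective n).ne hk)]

lemma pd_comp_ins0 {n : ℕ} (i : Fin n) {Φ : (Fin (n+1) → ℝ) → ℂ}
    (hΦ : Differentiable ℝ Φ) (c : ℝ) (y : Fin n → ℝ) :
    pd i.succ Φ (ins 0 c y) = pd i (fun y => Φ (ins 0 c y)) y := by
  have hcomp : HasFDerivAt (fun y : Fin n → ℝ => Φ (ins 0 c y))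
      ((fderiv ℝ Φ (ins 0 c y)).comp (consL n)) y :=
    (hΦ (ins 0 c y)).hasFDerivAt.comp y (hasFDerivAt_ins0 c y)
  simp only [pd]
  rw [hcomp.fderiv]
  simp only [ContinuousLinearMap.coe_comp', Function.comp_apply]
  rw [consL_single]

lemma Dl_map_succ {n : ℕ} (l : List (Fin n)) {Φ : (Fin (n+1) → ℝ) → ℂ}
    (hΦ : ContDiff ℝ (⊤ : ℕ∞) Φ) (c : ℝ) (y : Fin n → ℝ) :
    Dl (l.map Fin.succ) Φ (ins 0 c y) = Dl l (fun y => Φ (ins 0 c y)) y := by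
  induction l generalizing Φ with
  | nil => rfl
  | cons i l ih =>
    rw [List.map_cons, Dl_cons, Dl_cons]
    rw [ih (pd_contDiff _ hΦ)]
    have : (fun y : Fin n → ℝ => pd i.succ Φ (ins 0 c y))
        = pd i (fun y => Φ (ins 0 c y)) :=
      funext fun z => pd_comp_ins0 i (hΦ.differentiable (by simp)) c z
    rw [this]

lemma ftc_slice {n : ℕ} {G : (Fin (n+1) → ℝ) → ℂ} (hG : ContDiff ℝ (⊤ : ℕ∞) G)
    (hc : HasCompactSupport G) (y : Fin n → ℝ) :
    ∫ t in Set.Ioi (0:ℝ), pd 0 G (ins 0 t y) = G (ins 0 0 y) := by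
  have hder : ∀ t : ℝ, HasDerivAt (fun t : ℝ => -G (ins 0 t y)) (pd 0 G (ins 0 t y)) t := by
    intro t
    have h := (hasDerivAt_slice 0 (hG.differentiable (by simp)) y t).neg
    exact h
  have hcont : ContinuousWithinAt (fun t : ℝ => -G (ins 0 t y)) (Set.Ici (0:ℝ)) 0 :=
    ((hG.continuous.comp (continuous_ins 0 y)).neg).continuousWithinAt
  have hint : IntegrableOn (fun t : ℝ => pd 0 G (ins 0 t y)) (Set.Ioi (0:ℝ)) := by
    refine (Continuous.integrable_of_hasCompactSupport ?_ ?_).integrableOn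
    · exact (pd_contDiff 0 hG).continuous.comp (continuous_ins 0 y)
    · exact slice_supp 0 (pd_supp 0 hc) y
  have htop : Tendsto (fun t : ℝ => -G (ins 0 t y)) atTop (nhds 0) := by
    refine Tendsto.congr' ?_ tendsto_const_nhds
    filter_upwards [eventually_zero_atTop (slice_supp 0 hc y)] with t ht
    have ht' : G (ins 0 t y) = 0 := ht
    simp [ht']
  have key := integral_Ioi_of_hasDerivAt_of_tendsto hcont (fun t _ => hder t) hint htop
  rw [key]
  simp

def fullList : (n : ℕ) → List (Fin n)
  | 0 => []
  | (n+1) => ((fullList n).map Fin.succ) ++ [0]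

lemma fullList_zero : fullList 0 = [] := rfl

lemma fullList_succ (n : ℕ) : fullList (n+1) = ((fullList n).map Fin.succ) ++ [0] := rfl

lemma fullList_nodup (n : ℕ) : (fullList n).Nodup := by
  induction n with
  | zero => simp [fullList]
  | succ n ih =>
    rw [fullList_succ, List.nodup_append]
    refine ⟨ih.map (Fin.succ_injective n), List.nodup_singleton _, ?_⟩
    intro a ha b hb
    rw [List.mem_singleton] at hb
    obtain ⟨k, _, rfl⟩ := List.mem_map.1 ha
    rw [hb]; exact Fin.succ_ne_zero k

lemma fullList_mem (n : ℕ) (j : Fin n) : j ∈ fullList n := by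
  induction n with
  | zero => exact j.elim0
  | succ n ih =>
    rw [fullList_succ, List.mem_append]
    refine Fin.cases ?_ ?_ j
    · right; simp
    · intro k
      left
      exact List.mem_map.2 ⟨k, ih k, rfl⟩

lemma fullList_length (n : ℕ) : (fullList n).length = n := by
  induction n with
  | zero => rfl
  | succ n ih => rw [fullList_succ]; simp [ih]

lemma integral_Dl_fullList (n : ℕ) : ∀ {ψ : (Fin n → ℝ) → ℂ}, ContDiff ℝ (⊤ : ℕ∞) ψ →
    HasCompactSupport ψ → ∫ x in O n, Dl (fullList n) ψ x = ψ 0 := by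
  induction n with
  | zero =>
    intro ψ hψ hc
    have hO : O 0 = Set.univ := by
      ext x
      simp only [mem_O, Set.mem_univ, iff_true]
      exact fun i => i.elim0
    rw [hO, Measure.restrict_univ]
    rw [integral_unique]
    have hv : (volume : Measure (Fin 0 → ℝ)) Set.univ = 1 := by
      rw [volume_pi]
      simp
    rw [measureReal_def, hv]
    simp only [ENNReal.toReal_one, one_smul]
    rw [fullList_zero, Dl_nil]
    exact congrArg ψ (Subsingleton.elim _ _)
  | succ n ih =>
    intro ψ hψ hc
    have hD : Dl (fullList (n+1)) ψ = pd 0 (Dl ((fullList n).map Fin.succ) ψ) := by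
      rw [fullList_succ, Dl_append]
      rfl
    set G := Dl ((fullList n).map Fin.succ) ψ with hGdef
    have hGsm : ContDiff ℝ (⊤ : ℕ∞) G := Dl_contDiff _ hψ
    have hGc : HasCompactSupport G := Dl_supp _ hc
    have hint : IntegrableOn (pd 0 G) (O (n+1)) :=
      (Continuous.integrable_of_hasCompactSupport
        (pd_contDiff 0 hGsm).continuous (pd_supp 0 hGc)).integrableOn
    rw [hD, fubini_orthant 0 hint]
    have hψ0sm : ContDiff ℝ (⊤ : ℕ∞) (fun y : Fin n → ℝ => ψ (ins 0 0 y)) := hψ.comp (contDiff_ins0 0)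
    have hψ0c : HasCompactSupport (fun y : Fin n → ℝ => ψ (ins 0 0 y)) := by
      obtain ⟨R, hR⟩ := hc.isCompact.isBounded.subset_closedBall 0
      have hR0 : (0:ℝ) ≤ max R 0 := le_max_right _ _
      refine HasCompactSupport.intro (isCompact_closedBall (0 : Fin n → ℝ) (max R 0)) ?_
      intro y hy
      by_contra h
      have hx : ins 0 0 y ∈ tsupport ψ := subset_tsupport _ h
      have h2 := hR hx
      rw [Metric.mem_closedBall, dist_zero_right] at h2
      apply hy
      rw [Metric.mem_closedBall, dist_zero_right]
      refine le_trans ((pi_norm_le_iff_of_nonneg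
        (le_trans (norm_nonneg _) h2)).2 fun k => ?_) (le_max_left R 0)
      calc ‖y k‖ = ‖ins 0 0 y ((0 : Fin (n+1)).succAbove k)‖ := by rw [ins_succAbove]
        _ ≤ ‖ins 0 0 y‖ := norm_le_pi_norm _ _
        _ ≤ R := h2
    calc ∫ y in O n, ∫ t in Set.Ioi (0:ℝ), pd 0 G (ins 0 t y)
        = ∫ y in O n, Dl (fullList n) (fun y => ψ (ins 0 0 y)) y := by
          refine integral_congr_ae (Filter.Eventually.of_forall fun y => ?_)
          show (∫ t in Set.Ioi (0:ℝ), pd 0 G (ins 0 t y))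
            = Dl (fullList n) (fun y => ψ (ins 0 0 y)) y
          rw [ftc_slice hGsm hGc y, hGdef, Dl_map_succ (fullList n) hψ 0 y]
      _ = ψ (ins 0 0 0) := ih hψ0sm hψ0c
      _ = ψ 0 := by
          congr 1
          funext j
          refine Fin.cases ?_ ?_ j <;> simp [ins, Fin.insertNth_zero']

lemma iter_ibp {m : ℕ} (l : List (Fin m)) (hl : l.Nodup) (w v : Fin m → ℂ)
    (hw : ∀ j, -1 < (w j).re)
    (hv : ∀ j, v j = w j + if j ∈ l then (1:ℂ) else 0) {f : (Fin m → ℝ) → ℂ}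
    (hf : ContDiff ℝ (⊤ : ℕ∞) f) (hc : HasCompactSupport f) :
    (l.map (fun i => w i + 1)).prod * ∫ x in O m, (∏ j, ((x j : ℂ) ^ w j)) * f x
      = ∫ x in O m, (∏ j, ((x j : ℂ) ^ v j)) * Dl l f x := by
  induction l generalizing w v f with
  | nil =>
    have hvw : v = w := funext fun j => by simpa using hv j
    rw [hvw]
    simp only [List.map_nil, List.prod_nil, one_mul, Dl_nil]
  | cons i l ih =>
    obtain ⟨n, rfl⟩ : ∃ n, m = n + 1 := ⟨m - 1, (Nat.succ_pred_eq_of_pos i.pos).symm⟩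
    rw [List.nodup_cons] at hl
    set w' : Fin (n+1) → ℂ := fun j => w j + (Pi.single i 1 : Fin (n+1) → ℂ) j with hw'def
    have hw' : ∀ j, -1 < (w' j).re := by
      intro j
      show -1 < (w j + (Pi.single i 1 : Fin (n+1) → ℂ) j).re
      rcases eq_or_ne j i with rfl | hj
      · rw [Pi.single_eq_same, Complex.add_re, Complex.one_re]
        have := hw j; linarith
      · rw [Pi.single_eq_of_ne hj, add_zero]; exact hw j
    have hv' : ∀ j, v j = w' j + if j ∈ l then (1:ℂ) else 0 := by
      intro j
      show v j = (w j + (Pi.single i 1 : Fin (n+1) → ℂ) j) + if j ∈ l then (1:ℂ) else 0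
      rcases eq_or_ne j i with rfl | hj
      · rw [Pi.single_eq_same, hv j, if_pos List.mem_cons_self, if_neg hl.1, add_zero]
      · rw [Pi.single_eq_of_ne hj, add_zero, hv j]
        congr 1
        simp [List.mem_cons, hj]
    have step := coord_ibp i w hw hf hc
    have ihs := ih hl.2 w' v hw' hv' (pd_contDiff i hf) (pd_supp i hc)
    have hmap : (l.map fun i' => w' i' + 1) = l.map fun i' => w i' + 1 := by
      refine List.map_congr_left fun a ha => ?_
      have hai : a ≠ i := by rintro rfl; exact hl.1 ha
      show (w a + (Pi.single i 1 : Fin (n+1) → ℂ) a) + 1 = w a + 1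
      rw [Pi.single_eq_of_ne hai, add_zero]
    rw [hmap] at ihs
    have hstep' : (w i + 1) * ∫ x in O (n+1), (∏ j, ((x j : ℂ) ^ w j)) * f x
        = ∫ x in O (n+1), (∏ j, ((x j : ℂ) ^ w' j)) * pd i f x := step
    calc ((i :: l).map (fun i => w i + 1)).prod
          * ∫ x in O (n+1), (∏ j, ((x j : ℂ) ^ w j)) * f x
        = (l.map fun i' => w i' + 1).prod
            * ((w i + 1) * ∫ x in O (n+1), (∏ j, ((x j : ℂ) ^ w j)) * f x) := by
          rw [List.map_cons, List.prod_cons]; ring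
      _ = (l.map fun i' => w i' + 1).prod
            * ∫ x in O (n+1), (∏ j, ((x j : ℂ) ^ w' j)) * pd i f x := by rw [hstep']
      _ = ∫ x in O (n+1), (∏ j, ((x j : ℂ) ^ v j)) * Dl l (pd i f) x := ihs
      _ = ∫ x in O (n+1), (∏ j, ((x j : ℂ) ^ v j)) * Dl (i :: l) f x := rfl

lemma tendsto_J {n : ℕ} {χ : (Fin n → ℝ) → ℂ} (hχ : Continuous χ) (hc : HasCompactSupport χ) :
    Tendsto (fun s : ℂ => ∫ x in O n, (∏ i, ((x i : ℂ) ^ (s+1))) * χ x)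
      (nhdsWithin (-1) {s : ℂ | -1 < s.re}) (nhds (∫ x in O n, χ x)) := by
  obtain ⟨R, hR1, hRs⟩ := radius_bound hc
  have hR0 : (0:ℝ) < R := lt_of_lt_of_le one_pos hR1
  refine tendsto_integral_filter_of_dominated_convergence
    (fun x => R ^ n * ‖χ x‖) ?_ ?_ ?_ ?_
  · exact Filter.Eventually.of_forall fun s => aesm_orthant (fun _ => s + 1) hχ
  · have h2 : ∀ᶠ s : ℂ in nhdsWithin (-1) {s : ℂ | -1 < s.re}, s.re < 0 := by
      refine Filter.Eventually.filter_mono nhdsWithin_le_nhds ?_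
      have ho : IsOpen {s : ℂ | s.re < 0} := isOpen_lt Complex.continuous_re continuous_const
      have hm : (-1 : ℂ) ∈ {s : ℂ | s.re < 0} := by simp
      exact ho.eventually_mem hm
    filter_upwards [h2, eventually_mem_nhdsWithin] with s hs2 hs1
    refine (ae_restrict_iff' (measurableSet_O n)).2 (Filter.Eventually.of_forall fun x hx => ?_)
    have hOx := mem_O.1 hx
    have hsre : -1 < s.re := hs1
    have ha1 : 0 < (s+1).re := by rw [Complex.add_re, Complex.one_re]; linarith
    have ha2 : (s+1).re ≤ 1 := by rw [Complex.add_re, Complex.one_re]; linarith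
    rw [norm_mul, norm_prod]
    by_cases hfx : χ x = 0
    · rw [hfx]
      simp only [norm_zero, mul_zero]
      positivity
    · have hmem : ∀ i, x i ≤ R := hRs x hfx
      have hfac : ∀ i, ‖(x i : ℂ) ^ (s+1)‖ ≤ R := by
        intro i
        rw [Complex.norm_cpow_eq_rpow_re_of_pos (hOx i)]
        rcases le_or_gt (x i) 1 with h | h
        · exact le_trans (Real.rpow_le_one (hOx i).le h ha1.le) hR1
        · calc (x i) ^ (s+1).re ≤ (x i) ^ (1:ℝ) :=
                Real.rpow_le_rpow_of_exponent_le h.le ha2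
            _ = x i := Real.rpow_one _
            _ ≤ R := hmem i
      have hprodle : (∏ i, ‖(x i : ℂ) ^ (s+1)‖) ≤ R ^ n := by
        calc (∏ i, ‖(x i : ℂ) ^ (s+1)‖) ≤ ∏ _i : Fin n, R :=
              Finset.prod_le_prod (fun i _ => norm_nonneg _) (fun i _ => hfac i)
          _ = R ^ n := by rw [Finset.prod_const, Finset.card_univ, Fintype.card_fin]
      exact mul_le_mul_of_nonneg_right hprodle (norm_nonneg _)
  · exact ((hχ.integrable_of_hasCompactSupport hc).norm.const_mul (R ^ n)).restrict
  · refine (ae_restrict_iff' (measurableSet_O n)).2 (Filter.Eventually.of_forall fun x hx => ?_)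
    have hOx := mem_O.1 hx
    have hlim : Tendsto (fun s : ℂ => ∏ i, ((x i : ℂ) ^ (s+1)))
        (nhdsWithin (-1) {s : ℂ | -1 < s.re}) (nhds 1) := by
      have h1 : Tendsto (fun s : ℂ => ∏ i, ((x i : ℂ) ^ (s+1))) (nhds (-1))
          (nhds (∏ i : Fin n, ((x i : ℂ) ^ ((-1 : ℂ)+1)))) := by
        refine tendsto_finset_prod _ fun i _ => ?_
        have hbase : ((x i : ℝ) : ℂ) ≠ 0 := by
          simp only [ne_eq, Complex.ofReal_eq_zero]
          exact (hOx i).ne'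
        exact (continuousAt_const_cpow hbase).comp (continuousAt_id.add continuousAt_const)
      have : (∏ i : Fin n, ((x i : ℂ) ^ ((-1 : ℂ)+1))) = 1 := by
        simp
      rw [this] at h1
      exact h1.mono_left nhdsWithin_le_nhds
    have := hlim.mul (tendsto_const_nhds (x := χ x))
    rwa [one_mul] at this

lemma orthant_limit {n : ℕ} {ψ : (Fin n → ℝ) → ℂ} (hψ : ContDiff ℝ (⊤ : ℕ∞) ψ)
    (hc : HasCompactSupport ψ) :
    Tendsto (fun s : ℂ => (s+1) ^ n * ∫ x in O n, (∏ i, ((x i : ℂ) ^ s)) * ψ x)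
      (nhdsWithin (-1) {s : ℂ | -1 < s.re}) (nhds (ψ 0)) := by
  have hχc : Continuous (Dl (fullList n) ψ) := (Dl_contDiff _ hψ).continuous
  have hχs : HasCompactSupport (Dl (fullList n) ψ) := Dl_supp _ hc
  have h := tendsto_J hχc hχs
  rw [integral_Dl_fullList n hψ hc] at h
  refine Tendsto.congr' ?_ h
  filter_upwards [eventually_mem_nhdsWithin] with s hs
  have hsre : -1 < s.re := hs
  have key := iter_ibp (fullList n) (fullList_nodup n) (fun _ => s) (fun _ => s + 1)
    (fun _ => hsre) (fun j => by rw [if_pos (fullList_mem n j)]) hψ hc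
  have hprod : ((fullList n).map (fun _ => s + 1)).prod = (s+1) ^ n := by
    rw [List.map_const', List.prod_replicate, fullList_length]
  rw [hprod] at key
  exact key.symm

def sg {n : ℕ} (ε : Fin n → Bool) : Fin n → ℝ := fun i => if ε i then -1 else 1

def flip {n : ℕ} (ε : Fin n → Bool) : (Fin n → ℝ) → (Fin n → ℝ) := fun x i => sg ε i * x i

lemma sg_sq {n : ℕ} (ε : Fin n → Bool) (i : Fin n) : sg ε i * sg ε i = 1 := by
  by_cases h : ε i <;> simp [sg, h]

lemma flip_invol {n : ℕ} (ε : Fin n → Bool) (x : Fin n → ℝ) : flip ε (flip ε x) = x := by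
  funext i
  show sg ε i * (sg ε i * x i) = x i
  rw [← mul_assoc, sg_sq, one_mul]

lemma flip_zero {n : ℕ} (ε : Fin n → Bool) : flip ε 0 = 0 := by
  funext i
  show sg ε i * 0 = 0
  rw [mul_zero]

lemma continuous_flip {n : ℕ} (ε : Fin n → Bool) : Continuous (flip ε) :=
  continuous_pi fun i => continuous_const.mul (continuous_apply i)

lemma contDiff_flip {n : ℕ} (ε : Fin n → Bool) : ContDiff ℝ (⊤ : ℕ∞) (flip ε) := by
  rw [contDiff_pi]
  intro i
  exact contDiff_const.mul
    ((ContinuousLinearMap.proj i : (Fin n → ℝ) →L[ℝ] ℝ).contDiff)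

def flipHomeo {n : ℕ} (ε : Fin n → Bool) : Homeomorph (Fin n → ℝ) (Fin n → ℝ) where
  toFun := flip ε
  invFun := flip ε
  left_inv := flip_invol ε
  right_inv := flip_invol ε
  continuous_toFun := continuous_flip ε
  continuous_invFun := continuous_flip ε

lemma measurableEmbedding_flip {n : ℕ} (ε : Fin n → Bool) : MeasurableEmbedding (flip ε) :=
  (flipHomeo ε).toMeasurableEquiv.measurableEmbedding

lemma measurePreserving_flip {n : ℕ} (ε : Fin n → Bool) :
    MeasurePreserving (flip ε) (volume : Measure (Fin n → ℝ)) volume := by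
  have hcomp : ∀ i : Fin n, MeasurePreserving (fun t : ℝ => sg ε i * t) volume volume := by
    intro i
    by_cases h : ε i
    · have : (fun t : ℝ => sg ε i * t) = Neg.neg := by
        funext t
        simp [sg, h]
      rw [this]
      exact Measure.measurePreserving_neg _
    · have : (fun t : ℝ => sg ε i * t) = id := by
        funext t
        simp [sg, h]
      rw [this]
      exact MeasurePreserving.id _
  have := measurePreserving_pi (fun _ : Fin n => (volume : Measure ℝ))
    (fun _ : Fin n => (volume : Measure ℝ)) hcomp
  rw [← volume_pi] at this
  exact this

lemma sg_prod_sq {n : ℕ} (ε : Fin n → Bool) : (∏ i, sg ε i) * (∏ i, sg ε i) = 1 := by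
  rw [← Finset.prod_mul_distrib]
  rw [Finset.prod_congr rfl fun i _ => sg_sq ε i]
  exact Finset.prod_const_one

lemma sg_prod_eq_or {n : ℕ} (ε : Fin n → Bool) : (∏ i, sg ε i) = 1 ∨ (∏ i, sg ε i) = -1 :=
  mul_self_eq_one_iff.1 (sg_prod_sq ε)

lemma prod_eq_prod_sg_mul {n : ℕ} (ε : Fin n → Bool) (x : Fin n → ℝ) :
    ∏ i, x i = (∏ i, sg ε i) * ∏ i, (sg ε i * x i) := by
  rw [← Finset.prod_mul_distrib]
  refine Finset.prod_congr rfl fun i _ => ?_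
  rw [← mul_assoc, sg_sq, one_mul]

open scoped Classical in
noncomputable def sgS (n : ℕ) : Finset (Fin n → Bool) :=
  Finset.univ.filter (fun ε => (∏ i, sg ε i) = 1)

lemma mem_sgS {n : ℕ} {ε : Fin n → Bool} : ε ∈ sgS n ↔ (∏ i, sg ε i) = 1 := by
  classical
  simp [sgS]

lemma card_sgS {n : ℕ} (hn : 1 ≤ n) : (sgS n).card = 2 ^ (n - 1) := by
  classical
  set i0 : Fin n := ⟨0, hn⟩
  set upd : (Fin n → Bool) → (Fin n → Bool) := fun ε => Function.update ε i0 (!ε i0) with hupd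
  have hsgupd : ∀ (ε : Fin n → Bool) (b : Bool),
      (fun i => sg (Function.update ε i0 b) i)
        = Function.update (sg ε) i0 (if b then (-1:ℝ) else 1) := by
    intro ε b
    funext j
    rcases eq_or_ne j i0 with rfl | hj
    · rw [Function.update_self]
      simp [sg]
    · rw [Function.update_of_ne hj]
      simp [sg, Function.update_of_ne hj]
  have hprodupd : ∀ ε : Fin n → Bool, (∏ i, sg (upd ε) i) = -(∏ i, sg ε i) := by
    intro ε
    have h1 : (∏ i, sg (upd ε) i) = ∏ i, Function.update (sg ε) i0 (if !ε i0 then (-1:ℝ) else 1) i := by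
      rw [← hsgupd ε (!ε i0)]
    rw [h1, Finset.prod_update_of_mem (Finset.mem_univ i0)]
    rw [← Finset.mul_prod_erase Finset.univ (sg ε) (Finset.mem_univ i0)]
    rw [Finset.sdiff_singleton_eq_erase]
    have : (if !ε i0 then (-1:ℝ) else 1) = -(sg ε i0) := by
      by_cases h : ε i0 <;> simp [sg, h]
    rw [this]
    ring
  have hcard : (Finset.univ.filter (fun ε : Fin n → Bool => (∏ i, sg ε i) = 1)).card
      = (Finset.univ.filter (fun ε : Fin n → Bool => ¬ ((∏ i, sg ε i) = 1))).card := by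
    refine Finset.card_bij' (fun ε _ => upd ε) (fun ε _ => upd ε) ?_ ?_ ?_ ?_
    · intro ε hε
      rw [Finset.mem_filter] at hε ⊢
      refine ⟨Finset.mem_univ _, ?_⟩
      rw [hprodupd, hε.2]
      norm_num
    · intro ε hε
      rw [Finset.mem_filter] at hε ⊢
      refine ⟨Finset.mem_univ _, ?_⟩
      rcases sg_prod_eq_or ε with h | h
      · exact absurd h hε.2
      · rw [hprodupd, h]; norm_num
    · intro ε _
      funext j
      rcases eq_or_ne j i0 with rfl | hj
      · simp [hupd, Function.update_self]
      · simp [hupd, Function.update_of_ne hj]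
    · intro ε _
      funext j
      rcases eq_or_ne j i0 with rfl | hj
      · simp [hupd, Function.update_self]
      · simp [hupd, Function.update_of_ne hj]
  have htot := Finset.card_filter_add_card_filter_not
    (s := (Finset.univ : Finset (Fin n → Bool)))
    (p := fun ε => (∏ i, sg ε i) = 1)
  have huniv : (Finset.univ : Finset (Fin n → Bool)).card = 2 ^ n := by
    rw [Finset.card_univ, Fintype.card_fun, Fintype.card_bool, Fintype.card_fin]
  have hS : (sgS n).card
      = (Finset.univ.filter (fun ε : Fin n → Bool => (∏ i, sg ε i) = 1)).card := by
    congr 1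
  have hpow : 2 ^ n = 2 ^ (n - 1) * 2 := by
    rw [← pow_succ, Nat.sub_add_cancel hn]
  omega

lemma prod_cpow_of_pos {n : ℕ} {x : Fin n → ℝ} (hx : ∀ i, 0 < x i) (s : ℂ) :
    ((∏ i, x i : ℝ) : ℂ) ^ s = ∏ i, ((x i : ℂ) ^ s) := by
  classical
  have key : ∀ t : Finset (Fin n),
      ((∏ i ∈ t, x i : ℝ) : ℂ) ^ s = ∏ i ∈ t, ((x i : ℂ) ^ s) := by
    intro t
    induction t using Finset.induction with
    | empty => simp
    | insert a t ha ih =>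
      rw [Finset.prod_insert ha, Finset.prod_insert ha, Complex.ofReal_mul,
        Complex.mul_cpow_ofReal_nonneg (hx a).le
          (Finset.prod_nonneg fun i _ => (hx i).le), ih]
  exact key Finset.univ

lemma volume_hyperplane {n : ℕ} (i : Fin n) :
    (volume : Measure (Fin n → ℝ)) {x | x i = 0} = 0 := by
  rw [volume_pi]
  exact Measure.pi_hyperplane _ i 0

lemma integral_posset_eq_sum {n : ℕ} {φ : (Fin n → ℝ) → ℂ} (hφc : Continuous φ)
    (hφs : HasCompactSupport φ) {s : ℂ} (hs : -1 < s.re) :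
    ∫ x in {x : Fin n → ℝ | 0 < ∏ i, x i}, ((∏ i, x i : ℝ) : ℂ) ^ s * φ x
      = ∑ ε ∈ sgS n, ∫ x in O n, (∏ i, ((x i : ℂ) ^ s)) * φ (flip ε x) := by
  classical
  set F : (Fin n → ℝ) → ℂ := fun x => ((∏ i, x i : ℝ) : ℂ) ^ s * φ x with hF
  have hmeasOε : ∀ ε : Fin n → Bool, MeasurableSet (flip ε ⁻¹' O n) :=
    fun ε => (measurableSet_O n).preimage (continuous_flip ε).measurable
  have hsub : ∀ ε ∈ sgS n, flip ε ⁻¹' O n ⊆ {x : Fin n → ℝ | 0 < ∏ i, x i} := by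
    intro ε hε x hx
    have hx' : ∀ i, 0 < sg ε i * x i := fun i => mem_O.1 hx i
    have hpos : (0:ℝ) < ∏ i, (sg ε i * x i) := Finset.prod_pos fun i _ => hx' i
    show 0 < ∏ i, x i
    rw [prod_eq_prod_sg_mul ε x, mem_sgS.1 hε, one_mul]
    exact hpos
  have haeeq : {x : Fin n → ℝ | 0 < ∏ i, x i}
      =ᵐ[volume] ⋃ ε ∈ sgS n, flip ε ⁻¹' O n := by
    rw [MeasureTheory.ae_eq_set]
    constructor
    · refine measure_mono_null ?_
        (measure_iUnion_null fun i => volume_hyperplane (n := n) i)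
      rintro x ⟨hxs, hxt⟩
      by_contra hxu
      have hne : ∀ i, x i ≠ 0 := by
        intro i hi
        exact hxu (Set.mem_iUnion.2 ⟨i, hi⟩)
      set ε : Fin n → Bool := fun i => decide (x i < 0) with hε
      have hflip : ∀ i, 0 < sg ε i * x i := by
        intro i
        rcases lt_or_gt_of_ne (hne i) with h | h
        · have hb : sg ε i = -1 := by simp [sg, hε, h]
          rw [hb]; linarith
        · have hb : sg ε i = 1 := by simp [sg, hε, not_lt.2 h.le]
          rw [hb]; linarith
      have hmem : x ∈ flip ε ⁻¹' O n := by
        rw [Set.mem_preimage]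
        exact mem_O.2 hflip
      have hxs' : (0:ℝ) < ∏ i, x i := hxs
      have hεS : ε ∈ sgS n := by
        rw [mem_sgS]
        rcases sg_prod_eq_or ε with h | h
        · exact h
        · exfalso
          have hpos : (0:ℝ) < ∏ i, (sg ε i * x i) := Finset.prod_pos fun i _ => hflip i
          have hid := prod_eq_prod_sg_mul ε x
          rw [h, neg_one_mul] at hid
          rw [hid] at hxs'
          linarith
      exact hxt (Set.mem_iUnion₂.2 ⟨ε, hεS, hmem⟩)
    · rw [Set.diff_eq_empty.mpr (Set.iUnion₂_subset hsub)]
      exact measure_empty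
  have hEqOnO : ∀ ε ∈ sgS n, ∀ y ∈ O n,
      F (flip ε y) = (∏ i, ((y i : ℂ) ^ s)) * φ (flip ε y) := by
    intro ε hε y hy
    have hOy := mem_O.1 hy
    show ((∏ i, flip ε y i : ℝ) : ℂ) ^ s * φ (flip ε y) = _
    have hp : (∏ i, flip ε y i) = ∏ i, y i := by
      have hid := prod_eq_prod_sg_mul ε y
      rw [mem_sgS.1 hε, one_mul] at hid
      exact hid.symm
    rw [hp, prod_cpow_of_pos hOy s]
  have hintε : ∀ ε ∈ sgS n, IntegrableOn F (flip ε ⁻¹' O n) := by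
    intro ε hε
    have hsupp2 : HasCompactSupport (fun x => φ (flip ε x)) :=
      hφs.comp_homeomorph (flipHomeo ε)
    have hbase : IntegrableOn (fun x => (∏ i, ((x i : ℂ) ^ s)) * φ (flip ε x)) (O n) :=
      integrableOn_orthant (fun _ => s) (fun _ => hs) (hφc.comp (continuous_flip ε)) hsupp2
    have hFO : IntegrableOn (F ∘ flip ε) (O n) := by
      refine hbase.congr_fun (fun y hy => ?_) (measurableSet_O n)
      exact (hEqOnO ε hε y hy).symm
    have mp2 := (measurePreserving_flip ε).restrict_preimage (measurableSet_O n)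
    have h3 : Integrable ((F ∘ flip ε) ∘ flip ε)
        (volume.restrict (flip ε ⁻¹' O n)) :=
      (mp2.integrable_comp_emb (measurableEmbedding_flip ε)).2 hFO
    refine h3.congr (Filter.Eventually.of_forall fun x => ?_)
    show (F ∘ flip ε) (flip ε x) = F x
    rw [Function.comp_apply, flip_invol]
  have hdisj : Set.Pairwise (↑(sgS n)) (Function.onFun Disjoint fun ε => flip ε ⁻¹' O n) := by
    intro ε _ ε' _ hne
    have : Disjoint (flip ε ⁻¹' O n) (flip ε' ⁻¹' O n) := by
      refine Set.disjoint_left.2 fun x hx hx' => ?_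
      obtain ⟨i, hi⟩ : ∃ i, ε i ≠ ε' i := by
        by_contra h; push_neg at h; exact hne (funext h)
      have h1 : 0 < sg ε i * x i := mem_O.1 hx i
      have h2 : 0 < sg ε' i * x i := mem_O.1 hx' i
      cases hb : ε i <;> cases hb' : ε' i
      · exact hi (hb.trans hb'.symm)
      · rw [show sg ε i = 1 from by simp [sg, hb]] at h1
        rw [show sg ε' i = -1 from by simp [sg, hb']] at h2
        linarith
      · rw [show sg ε i = -1 from by simp [sg, hb]] at h1
        rw [show sg ε' i = 1 from by simp [sg, hb']] at h2
        linarith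
      · exact hi (hb.trans hb'.symm)
    exact this
  rw [setIntegral_congr_set haeeq]
  rw [integral_biUnion_finset (sgS n) (fun ε _ => hmeasOε ε) hdisj hintε]
  refine Finset.sum_congr rfl fun ε hε => ?_
  have hinv : ∀ x ∈ flip ε ⁻¹' O n, F x = (F ∘ flip ε) (flip ε x) := by
    intro x _
    rw [Function.comp_apply, flip_invol]
  rw [setIntegral_congr_fun (hmeasOε ε) hinv]
  rw [(measurePreserving_flip ε).setIntegral_preimage_emb (measurableEmbedding_flip ε) _ _]
  exact setIntegral_congr_fun (measurableSet_O n) fun y hy => hEqOnO ε hε y hy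

theorem main_statement
    (n : ℕ) (hn : 1 ≤ n) (φ : (Fin n → ℝ) → ℂ)
    (hφ : ContDiff ℝ (⊤ : ℕ∞) φ) (hsupp : HasCompactSupport φ) :
    Filter.Tendsto
      (fun s : ℂ => (s + 1) ^ n *
        ∫ x in {x : Fin n → ℝ | 0 < ∏ i, x i}, ((∏ i, x i : ℝ) : ℂ) ^ s * φ x)
      (nhdsWithin (-1) {s : ℂ | -1 < s.re})
      (nhds ((2 : ℂ) ^ (n - 1) * φ 0)) := by
  classical
  have hφc := hφ.continuous
  have hterm : ∀ ε ∈ sgS n,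
      Tendsto (fun s : ℂ => (s + 1) ^ n *
          ∫ x in O n, (∏ i, ((x i : ℂ) ^ s)) * φ (flip ε x))
        (nhdsWithin (-1) {s : ℂ | -1 < s.re}) (nhds (φ 0)) := by
    intro ε _
    have h := orthant_limit (ψ := fun x => φ (flip ε x)) (hφ.comp (contDiff_flip ε))
      (hsupp.comp_homeomorph (flipHomeo ε))
    simp only [flip_zero] at h
    exact h
  have hsum := tendsto_finset_sum (sgS n) hterm
  have hval : (∑ _ε ∈ sgS n, φ 0) = (2:ℂ) ^ (n - 1) * φ 0 := by
    rw [Finset.sum_const, card_sgS hn, nsmul_eq_mul]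
    push_cast
    ring
  rw [hval] at hsum
  refine Tendsto.congr' ?_ hsum
  filter_upwards [eventually_mem_nhdsWithin] with s hs
  have hsre : -1 < s.re := hs
  rw [← Finset.mul_sum, ← integral_posset_eq_sum hφc hsupp hsre]

end

end LaurentDelta

/-- For every smooth compactly supported `φ : ℝⁿ → ℂ`, the limit of
`(s+1)ⁿ Z_φ(s)` as `s → −1` with `Re s > −1` exists and equals `2^{n−1} φ(0)`.
In particular the distribution `(x₁⋯xₙ)_+^s` has a pole of order (exactly, when
`φ(0) ≠ 0`) `n` at `s = −1`, with leading Laurent coefficient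
`u_{−n} = 2^{n−1} δ(x₁)⋯δ(xₙ)`. -/
theorem leading_laurent_coefficient_is_delta
    (n : ℕ) (hn : 1 ≤ n) (φ : (Fin n → ℝ) → ℂ)
    (hφ : ContDiff ℝ (⊤ : ℕ∞) φ) (hsupp : HasCompactSupport φ) :
    Filter.Tendsto
      (fun s : ℂ => (s + 1) ^ n *
        ∫ x in {x : Fin n → ℝ | 0 < ∏ i, x i}, ((∏ i, x i : ℝ) : ℂ) ^ s * φ x)
      (nhdsWithin (-1) {s : ℂ | -1 < s.re})
      (nhds ((2 : ℂ) ^ (n - 1) * φ 0)) :=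
  LaurentDelta.main_statement n hn φ hφ hsupp
end

section
/- Let 0 ≤ k ≤ n−1, let 1 ≤ j₁ < j₂ < ⋯ < j_{k+1} ≤ n, let ψ: ℝⁿ → ℂ be smooth with compact support, and set φ(x) = x_{j₁} x_{j₂} ⋯ x_{j_{k+1}} ψ(x). Then the function λ ↦ (λ+1)^{n−k−1} Z_φ(λ), defined for Re λ > −1, extends holomorphically to a neighborhood of λ = −1; that is, the meromorphic continuation of Z_φ has a pole of order at most n−k−1 at λ = −1. (Equivalently, the monomial x_{j₁}⋯x_{j_{k+1}} annihilates the Laurent coefficients u_{−n}, u_{−n+1}, …, u_{−n+k} of (x₁⋯xₙ)_+^λ at λ = −1.) -/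
open MeasureTheory Set Filter Complex

noncomputable section

namespace LocalZetaAux

/-! ### 1D integrability of `|t|^σ` on a box -/

lemma integrableOn_abs_rpow_Icc {σ : ℝ} (hσ : -1 < σ) (R : ℝ) (hR : 0 ≤ R) :
    IntegrableOn (fun t : ℝ => |t| ^ σ) (Icc (-R) R) := by
  have hpos : IntegrableOn (fun t : ℝ => |t| ^ σ) (Icc 0 R) := by
    have h1 : IntegrableOn (fun t : ℝ => t ^ σ) (Icc 0 R) := by
      rw [integrableOn_Icc_iff_integrableOn_Ioc]
      exact (intervalIntegrable_iff_integrableOn_Ioc_of_le hR).mp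
        (intervalIntegral.intervalIntegrable_rpow' hσ)
    refine h1.congr_fun (fun t ht => ?_) measurableSet_Icc
    rw [_root_.abs_of_nonneg ht.1]
  have hneg : IntegrableOn (fun t : ℝ => |t| ^ σ) (Icc (-R) 0) := by
    have hset : Icc (-R) (0:ℝ) = Neg.neg ⁻¹' (Icc 0 R) := by
      ext t; simp only [mem_Icc, mem_preimage]; constructor <;> intro h <;>
        constructor <;> linarith [h.1, h.2]
    have hfun : (fun t : ℝ => |t| ^ σ) = (fun t : ℝ => |t| ^ σ) ∘ Neg.neg := by
      funext t; simp [Function.comp, abs_neg]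
    rw [hset, hfun]
    rw [(Measure.measurePreserving_neg (volume : Measure ℝ)).integrableOn_comp_preimage
      (Homeomorph.neg ℝ).measurableEmbedding]
    exact hpos
  have : Icc (-R) R = Icc (-R) 0 ∪ Icc 0 R := by
    rw [Icc_union_Icc_eq_Icc (by linarith) hR]
  rw [this]
  exact hneg.union hpos

/-- `|t|^σ * 1_{[-R,R]}` is integrable on ℝ for `σ > -1`. -/
lemma integrable_wfun {σ : ℝ} (hσ : -1 < σ) (R : ℝ) (hR : 0 ≤ R) :
    Integrable (fun t : ℝ => |t| ^ σ * (Icc (-R) R).indicator (fun _ => (1:ℝ)) t) := by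
  have h1 : (fun t : ℝ => |t| ^ σ * (Icc (-R) R).indicator (fun _ => (1:ℝ)) t)
      = (Icc (-R) R).indicator (fun t => |t| ^ σ) := by
    funext t
    by_cases ht : t ∈ Icc (-R) R <;>
      simp [indicator_of_mem, indicator_of_notMem, ht]
  rw [h1, integrable_indicator_iff measurableSet_Icc]
  exact integrableOn_abs_rpow_Icc hσ R hR

/-! ### basic facts about the region -/

lemma continuous_prodfun {n : ℕ} : Continuous (fun x : Fin n → ℝ => ∏ i, x i) :=
  continuous_finset_prod _ (fun i _ => continuous_apply i)

lemma measurableSet_A {n : ℕ} : MeasurableSet {x : Fin n → ℝ | 0 < ∏ i, x i} :=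
  measurableSet_lt measurable_const continuous_prodfun.measurable

/-! ### Integrability of the main kernels -/

/-- For `Re w > -1` and `g` continuous with compact support,
`x ↦ (∏ xᵢ)^w * g x` is integrable on the region `{∏ xᵢ > 0}`. -/
lemma integrableOn_kernel {n : ℕ} (w : ℂ) (hw : -1 < w.re)
    (g : (Fin n → ℝ) → ℂ) (hgc : Continuous g) (hgs : HasCompactSupport g) :
    IntegrableOn (fun x => ((∏ i, x i : ℝ) : ℂ) ^ w * g x)
      {x : Fin n → ℝ | 0 < ∏ i, x i} := by
  obtain ⟨R₀, hR₀⟩ := hgs.isBounded.subset_closedBall 0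
  set R : ℝ := |R₀| with hRdef
  have hR : 0 ≤ R := abs_nonneg _
  have hgz : ∀ x : Fin n → ℝ, ¬ ‖x‖ ≤ R → g x = 0 := by
    intro x hx
    apply image_eq_zero_of_notMem_tsupport
    intro hmem
    exact hx (le_trans (mem_closedBall_zero_iff.mp
      (hR₀ hmem)) (le_abs_self R₀))
  obtain ⟨C, hC⟩ := hgc.bounded_above_of_compact_support hgs
  have hC0 : 0 ≤ C := le_trans (norm_nonneg _) (hC (fun _ => 0))
  set w' : ℝ → ℝ := fun t => |t| ^ w.re * (Icc (-R) R).indicator (fun _ => (1:ℝ)) t with hw'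
  have hw'nn : ∀ t, 0 ≤ w' t := by
    intro t
    apply mul_nonneg (Real.rpow_nonneg (abs_nonneg _) _)
    by_cases h : t ∈ Icc (-R) R <;> simp [h]
  have hbd : Integrable (fun x : Fin n → ℝ => C * ∏ i, w' (x i)) :=
    (Integrable.fintype_prod (f := fun _ : Fin n => w') (fun _ => integrable_wfun hw R hR)).const_mul C
  apply Integrable.mono' (hbd.restrict)
  · apply ContinuousOn.aestronglyMeasurable _ measurableSet_A
    intro x hx
    have hx' : (0:ℝ) < ∏ i, x i := hx
    refine ContinuousAt.continuousWithinAt (ContinuousAt.mul ?_ hgc.continuousAt)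
    exact ContinuousAt.cpow (Complex.continuous_ofReal.comp continuous_prodfun).continuousAt
      continuousAt_const (Complex.ofReal_mem_slitPlane.2 hx')
  · rw [ae_restrict_iff' measurableSet_A]
    refine ae_of_all _ (fun x hx => ?_)
    have hx' : (0:ℝ) < ∏ i, x i := hx
    by_cases hxR : ‖x‖ ≤ R
    · have hxi : ∀ i, |x i| ≤ R := by
        intro i
        calc |x i| = ‖x i‖ := (Real.norm_eq_abs _).symm
        _ ≤ ‖x‖ := norm_le_pi_norm x i
        _ ≤ R := hxR
      have hprod : ∀ i, w' (x i) = |x i| ^ w.re := by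
        intro i
        have : x i ∈ Icc (-R) R := abs_le.mp (hxi i)
        simp [hw', indicator_of_mem this]
      have habs : (∏ i, |x i|) = ∏ i, x i := by
        rw [← Finset.abs_prod, abs_of_pos hx']
      have : (∏ i, w' (x i)) = (∏ i, x i) ^ w.re := by
        simp_rw [hprod]
        rw [Real.finset_prod_rpow _ _ (fun i _ => abs_nonneg _), habs]
      rw [norm_mul]
      calc ‖((∏ i, x i : ℝ) : ℂ) ^ w‖ * ‖g x‖
          = (∏ i, x i) ^ w.re * ‖g x‖ := by
            rw [Complex.norm_cpow_eq_rpow_re_of_pos hx']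
        _ ≤ (∏ i, x i) ^ w.re * C := by
            exact mul_le_mul_of_nonneg_left (hC x) (Real.rpow_nonneg hx'.le _)
        _ = C * ∏ i, w' (x i) := by rw [this]; ring
    · rw [hgz x hxR, mul_zero, norm_zero]
      exact mul_nonneg hC0 (Finset.prod_nonneg (fun i _ => hw'nn _))

/-- 1D version on `Ioi 0`. -/
lemma integrableOn_kernel_Ioi (w : ℂ) (hw : -1 < w.re)
    (h : ℝ → ℂ) (hc : Continuous h) (hs : HasCompactSupport h) :
    IntegrableOn (fun t : ℝ => (t : ℂ) ^ w * h t) (Ioi 0) := by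
  obtain ⟨R₀, hR₀⟩ := hs.isBounded.subset_closedBall 0
  set R : ℝ := |R₀| with hRdef
  have hR : 0 ≤ R := abs_nonneg _
  have hgz : ∀ t : ℝ, ¬ |t| ≤ R → h t = 0 := by
    intro t ht
    apply image_eq_zero_of_notMem_tsupport
    intro hmem
    exact ht (le_trans (by simpa using mem_closedBall_zero_iff.mp (hR₀ hmem))
      (le_abs_self R₀))
  obtain ⟨C, hC⟩ := hc.bounded_above_of_compact_support hs
  have hC0 : 0 ≤ C := le_trans (norm_nonneg _) (hC 0)
  apply Integrable.mono' (((integrable_wfun hw R hR).const_mul C).restrict)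
  · apply ContinuousOn.aestronglyMeasurable _ measurableSet_Ioi
    intro t ht
    have ht' : (0:ℝ) < t := ht
    refine ContinuousAt.continuousWithinAt (ContinuousAt.mul ?_ hc.continuousAt)
    exact ContinuousAt.cpow Complex.continuous_ofReal.continuousAt
      continuousAt_const (Complex.ofReal_mem_slitPlane.2 ht')
  · rw [ae_restrict_iff' measurableSet_Ioi]
    refine ae_of_all _ (fun t ht => ?_)
    have ht' : (0:ℝ) < t := ht
    by_cases htR : |t| ≤ R
    · have htmem : t ∈ Icc (-R) R := abs_le.mp htR
      rw [norm_mul]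
      calc ‖(t : ℂ) ^ w‖ * ‖h t‖ = t ^ w.re * ‖h t‖ := by
            rw [Complex.norm_cpow_eq_rpow_re_of_pos ht']
        _ ≤ t ^ w.re * C := mul_le_mul_of_nonneg_left (hC t) (Real.rpow_nonneg ht'.le _)
        _ = C * (|t| ^ w.re * (Icc (-R) R).indicator (fun _ => (1:ℝ)) t) := by
            rw [indicator_of_mem htmem, abs_of_pos ht']; ring
    · rw [hgz t htR, mul_zero, norm_zero]
      apply mul_nonneg hC0
      apply mul_nonneg (Real.rpow_nonneg (abs_nonneg _) _)
      by_cases hmem : t ∈ Icc (-R) R <;> simp [hmem]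

/-! ### 1D integration by parts on `Ioi 0` -/

lemma ioiIBP (s : ℂ) (hs : -1 < s.re) (γ γ' : ℝ → ℂ)
    (hd : ∀ t, HasDerivAt γ (γ' t) t) (hc' : Continuous γ')
    (hsupp : HasCompactSupport γ) :
    (s+1) * ∫ t in Ioi (0:ℝ), (t : ℂ) ^ s * γ t
      = - ∫ t in Ioi (0:ℝ), (t : ℂ) ^ (s+1) * γ' t := by
  have hs1 : s + 1 ≠ 0 := by
    intro h
    have : (s+1).re = 0 := by rw [h]; simp
    simp only [Complex.add_re, Complex.one_re] at this
    linarith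
  have hsne : s ≠ -1 := by
    intro h; exact hs1 (by rw [h]; ring)
  have hre1 : (0:ℝ) < s.re + 1 := by linarith
  have hcγ : Continuous γ := by
    rw [continuous_iff_continuousAt]; exact fun t => (hd t).continuousAt
  have hsupp' : HasCompactSupport γ' := by
    have : γ' = deriv γ := by funext t; exact ((hd t).deriv).symm
    rw [this]; exact hsupp.deriv
  set f : ℝ → ℂ := fun t => (t : ℂ) ^ (s+1) / (s+1) * γ t with hf
  set f' : ℝ → ℂ := fun t => (t : ℂ) ^ s * γ t + (t : ℂ) ^ (s+1) / (s+1) * γ' t with hf'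
  have hcont : ContinuousWithinAt f (Ici 0) 0 := by
    apply ContinuousWithinAt.mul _ hcγ.continuousAt.continuousWithinAt
    apply ContinuousWithinAt.div_const
    have h0 : ((0:ℝ):ℂ) ^ (s+1) = 0 := by
      rw [Complex.ofReal_zero, Complex.zero_cpow hs1]
    show Tendsto (fun t : ℝ => ((t:ℝ):ℂ) ^ (s+1)) (nhdsWithin 0 (Ici 0))
      (nhds (((0:ℝ):ℂ) ^ (s+1)))
    rw [h0]
    have hre : (s+1).re = s.re + 1 := by simp
    refine squeeze_zero_norm' (a := fun t : ℝ => t ^ (s.re + 1)) ?_ ?_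
    · filter_upwards [self_mem_nhdsWithin] with t (ht : t ∈ Ici (0:ℝ))
      rw [
        Complex.norm_cpow_eq_rpow_re_of_nonneg ht (by rw [hre]; linarith), hre]
    · have : ContinuousAt (fun t : ℝ => t ^ (s.re + 1)) 0 :=
        Real.continuousAt_rpow_const 0 _ (Or.inr hre1.le)
      have h0 : (0:ℝ) ^ (s.re + 1) = 0 := Real.zero_rpow hre1.ne'
      have := this.tendsto
      rw [h0] at this
      exact this.mono_left nhdsWithin_le_nhds
  have hderiv : ∀ t ∈ Ioi (0:ℝ), HasDerivAt f (f' t) t := by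
    intro t ht
    have h1 : HasDerivAt (fun y : ℝ => (y:ℂ) ^ (s+1) / (s+1)) ((t:ℂ) ^ s) t :=
      hasDerivAt_ofReal_cpow_const' (ne_of_gt ht) hsne
    simpa [f, f', Pi.mul_def] using h1.mul (hd t)
  have hint1 : IntegrableOn (fun t : ℝ => (t:ℂ) ^ s * γ t) (Ioi 0) :=
    integrableOn_kernel_Ioi s hs γ hcγ hsupp
  have hint2 : IntegrableOn (fun t : ℝ => (t:ℂ) ^ (s+1) * γ' t) (Ioi 0) :=
    integrableOn_kernel_Ioi (s+1) (by simp; linarith) γ' hc' hsupp'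
  have hint2' : IntegrableOn (fun t : ℝ => (t:ℂ) ^ (s+1) / (s+1) * γ' t) (Ioi 0) := by
    have : (fun t : ℝ => (t:ℂ) ^ (s+1) / (s+1) * γ' t)
        = fun t : ℝ => (s+1)⁻¹ * ((t:ℂ) ^ (s+1) * γ' t) := by
      funext t; ring
    rw [this]
    exact hint2.const_mul _
  have hf'int : IntegrableOn f' (Ioi 0) := hint1.add hint2'
  have htend : Tendsto f atTop (nhds 0) := by
    obtain ⟨R₀, hR₀⟩ := hsupp.isBounded.subset_closedBall 0
    apply Tendsto.congr' (f₁ := fun _ => (0:ℂ)) _ tendsto_const_nhds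
    filter_upwards [eventually_gt_atTop (|R₀|)] with t ht
    have : γ t = 0 := by
      apply image_eq_zero_of_notMem_tsupport
      intro hmem
      have := mem_closedBall_zero_iff.mp (hR₀ hmem)
      rw [Real.norm_eq_abs] at this
      have h2 : |t| ≤ |R₀| := le_trans this (le_abs_self _)
      have h3 : t ≤ |t| := le_abs_self t
      linarith
    simp [f, this]
  have key := integral_Ioi_of_hasDerivAt_of_tendsto hcont hderiv hf'int htend
  have hf0 : f 0 = 0 := by
    simp [f, Complex.ofReal_zero, Complex.zero_cpow hs1]
  rw [hf0, sub_zero] at key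
  have hsplit : ∫ t in Ioi (0:ℝ), f' t
      = (∫ t in Ioi (0:ℝ), (t:ℂ) ^ s * γ t)
        + ∫ t in Ioi (0:ℝ), (t:ℂ) ^ (s+1) / (s+1) * γ' t :=
    integral_add hint1 hint2'
  rw [hsplit] at key
  have h2 : (s+1) * ∫ t in Ioi (0:ℝ), (t:ℂ) ^ (s+1) / (s+1) * γ' t
      = ∫ t in Ioi (0:ℝ), (t:ℂ) ^ (s+1) * γ' t := by
    rw [← integral_const_mul]
    congr 1
    funext t
    field_simp
  have : (s+1) * ((∫ t in Ioi (0:ℝ), (t:ℂ) ^ s * γ t)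
      + ∫ t in Ioi (0:ℝ), (t:ℂ) ^ (s+1) / (s+1) * γ' t) = 0 := by
    rw [key]; ring
  rw [mul_add, h2] at this
  linear_combination this

/-- version with a sign/slope `Q`, over the set `{t | 0 < Q * t}`. -/
lemma oneD_signed (s : ℂ) (hs : -1 < s.re) (Q : ℝ) (γ γ' : ℝ → ℂ)
    (hd : ∀ t, HasDerivAt γ (γ' t) t) (hc' : Continuous γ')
    (hsupp : HasCompactSupport γ) :
    (s+1) * ∫ t in {t : ℝ | 0 < Q * t}, ((Q * t : ℝ) : ℂ) ^ s * γ t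
      = - ∫ t in {t : ℝ | 0 < Q * t}, ((Q * t : ℝ) : ℂ) ^ s * ((t:ℂ) * γ' t) := by
  -- positive case, as an auxiliary claim
  have pos_case : ∀ (Q' : ℝ), 0 < Q' → ∀ (δ δ' : ℝ → ℂ), (∀ t, HasDerivAt δ (δ' t) t) →
      Continuous δ' → HasCompactSupport δ →
      (s+1) * ∫ t in Ioi (0:ℝ), ((Q' * t : ℝ) : ℂ) ^ s * δ t
        = - ∫ t in Ioi (0:ℝ), ((Q' * t : ℝ) : ℂ) ^ s * ((t:ℂ) * δ' t) := by
    intro Q' hQ' δ δ' hdd hcc hss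
    have e1 : ∀ t ∈ Ioi (0:ℝ), ((Q' * t : ℝ) : ℂ) ^ s * δ t
        = ((Q':ℝ):ℂ) ^ s * ((t:ℂ) ^ s * δ t) := by
      intro t ht
      have ht' : (0:ℝ) < t := ht
      rw [Complex.ofReal_mul, Complex.mul_cpow_ofReal_nonneg hQ'.le ht'.le]
      ring
    have e2 : ∀ t ∈ Ioi (0:ℝ), ((Q' * t : ℝ) : ℂ) ^ s * ((t:ℂ) * δ' t)
        = ((Q':ℝ):ℂ) ^ s * ((t:ℂ) ^ (s+1) * δ' t) := by
      intro t ht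
      have ht' : (0:ℝ) < t := ht
      have htne : ((t:ℝ):ℂ) ≠ 0 := Complex.ofReal_ne_zero.2 ht'.ne'
      rw [Complex.ofReal_mul, Complex.mul_cpow_ofReal_nonneg hQ'.le ht'.le,
        Complex.cpow_add _ _ htne, Complex.cpow_one]
      ring
    rw [setIntegral_congr_fun measurableSet_Ioi e1,
      setIntegral_congr_fun measurableSet_Ioi e2,
      integral_const_mul, integral_const_mul,
      ← mul_assoc, mul_comm (s+1) (((Q':ℝ):ℂ)^s), mul_assoc,
      ioiIBP s hs δ δ' hdd hcc hss]
    ring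
  rcases lt_trichotomy Q 0 with hQ | hQ | hQ
  · -- negative Q
    have hset : {t : ℝ | 0 < Q * t} = Iio (0:ℝ) := by
      ext t
      simp only [mem_setOf_eq, mem_Iio]
      constructor
      · intro h
        by_contra h'
        push_neg at h'
        nlinarith
      · intro h
        nlinarith
    have hflip : ∀ F : ℝ → ℂ, ∫ t in Iio (0:ℝ), F t = ∫ t in Ioi (0:ℝ), F (-t) := by
      intro F
      have h := integral_comp_neg_Iic (0:ℝ) (fun t => F (-t))
      simp only [neg_neg, neg_zero] at h
      rw [← h, ← integral_Iic_eq_integral_Iio]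
    rw [hset, hflip, hflip]
    set δ : ℝ → ℂ := fun t => γ (-t) with hδ
    set δ' : ℝ → ℂ := fun t => -γ' (-t) with hδ'
    have hdd : ∀ t, HasDerivAt δ (δ' t) t := by
      intro t
      have h1 : HasDerivAt (fun x : ℝ => -x) (-1:ℝ) t := hasDerivAt_neg t
      have h2 := (hd (-t)).scomp t h1
      simpa [δ, δ', Function.comp_def] using h2
    have hcc : Continuous δ' := (hc'.comp continuous_neg).neg
    have hss : HasCompactSupport δ := hsupp.comp_homeomorph (Homeomorph.neg ℝ)
    have key := pos_case (-Q) (by linarith) δ δ' hdd hcc hss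
    have e1 : ∀ t : ℝ, ((Q * (-t) : ℝ) : ℂ) ^ s * γ (-t)
        = (((-Q) * t : ℝ) : ℂ) ^ s * δ t := by
      intro t
      have : Q * (-t) = (-Q) * t := by ring
      rw [this]
    have e2 : ∀ t : ℝ, ((Q * (-t) : ℝ) : ℂ) ^ s * (((-t : ℝ):ℂ) * γ' (-t))
        = (((-Q) * t : ℝ) : ℂ) ^ s * ((t:ℂ) * δ' t) := by
      intro t
      have h3 : Q * (-t) = (-Q) * t := by ring
      simp only [hδ', h3]
      push_cast
      ring
    calc (s+1) * ∫ t in Ioi (0:ℝ), ((Q * (-t) : ℝ) : ℂ) ^ s * γ (-t)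
        = (s+1) * ∫ t in Ioi (0:ℝ), (((-Q) * t : ℝ) : ℂ) ^ s * δ t := by
          congr 1
          exact setIntegral_congr_fun measurableSet_Ioi (fun t _ => e1 t)
      _ = - ∫ t in Ioi (0:ℝ), (((-Q) * t : ℝ) : ℂ) ^ s * ((t:ℂ) * δ' t) := key
      _ = - ∫ t in Ioi (0:ℝ), ((Q * (-t) : ℝ) : ℂ) ^ s * (((-t : ℝ):ℂ) * γ' (-t)) := by
          congr 1
          exact (setIntegral_congr_fun measurableSet_Ioi (fun t _ => e2 t)).symm
  · -- Q = 0
    subst hQ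
    have hset : {t : ℝ | 0 < (0:ℝ) * t} = (∅ : Set ℝ) := by
      ext t; simp
    rw [hset]
    simp
  · -- positive Q
    have hset : {t : ℝ | 0 < Q * t} = Ioi (0:ℝ) := by
      ext t
      simp only [mem_setOf_eq, mem_Ioi]
      exact mul_pos_iff_of_pos_left hQ
    rw [hset]
    exact pos_case Q hQ γ γ' hd hc' hsupp

/-! ### facts about `Fin.insertNth` -/

lemma hasDerivAt_insertNth {m : ℕ} (j : Fin (m+1)) (y : Fin m → ℝ) (t : ℝ) :
    HasDerivAt (fun t : ℝ => (Fin.insertNth j t y : Fin (m+1) → ℝ)) (Pi.single j 1) t := by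
  rw [hasDerivAt_pi]
  intro i
  refine Fin.succAboveCases j ?_ (fun i' => ?_) i
  · simp only [Fin.insertNth_apply_same, Pi.single_eq_same]
    exact hasDerivAt_id t
  · simp only [Fin.insertNth_apply_succAbove,
      Pi.single_eq_of_ne (Fin.succAbove_ne j i')]
    exact hasDerivAt_const t _

lemma prod_insertNth_univ {m : ℕ} (j : Fin (m+1)) (y : Fin m → ℝ) (t : ℝ) :
    (∏ i, (Fin.insertNth j t y : Fin (m+1) → ℝ) i) = t * ∏ i, y i := by
  rw [Fin.prod_univ_succAbove (Fin.insertNth j t y : Fin (m+1) → ℝ) j]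
  simp [Fin.insertNth_apply_same, Fin.insertNth_apply_succAbove]

lemma prod_insertNth_of_not_mem {m : ℕ} (j : Fin (m+1)) (E : Finset (Fin (m+1)))
    (hj : j ∉ E) (y : Fin m → ℝ) (t : ℝ) :
    (∏ i ∈ E, (Fin.insertNth j t y : Fin (m+1) → ℝ) i)
      = ∏ i ∈ E, (Fin.insertNth j 0 y : Fin (m+1) → ℝ) i := by
  refine Finset.prod_congr rfl (fun i hi => ?_)
  have hne : i ≠ j := fun h => hj (h ▸ hi)
  obtain ⟨i', rfl⟩ := Fin.exists_succAbove_eq hne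
  simp [Fin.insertNth_apply_succAbove]

/-! ### The integration-by-parts step in `ℝⁿ` -/

lemma stepIBP {m : ℕ} (s : ℂ) (hs : -1 < s.re) (j : Fin (m+1)) (T : Finset (Fin (m+1)))
    (hj : j ∉ T) (g : (Fin (m+1) → ℝ) → ℂ) (hg : ContDiff ℝ (⊤ : ℕ∞) g)
    (hgs : HasCompactSupport g) :
    (s+1) * ∫ x in {x : Fin (m+1) → ℝ | 0 < ∏ i, x i},
        ((∏ i, x i : ℝ) : ℂ) ^ s * (((∏ i ∈ T, x i : ℝ) : ℂ) * g x)
      = - ∫ x in {x : Fin (m+1) → ℝ | 0 < ∏ i, x i},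
        ((∏ i, x i : ℝ) : ℂ) ^ s * (((∏ i ∈ insert j T, x i : ℝ) : ℂ) *
          (fderiv ℝ g x (Pi.single j 1))) := by
  set A : Set (Fin (m+1) → ℝ) := {x : Fin (m+1) → ℝ | 0 < ∏ i, x i} with hA
  set Dg : (Fin (m+1) → ℝ) → ℂ := fun x => fderiv ℝ g x (Pi.single j 1) with hDg
  have hDgc : Continuous Dg := by
    have h1 : Continuous (fderiv ℝ g) := (hg.fderiv_right (m := (⊤ : ℕ∞)) (by simp)).continuous
    exact h1.clm_apply continuous_const
  have hDgs : HasCompactSupport Dg := hgs.fderiv_apply ℝ (Pi.single j 1)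
  set f₁ : (Fin (m+1) → ℝ) → ℂ := fun x =>
    ((∏ i, x i : ℝ) : ℂ) ^ s * (((∏ i ∈ T, x i : ℝ) : ℂ) * g x) with hf₁
  set f₂ : (Fin (m+1) → ℝ) → ℂ := fun x =>
    ((∏ i, x i : ℝ) : ℂ) ^ s * (((∏ i ∈ insert j T, x i : ℝ) : ℂ) * Dg x) with hf₂
  have hcT : ∀ (E : Finset (Fin (m+1))), Continuous
      (fun x : Fin (m+1) → ℝ => ((∏ i ∈ E, x i : ℝ) : ℂ)) := fun E =>
    Complex.continuous_ofReal.comp (continuous_finset_prod _ (fun i _ => continuous_apply i))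
  have int₁ : IntegrableOn f₁ A :=
    integrableOn_kernel s hs _ ((hcT T).mul hg.continuous) hgs.mul_left
  have int₂ : IntegrableOn f₂ A :=
    integrableOn_kernel s hs _ ((hcT (insert j T)).mul hDgc) hDgs.mul_left
  set e := MeasurableEquiv.piFinSuccAbove (fun _ : Fin (m+1) => ℝ) j with he
  have hmp : MeasurePreserving e volume volume :=
    volume_preserving_piFinSuccAbove (fun _ : Fin (m+1) => ℝ) j
  have hsymm : ∀ p : ℝ × (Fin m → ℝ), e.symm p = Fin.insertNth j p.1 p.2 := by
    intro p
    simp [he, MeasurableEquiv.piFinSuccAbove_symm_apply, Fin.insertNthEquiv]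
  have main : ∀ f : (Fin (m+1) → ℝ) → ℂ, IntegrableOn f A →
      ∫ x in A, f x
        = ∫ y : Fin m → ℝ, ∫ t : ℝ, A.indicator f (Fin.insertNth j t y) := by
    intro f hf
    have hfi : Integrable (A.indicator f) :=
      (integrable_indicator_iff measurableSet_A).2 hf
    rw [← integral_indicator measurableSet_A]
    have h1 : ∫ x, A.indicator f x
        = ∫ p : ℝ × (Fin m → ℝ), A.indicator f (e.symm p) :=
      ((hmp.symm e).integral_comp e.symm.measurableEmbedding _).symm
    have hcomp : Integrable (fun p : ℝ × (Fin m → ℝ) => A.indicator f (e.symm p)) := by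
      rw [show (fun p : ℝ × (Fin m → ℝ) => A.indicator f (e.symm p))
          = (A.indicator f) ∘ e.symm by rfl]
      rw [(hmp.symm e).integrable_comp_emb e.symm.measurableEmbedding]
      exact hfi
    rw [h1]
    rw [MeasureTheory.Measure.volume_eq_prod ℝ (Fin m → ℝ)] at hcomp ⊢
    rw [integral_prod_symm _ hcomp]
    simp only [hsymm]
  rw [main f₁ int₁, main f₂ int₂, ← integral_const_mul, ← integral_neg]
  apply integral_congr_ae
  apply ae_of_all
  intro y
  set Q : ℝ := ∏ i, y i with hQ
  set q : ℝ := ∏ i ∈ T, (Fin.insertNth j (0:ℝ) y : Fin (m+1) → ℝ) i with hq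
  set γ : ℝ → ℂ := fun t => g (Fin.insertNth j t y) with hγ
  set γ' : ℝ → ℂ := fun t => Dg (Fin.insertNth j t y) with hγ'
  have hinsc : Continuous (fun t : ℝ => (Fin.insertNth j t y : Fin (m+1) → ℝ)) := by
    rw [continuous_iff_continuousAt]
    exact fun t => (hasDerivAt_insertNth j y t).continuousAt
  have hdd : ∀ t, HasDerivAt γ (γ' t) t := by
    intro t
    exact ((hg.differentiable (by simp) _).hasFDerivAt).comp_hasDerivAt t
      (hasDerivAt_insertNth j y t)
  have hcc' : Continuous γ' := hDgc.comp hinsc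
  have hssγ : HasCompactSupport γ := by
    obtain ⟨R₀, hR₀⟩ := hgs.isBounded.subset_closedBall 0
    apply HasCompactSupport.intro (isCompact_Icc (a := -|R₀|) (b := |R₀|))
    intro t ht
    have hnm : (Fin.insertNth j t y : Fin (m+1) → ℝ) ∉ tsupport g := by
      intro hmem
      have h1 := mem_closedBall_zero_iff.mp (hR₀ hmem)
      have h2 : |t| ≤ ‖(Fin.insertNth j t y : Fin (m+1) → ℝ)‖ := by
        have h3 := norm_le_pi_norm (Fin.insertNth j t y : Fin (m+1) → ℝ) j
        simpa [Fin.insertNth_apply_same, Real.norm_eq_abs] using h3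
      rw [mem_Icc, not_and_or] at ht
      have h4 : |R₀| < |t| := by
        rcases ht with h | h
        · push_neg at h
          calc |R₀| < -t := by linarith
            _ ≤ |t| := neg_le_abs t
        · push_neg at h
          calc |R₀| < t := h
            _ ≤ |t| := le_abs_self t
      have h5 : R₀ ≤ |R₀| := le_abs_self R₀
      linarith
    show g (Fin.insertNth j t y) = 0
    exact image_eq_zero_of_notMem_tsupport hnm
  have hS : MeasurableSet {t : ℝ | 0 < Q * t} :=
    measurableSet_lt measurable_const (measurable_id.const_mul Q)
  have hind : ∀ (f : (Fin (m+1) → ℝ) → ℂ) (t : ℝ),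
      A.indicator f (Fin.insertNth j t y)
        = {t : ℝ | 0 < Q * t}.indicator (fun t => f (Fin.insertNth j t y)) t := by
    intro f t
    have hmemiff : (Fin.insertNth j t y : Fin (m+1) → ℝ) ∈ A
        ↔ t ∈ {t : ℝ | 0 < Q * t} := by
      show (0 < ∏ i, (Fin.insertNth j t y : Fin (m+1) → ℝ) i) ↔ (0 < Q * t)
      rw [prod_insertNth_univ, mul_comm]
    by_cases hmem : t ∈ {t : ℝ | 0 < Q * t}
    · rw [indicator_of_mem (hmemiff.2 hmem), indicator_of_mem hmem]
    · rw [indicator_of_notMem (fun h => hmem (hmemiff.1 h)),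
        indicator_of_notMem hmem]
  have hval₁ : ∀ t : ℝ, f₁ (Fin.insertNth j t y)
      = ((Q * t : ℝ) : ℂ) ^ s * ((q : ℂ) * γ t) := by
    intro t
    simp only [hf₁]
    rw [prod_insertNth_univ, prod_insertNth_of_not_mem j T hj, mul_comm t Q]
  have hval₂ : ∀ t : ℝ, f₂ (Fin.insertNth j t y)
      = ((Q * t : ℝ) : ℂ) ^ s * (((t * q : ℝ) : ℂ) * γ' t) := by
    intro t
    simp only [hf₂]
    rw [prod_insertNth_univ, mul_comm t Q]
    congr 2
    rw [Finset.prod_insert hj, prod_insertNth_of_not_mem j T hj,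
      Fin.insertNth_apply_same]
  calc (s+1) * ∫ t : ℝ, A.indicator f₁ (Fin.insertNth j t y)
      = (s+1) * ∫ t in {t : ℝ | 0 < Q * t}, ((Q * t : ℝ) : ℂ) ^ s * ((q:ℂ) * γ t) := by
        congr 1
        rw [← integral_indicator hS]
        congr 1
        funext t
        rw [hind f₁ t]
        by_cases hmem : t ∈ {t : ℝ | 0 < Q * t}
        · rw [indicator_of_mem hmem, indicator_of_mem hmem, hval₁]
        · rw [indicator_of_notMem hmem, indicator_of_notMem hmem]
    _ = (q:ℂ) * ((s+1) * ∫ t in {t : ℝ | 0 < Q * t}, ((Q * t : ℝ) : ℂ) ^ s * γ t) := by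
        rw [show (fun t : ℝ => ((Q * t : ℝ) : ℂ) ^ s * ((q:ℂ) * γ t))
            = fun t : ℝ => (q:ℂ) * (((Q * t : ℝ) : ℂ) ^ s * γ t) by funext t; ring]
        rw [integral_const_mul]
        ring
    _ = (q:ℂ) * (- ∫ t in {t : ℝ | 0 < Q * t}, ((Q * t : ℝ) : ℂ) ^ s * ((t:ℂ) * γ' t)) := by
        rw [oneD_signed s hs Q γ γ' hdd hcc' hssγ]
    _ = - ∫ t : ℝ, A.indicator f₂ (Fin.insertNth j t y) := by
        rw [show ∫ t : ℝ, A.indicator f₂ (Fin.insertNth j t y)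
            = ∫ t in {t : ℝ | 0 < Q * t}, ((Q * t : ℝ) : ℂ) ^ s
              * (((t * q : ℝ) : ℂ) * γ' t) from ?_]
        · rw [show (fun t : ℝ => ((Q * t : ℝ) : ℂ) ^ s * (((t * q : ℝ) : ℂ) * γ' t))
              = fun t : ℝ => (q:ℂ) * (((Q * t : ℝ) : ℂ) ^ s * ((t:ℂ) * γ' t)) by
                funext t; push_cast; ring]
          rw [integral_const_mul]
          ring
        · rw [← integral_indicator hS]
          congr 1
          funext t
          rw [hind f₂ t]
          by_cases hmem : t ∈ {t : ℝ | 0 < Q * t}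
          · rw [indicator_of_mem hmem, indicator_of_mem hmem, hval₂]
          · rw [indicator_of_notMem hmem, indicator_of_notMem hmem]

/-! ### elementary bound for `p^σ |log p|` -/

lemma rpow_log_bound {p σ : ℝ} (hp : 0 < p) (hσ : |σ| ≤ 4⁻¹) :
    p ^ σ * |Real.log p| ≤ 4 * (p ^ (-(2⁻¹:ℝ)) + p ^ (2⁻¹:ℝ)) := by
  have hσ1 : -(4⁻¹:ℝ) ≤ σ := neg_le_of_abs_le hσ
  have hσ2 : σ ≤ (4⁻¹:ℝ) := le_of_abs_le hσ
  rcases le_total p 1 with hp1 | hp1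
  · have hlog : |Real.log p| = Real.log p⁻¹ := by
      rw [Real.log_inv, abs_of_nonpos (Real.log_nonpos hp.le hp1)]
    have hpinv : (0:ℝ) < p⁻¹ := inv_pos.2 hp
    have h1 : Real.log p⁻¹ ≤ 4 * p ^ (-(4⁻¹:ℝ)) := by
      have h2 : Real.log (p⁻¹ ^ ((4:ℝ)⁻¹)) ≤ p⁻¹ ^ ((4:ℝ)⁻¹) := by
        have := Real.log_le_sub_one_of_pos (Real.rpow_pos_of_pos hpinv ((4:ℝ)⁻¹))
        linarith
      rw [Real.log_rpow hpinv] at h2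
      have h3 : p⁻¹ ^ ((4:ℝ)⁻¹) = p ^ (-(4⁻¹:ℝ)) := by
        rw [← Real.rpow_neg_one p, ← Real.rpow_mul hp.le]
        norm_num
      rw [h3] at h2
      linarith
    have h4 : p ^ σ ≤ p ^ (-(4⁻¹:ℝ)) :=
      Real.rpow_le_rpow_of_exponent_ge hp hp1 hσ1
    have h5 : p ^ σ * |Real.log p| ≤ p ^ (-(4⁻¹:ℝ)) * (4 * p ^ (-(4⁻¹:ℝ))) := by
      rw [hlog]
      apply mul_le_mul h4 h1 (by rw [← hlog]; exact abs_nonneg _)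
        (Real.rpow_nonneg hp.le _)
    have h6 : p ^ (-(4⁻¹:ℝ)) * (4 * p ^ (-(4⁻¹:ℝ))) = 4 * p ^ (-(2⁻¹:ℝ)) := by
      rw [show p ^ (-(4⁻¹:ℝ)) * (4 * p ^ (-(4⁻¹:ℝ)))
          = 4 * (p ^ (-(4⁻¹:ℝ)) * p ^ (-(4⁻¹:ℝ))) by ring,
        ← Real.rpow_add hp]
      norm_num
    have h7 : (0:ℝ) ≤ p ^ (2⁻¹:ℝ) := Real.rpow_nonneg hp.le _
    linarith
  · have hlog : |Real.log p| = Real.log p := abs_of_nonneg (Real.log_nonneg hp1)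
    have h1 : Real.log p ≤ 4 * p ^ ((4:ℝ)⁻¹) := by
      have h2 : Real.log (p ^ ((4:ℝ)⁻¹)) ≤ p ^ ((4:ℝ)⁻¹) := by
        have := Real.log_le_sub_one_of_pos (Real.rpow_pos_of_pos hp ((4:ℝ)⁻¹))
        linarith
      rw [Real.log_rpow hp] at h2
      linarith
    have h4 : p ^ σ ≤ p ^ ((4:ℝ)⁻¹) :=
      Real.rpow_le_rpow_of_exponent_le hp1 hσ2
    have h5 : p ^ σ * |Real.log p| ≤ p ^ ((4:ℝ)⁻¹) * (4 * p ^ ((4:ℝ)⁻¹)) := by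
      rw [hlog]
      exact mul_le_mul h4 h1 (Real.log_nonneg hp1) (Real.rpow_nonneg hp.le _)
    have h6 : p ^ ((4:ℝ)⁻¹) * (4 * p ^ ((4:ℝ)⁻¹)) = 4 * p ^ (2⁻¹:ℝ) := by
      rw [show p ^ ((4:ℝ)⁻¹) * (4 * p ^ ((4:ℝ)⁻¹))
          = 4 * (p ^ ((4:ℝ)⁻¹) * p ^ ((4:ℝ)⁻¹)) by ring,
        ← Real.rpow_add hp]
      norm_num
    have h7 : (0:ℝ) ≤ p ^ (-(2⁻¹:ℝ)) := Real.rpow_nonneg hp.le _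
    linarith

/-! ### Holomorphy of the regularized integral -/

lemma differentiableOn_G {n : ℕ} (g : (Fin n → ℝ) → ℂ)
    (hgc : Continuous g) (hgs : HasCompactSupport g) :
    DifferentiableOn ℂ
      (fun s : ℂ => ∫ x in {x : Fin n → ℝ | 0 < ∏ i, x i},
        ((∏ i, x i : ℝ) : ℂ) ^ (s+1) * g x)
      (Metric.ball (-1) (1/4)) := by
  set A : Set (Fin n → ℝ) := {x : Fin n → ℝ | 0 < ∏ i, x i} with hA
  intro s₀ hs₀
  apply DifferentiableAt.differentiableWithinAt
  set ε : ℝ := 1/4 - dist s₀ (-1) with hε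
  have hεpos : 0 < ε := by
    simp only [hε]
    have := Metric.mem_ball.mp hs₀
    linarith
  have hball : Metric.ball s₀ ε ⊆ Metric.ball (-1:ℂ) (1/4) := by
    apply Metric.ball_subset_ball'
    simp [hε]
  obtain ⟨R₀, hR₀⟩ := hgs.isBounded.subset_closedBall 0
  set R : ℝ := |R₀| with hRdef
  have hR : 0 ≤ R := abs_nonneg _
  have hgz : ∀ x : Fin n → ℝ, ¬ ‖x‖ ≤ R → g x = 0 := by
    intro x hx
    apply image_eq_zero_of_notMem_tsupport
    intro hmem
    exact hx (le_trans (mem_closedBall_zero_iff.mp (hR₀ hmem)) (le_abs_self R₀))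
  obtain ⟨C, hC⟩ := hgc.bounded_above_of_compact_support hgs
  have hC0 : 0 ≤ C := le_trans (norm_nonneg _) (hC (fun _ => 0))
  set w₁ : ℝ → ℝ := fun t => |t| ^ (-(2⁻¹:ℝ)) * (Icc (-R) R).indicator (fun _ => (1:ℝ)) t
  set w₂ : ℝ → ℝ := fun t => |t| ^ ((2⁻¹:ℝ)) * (Icc (-R) R).indicator (fun _ => (1:ℝ)) t
  have hw₁ : Integrable w₁ := integrable_wfun (by norm_num) R hR
  have hw₂ : Integrable w₂ := integrable_wfun (by norm_num) R hR
  have hwnn : ∀ (σ : ℝ) t, 0 ≤ |t| ^ σ * (Icc (-R) R).indicator (fun _ => (1:ℝ)) t := by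
    intro σ t
    apply mul_nonneg (Real.rpow_nonneg (abs_nonneg _) _)
    by_cases h : t ∈ Icc (-R) R <;> simp [h]
  set bound : (Fin n → ℝ) → ℝ := fun x =>
    4 * C * ((∏ i, w₁ (x i)) + ∏ i, w₂ (x i)) with hbound
  have hboundint : Integrable bound := by
    apply Integrable.const_mul
    exact (Integrable.fintype_prod (f := fun _ : Fin n => w₁) (fun _ => hw₁)).add
      (Integrable.fintype_prod (f := fun _ : Fin n => w₂) (fun _ => hw₂))
  have hboundnn : ∀ x, 0 ≤ bound x := by
    intro x
    apply mul_nonneg (by linarith)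
    apply add_nonneg <;> exact Finset.prod_nonneg (fun i _ => hwnn _ _)
  have hreclose : ∀ s ∈ Metric.ball s₀ ε, |(s+1).re| ≤ 4⁻¹ := by
    intro s hsb
    have h1 : dist s (-1) < 1/4 := Metric.mem_ball.mp (hball hsb)
    have h2 : ‖s + 1‖ < 1/4 := by
      rwa [Complex.dist_eq, sub_neg_eq_add] at h1
    calc |(s+1).re| ≤ ‖s+1‖ := Complex.abs_re_le_norm _
      _ ≤ 4⁻¹ := by linarith
  have hcontkernel : ∀ (s : ℂ), AEStronglyMeasurable
      (fun x : Fin n → ℝ => ((∏ i, x i : ℝ) : ℂ) ^ (s+1) * g x)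
      (volume.restrict A) := by
    intro s
    apply ContinuousOn.aestronglyMeasurable _ measurableSet_A
    intro x hx
    have hx' : (0:ℝ) < ∏ i, x i := hx
    refine ContinuousAt.continuousWithinAt (ContinuousAt.mul ?_ hgc.continuousAt)
    exact ContinuousAt.cpow (Complex.continuous_ofReal.comp continuous_prodfun).continuousAt
      continuousAt_const (Complex.ofReal_mem_slitPlane.2 hx')
  have hs₀re : -1 < (s₀+1).re := by
    have := hreclose s₀ (Metric.mem_ball_self hεpos)
    have h2 := neg_le_of_abs_le this
    simp only [Complex.add_re, Complex.one_re] at h2 ⊢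
    linarith
  have key := hasDerivAt_integral_of_dominated_loc_of_deriv_le
    (F := fun (s : ℂ) (x : Fin n → ℝ) => ((∏ i, x i : ℝ) : ℂ) ^ (s+1) * g x)
    (F' := fun (s : ℂ) (x : Fin n → ℝ) =>
      ((∏ i, x i : ℝ) : ℂ) ^ (s+1) * Complex.log ((∏ i, x i : ℝ) : ℂ) * g x)
    (μ := volume.restrict A) (x₀ := s₀) (bound := bound) (Metric.ball_mem_nhds s₀ hεpos)
    (Filter.Eventually.of_forall hcontkernel)
    (integrableOn_kernel (s₀+1) hs₀re g hgc hgs)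
    ?_ ?_ hboundint.restrict ?_
  · exact key.2.differentiableAt
  · -- measurability of F' s₀
    apply ContinuousOn.aestronglyMeasurable _ measurableSet_A
    intro x hx
    have hx' : (0:ℝ) < ∏ i, x i := hx
    have hc1 : ContinuousAt (fun x : Fin n → ℝ => ((∏ i, x i : ℝ) : ℂ)) x :=
      Complex.continuous_ofReal.continuousAt.comp continuous_prodfun.continuousAt
    refine ContinuousAt.continuousWithinAt
      (ContinuousAt.mul (ContinuousAt.mul ?_ ?_) hgc.continuousAt)
    · exact ContinuousAt.cpow hc1 continuousAt_const (Complex.ofReal_mem_slitPlane.2 hx')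
    · exact hc1.clog (Complex.ofReal_mem_slitPlane.2 hx')
  · -- the uniform bound
    rw [ae_restrict_iff' measurableSet_A]
    refine ae_of_all _ (fun x hx => ?_)
    intro s hsb
    show ‖((∏ i, x i : ℝ) : ℂ) ^ (s+1) * Complex.log ((∏ i, x i : ℝ) : ℂ) * g x‖ ≤ bound x
    have hx' : (0:ℝ) < ∏ i, x i := hx
    by_cases hxR : ‖x‖ ≤ R
    · have hxi : ∀ i, |x i| ≤ R := by
        intro i
        calc |x i| = ‖x i‖ := (Real.norm_eq_abs _).symm
          _ ≤ ‖x‖ := norm_le_pi_norm x i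
          _ ≤ R := hxR
      have hmemIcc : ∀ i, x i ∈ Icc (-R) R := fun i => abs_le.mp (hxi i)
      have habs : (∏ i, |x i|) = ∏ i, x i := by
        rw [← Finset.abs_prod, abs_of_pos hx']
      have hprod : ∀ (σ : ℝ), (∏ i, |x i| ^ σ
            * (Icc (-R) R).indicator (fun _ => (1:ℝ)) (x i)) = (∏ i, x i) ^ σ := by
        intro σ
        have : ∀ i, |x i| ^ σ * (Icc (-R) R).indicator (fun _ => (1:ℝ)) (x i)
            = |x i| ^ σ := by
          intro i; rw [indicator_of_mem (hmemIcc i)]; ring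
        simp_rw [this]
        rw [Real.finset_prod_rpow _ _ (fun i _ => abs_nonneg _), habs]
      have hlogeq : Complex.log ((∏ i, x i : ℝ) : ℂ) = ((Real.log (∏ i, x i) : ℝ) : ℂ) :=
        (Complex.ofReal_log hx'.le).symm
      rw [norm_mul, norm_mul, hlogeq]
      have hnorm1 : ‖((∏ i, x i : ℝ) : ℂ) ^ (s+1)‖ = (∏ i, x i) ^ (s+1).re := by
        rw [Complex.norm_cpow_eq_rpow_re_of_pos hx']
      have hnorm2 : ‖((Real.log (∏ i, x i) : ℝ) : ℂ)‖ = |Real.log (∏ i, x i)| := by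
        rw [Complex.norm_real, Real.norm_eq_abs]
      rw [hnorm1, hnorm2]
      have hkey := rpow_log_bound hx' (hreclose s hsb)
      calc (∏ i, x i) ^ (s+1).re * |Real.log (∏ i, x i)| * ‖g x‖
          ≤ (4 * ((∏ i, x i) ^ (-(2⁻¹:ℝ)) + (∏ i, x i) ^ ((2⁻¹:ℝ)))) * C := by
            apply mul_le_mul hkey (hC x) (norm_nonneg _)
            positivity
        _ = bound x := by
            simp only [hbound, w₁, w₂, hprod]
            ring
    · have : g x = 0 := hgz x hxR
      rw [this, mul_zero, norm_zero]
      exact hboundnn x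
  · -- differentiability in s
    rw [ae_restrict_iff' measurableSet_A]
    refine ae_of_all _ (fun x hx => ?_)
    intro s hsb
    have hx' : (0:ℝ) < ∏ i, x i := hx
    have hne : ((∏ i, x i : ℝ) : ℂ) ≠ 0 := Complex.ofReal_ne_zero.2 hx'.ne'
    have h1 : HasDerivAt (fun s : ℂ => ((∏ i, x i : ℝ) : ℂ) ^ (s+1))
        (((∏ i, x i : ℝ) : ℂ) ^ (s+1) * Complex.log ((∏ i, x i : ℝ) : ℂ)) s := by
      have h2 : HasDerivAt (fun s : ℂ => s + 1) 1 s := (hasDerivAt_id s).add_const 1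
      have h3 := h2.const_cpow (c := ((∏ i, x i : ℝ) : ℂ)) (Or.inl hne)
      simpa using h3
    simpa using h1.mul_const (g x)

/-! ### the main induction -/

lemma main_induction {m : ℕ} (d : ℕ) :
    ∀ T : Finset (Fin (m+1)), T.card + d = m + 1 →
    ∀ g : (Fin (m+1) → ℝ) → ℂ, ContDiff ℝ (⊤ : ℕ∞) g → HasCompactSupport g →
    ∃ G : ℂ → ℂ, DifferentiableOn ℂ G (Metric.ball (-1) (1/4)) ∧
      ∀ s ∈ Metric.ball (-1:ℂ) (1/4), -1 < s.re →
        G s = (s+1)^d * ∫ x in {x : Fin (m+1) → ℝ | 0 < ∏ i, x i},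
          ((∏ i, x i : ℝ) : ℂ) ^ s * (((∏ i ∈ T, x i : ℝ) : ℂ) * g x) := by
  induction d with
  | zero =>
      intro T hT g hg hgs
      have hTuniv : T = Finset.univ := by
        apply Finset.eq_univ_of_card
        simpa using hT
      subst hTuniv
      refine ⟨fun s => ∫ x in {x : Fin (m+1) → ℝ | 0 < ∏ i, x i},
        ((∏ i, x i : ℝ) : ℂ) ^ (s+1) * g x,
        differentiableOn_G g hg.continuous hgs, ?_⟩
      intro s hsU hs
      rw [pow_zero, one_mul]
      have heq : ∀ x ∈ {x : Fin (m+1) → ℝ | 0 < ∏ i, x i},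
          ((∏ i, x i : ℝ) : ℂ) ^ (s+1) * g x
            = ((∏ i, x i : ℝ) : ℂ) ^ s * (((∏ i ∈ Finset.univ, x i : ℝ) : ℂ) * g x) := by
        intro x hx
        have hx' : (0:ℝ) < ∏ i, x i := hx
        have hne : ((∏ i, x i : ℝ) : ℂ) ≠ 0 := Complex.ofReal_ne_zero.2 hx'.ne'
        rw [Complex.cpow_add _ _ hne, Complex.cpow_one]
        ring
      exact setIntegral_congr_fun measurableSet_A heq
  | succ d ih =>
      intro T hT g hg hgs
      have hTcard : T.card < Fintype.card (Fin (m+1)) := by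
        simp only [Fintype.card_fin]
        omega
      obtain ⟨j, hj⟩ : ∃ j, j ∉ T := by
        by_contra h
        push_neg at h
        have : T = Finset.univ := Finset.eq_univ_iff_forall.2 h
        rw [this, Finset.card_univ] at hTcard
        exact lt_irrefl _ hTcard
      set g' : (Fin (m+1) → ℝ) → ℂ := fun x => fderiv ℝ g x (Pi.single j 1) with hg'
      have hg'c : ContDiff ℝ (⊤ : ℕ∞) g' := by
        have h1 : ContDiff ℝ (⊤ : ℕ∞) (fderiv ℝ g) := hg.fderiv_right (m := (⊤ : ℕ∞)) (by simp)
        exact (ContinuousLinearMap.apply ℝ ℂ (Pi.single j 1 : Fin (m+1) → ℝ)).contDiff.comp h1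
      have hg's : HasCompactSupport g' := hgs.fderiv_apply ℝ (Pi.single j 1)
      obtain ⟨G', hG'diff, hG'eq⟩ := ih (insert j T)
        (by rw [Finset.card_insert_of_notMem hj]; omega) g' hg'c hg's
      refine ⟨fun s => -G' s, hG'diff.neg, ?_⟩
      intro s hsU hs
      show -G' s = _
      rw [hG'eq s hsU hs]
      have hstep := stepIBP s hs j T hj g hg hgs
      simp only [hg']
      linear_combination (-(s+1)^d : ℂ) * hstep

end LocalZetaAux

open LocalZetaAux in
/-- Let `0 ≤ k ≤ n−1`, let `J ⊆ {1,…,n}` with `|J| = k+1`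
(i.e. `J = {j₁ < ⋯ < j_{k+1}}`), and `φ(x) = (Π_{j∈J} x_j) ψ(x)` with `ψ` a test
function. Then `s ↦ (s+1)^{n−k−1} Z_φ(s)` extends holomorphically to a neighborhood
of `s = −1`: the pole of `Z_φ` at `−1` has order at most `n−k−1`. Equivalently the
monomial `x_{j₁}⋯x_{j_{k+1}}` annihilates `u_{−n}, …, u_{−n+k}`. -/
theorem monomial_kills_laurent_coefficients
    (n k : ℕ) (hk : k + 1 ≤ n) (J : Finset (Fin n)) (hJ : J.card = k + 1)
    (ψ : (Fin n → ℝ) → ℂ) (hψ : ContDiff ℝ (⊤ : ℕ∞) ψ) (hsupp : HasCompactSupport ψ) :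
    ∃ U ∈ nhds (-1 : ℂ), ∃ G : ℂ → ℂ, DifferentiableOn ℂ G U ∧
      ∀ s ∈ U, -1 < s.re →
        G s = (s + 1) ^ (n - k - 1) *
          ∫ x in {x : Fin n → ℝ | 0 < ∏ i, x i},
            ((∏ i, x i : ℝ) : ℂ) ^ s * (((∏ j ∈ J, x j : ℝ) : ℂ) * ψ x) := by
  obtain ⟨m, rfl⟩ : ∃ m, n = m + 1 := ⟨n - 1, by omega⟩
  obtain ⟨G, hGdiff, hGeq⟩ := main_induction (m := m) (m + 1 - k - 1) J (by omega)
    ψ hψ hsupp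
  refine ⟨Metric.ball (-1) (1/4), Metric.ball_mem_nhds _ (by norm_num), G, hGdiff, ?_⟩
  intro s hsU hs
  exact hGeq s hsU hs
end
end
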